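/- arXiv:2109.08193 — 9 statements merged into one kernel-verified Lean document; each statement's English description precedes it below -/
import Mathlib

section
/- Let k and d be integers with 1 ≤ d < k and let H be a nonempty k-uniform hypergraph with maximum degree at most d. Then |σ(H)|/|H| ≥ k − (d−1)/2, i.e., 2·|σ(H)| ≥ (2k − d + 1)·|H|. -/
open Finset

/-- If `1 ≤ d < k` and `H` is a nonempty `k`-uniform hypergraph with maximum degree at most
`d`, then `|σ(H)|/|H| ≥ k − (d−1)/2`, i.e. `2·|σ(H)| ≥ (2k − d + 1)·|H|`. -/
theorem stmt_2 {α : Type*} [DecidableEq α] (k d : ℕ)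
    (hd : 1 ≤ d) (hdk : d < k)
    (H : Finset (Finset α)) (huniform : ∀ E ∈ H, E.card = k)
    (hne : H.Nonempty)
    (hdeg : ∀ v : α, (H.filter (fun E => v ∈ E)).card ≤ d) :
    2 * ((Finset.shadow H).card : ℤ) ≥ (2 * k - d + 1) * (H.card : ℤ) := by
  classical
  set t : Finset α → ℕ := fun S => (H.filter (fun E => S ⊆ E)).card with ht
  have hk1 : 1 ≤ k := le_trans hd hdk.le
  have ht1 : ∀ E ∈ H, ∀ v ∈ E, 1 ≤ t (E.erase v) := by
    intro E hE v hv
    refine Finset.card_pos.mpr ⟨E, ?_⟩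
    simp [Finset.erase_subset, hE]
  -- key disjointness bound
  have key : ∀ E ∈ H, ∀ u ∈ E,
      ∑ v ∈ E.erase u, (t (E.erase v) - 1) ≤ d - 1 := by
    intro E hE u hu
    set A : α → Finset (Finset α) :=
      fun v => (H.filter (fun E' => E.erase v ⊆ E')).erase E with hA
    have hcardA : ∀ v ∈ E, (A v).card = t (E.erase v) - 1 := by
      intro v hv
      have hEmem : E ∈ H.filter (fun E' => E.erase v ⊆ E') := by
        simp [Finset.erase_subset, hE]
      simp [hA, Finset.card_erase_of_mem hEmem, ht]
    have hdisj : ∀ v ∈ E.erase u, ∀ w ∈ E.erase u, v ≠ w →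
        Disjoint (A v) (A w) := by
      intro v hv w hw hvw
      rw [Finset.disjoint_left]
      intro E' hEv hEw
      simp only [hA, Finset.mem_erase, Finset.mem_filter] at hEv hEw
      have hvE : v ∈ E := (Finset.mem_erase.mp hv).2
      have hwE : w ∈ E := (Finset.mem_erase.mp hw).2
      have hsub : E ⊆ E' := by
        intro x hx
        by_cases hxv : x = v
        · exact hEw.2.2 (Finset.mem_erase.mpr ⟨hxv ▸ hvw, hx⟩)
        · exact hEv.2.2 (Finset.mem_erase.mpr ⟨hxv, hx⟩)
      have : E' = E := Finset.eq_of_subset_of_card_le hsub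
        (by rw [huniform E hE, huniform E' hEv.2.1]) |>.symm
      exact hEv.1 this
    have hsubU : ∀ v ∈ E.erase u, A v ⊆ (H.filter (fun E' => u ∈ E')).erase E := by
      intro v hv E' hE'
      simp only [hA, Finset.mem_erase, Finset.mem_filter] at hE' ⊢
      refine ⟨hE'.1, hE'.2.1, ?_⟩
      exact hE'.2.2 (Finset.mem_erase.mpr ⟨fun h => (Finset.mem_erase.mp hv).1 h.symm, hu⟩)
    have hUcard : ((H.filter (fun E' => u ∈ E')).erase E).card ≤ d - 1 := by
      have hEmem : E ∈ H.filter (fun E' => u ∈ E') := by simp [hE, hu]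
      rw [Finset.card_erase_of_mem hEmem]
      exact Nat.sub_le_sub_right (hdeg u) 1
    calc ∑ v ∈ E.erase u, (t (E.erase v) - 1)
        = ∑ v ∈ E.erase u, (A v).card := by
          refine Finset.sum_congr rfl fun v hv => ?_
          exact (hcardA v (Finset.mem_of_mem_erase hv)).symm
      _ = ((E.erase u).biUnion A).card := (Finset.card_biUnion hdisj).symm
      _ ≤ ((H.filter (fun E' => u ∈ E')).erase E).card := by
          refine Finset.card_le_card ?_
          intro E' hE'
          obtain ⟨v, hv, hEv⟩ := Finset.mem_biUnion.mp hE'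
          exact hsubU v hv hEv
      _ ≤ d - 1 := hUcard
  -- existence of a private shadow
  have exu : ∀ E ∈ H, ∃ u ∈ E, t (E.erase u) = 1 := by
    intro E hE
    by_contra h
    push_neg at h
    obtain ⟨w, hw⟩ := Finset.card_pos.mp (by rw [huniform E hE]; omega)
    have hge : ∀ v ∈ E.erase w, 1 ≤ t (E.erase v) - 1 := by
      intro v hv
      have hvE := Finset.mem_of_mem_erase hv
      have h1 := ht1 E hE v hvE
      have h2 := h v hvE
      omega
    have : (E.erase w).card ≤ ∑ v ∈ E.erase w, (t (E.erase v) - 1) := by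
      calc (E.erase w).card = ∑ v ∈ E.erase w, 1 := by simp
        _ ≤ _ := Finset.sum_le_sum hge
    have hc : (E.erase w).card = k - 1 := by rw [Finset.card_erase_of_mem hw, huniform E hE]
    have := key E hE w hw
    omega
  -- per-edge rational bound
  have inv_bound : ∀ n : ℕ, 1 ≤ n → (1 : ℚ) - ((n : ℚ) - 1)/2 ≤ 1/(n : ℚ) := by
    intro n hn
    match n with
    | 1 => norm_num
    | 2 => norm_num
    | (m+3) =>
      have h1 : (0 : ℚ) ≤ (m : ℚ) := Nat.cast_nonneg m
      have h2 : (0 : ℚ) < ((m : ℚ) + 3) := by linarith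
      have : (0 : ℚ) ≤ 1/((m : ℚ)+3) := by positivity
      push_cast
      linarith
  have edge : ∀ E ∈ H, ((2*(k:ℚ) - d + 1))/2 ≤ ∑ v ∈ E, (1 : ℚ)/(t (E.erase v)) := by
    intro E hE
    obtain ⟨u, hu, htu⟩ := exu E hE
    have hkey := key E hE u hu
    rw [← Finset.add_sum_erase E _ hu, htu]
    have hsum2 : ((k:ℚ) - 1) - ((d:ℚ) - 1)/2 ≤ ∑ v ∈ E.erase u, (1:ℚ)/(t (E.erase v)) := by
      have step1 : ∑ v ∈ E.erase u, ((1:ℚ) - ((t (E.erase v) : ℚ) - 1)/2)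
          ≤ ∑ v ∈ E.erase u, (1:ℚ)/(t (E.erase v)) := by
        refine Finset.sum_le_sum fun v hv => ?_
        exact inv_bound _ (ht1 E hE v (Finset.mem_of_mem_erase hv))
      have hcast : ∑ v ∈ E.erase u, ((t (E.erase v) : ℚ) - 1)
          = ((∑ v ∈ E.erase u, (t (E.erase v) - 1) : ℕ) : ℚ) := by
        rw [Nat.cast_sum]
        refine Finset.sum_congr rfl fun v hv => ?_
        have := ht1 E hE v (Finset.mem_of_mem_erase hv)
        push_cast [Nat.cast_sub this]
        ring
      have hcard : (E.erase u).card = k - 1 := by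
        rw [Finset.card_erase_of_mem hu, huniform E hE]
      have hle : ((∑ v ∈ E.erase u, (t (E.erase v) - 1) : ℕ) : ℚ) ≤ (d : ℚ) - 1 := by
        have : ((∑ v ∈ E.erase u, (t (E.erase v) - 1) : ℕ) : ℚ) ≤ ((d - 1 : ℕ) : ℚ) := by
          exact_mod_cast hkey
        have hd1 : ((d - 1 : ℕ) : ℚ) = (d : ℚ) - 1 := by
          rw [Nat.cast_sub hd]; norm_num
        linarith [hd1 ▸ this]
      have hexp : ∑ v ∈ E.erase u, ((1:ℚ) - ((t (E.erase v) : ℚ) - 1)/2)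
          = ((k:ℚ) - 1) - (∑ v ∈ E.erase u, ((t (E.erase v) : ℚ) - 1))/2 := by
        rw [Finset.sum_sub_distrib, Finset.sum_const, hcard, ← Finset.sum_div]
        have : ((k - 1 : ℕ) : ℚ) = (k : ℚ) - 1 := by
          rw [Nat.cast_sub hk1]; norm_num
        simp [this]
      rw [hexp, hcast] at step1
      linarith
    push_cast
    linarith
  -- double counting
  set g : Finset α → ℚ := fun S => (1 : ℚ)/(t S) with hg
  have himage : ∀ E ∈ H, E.image (fun v => E.erase v) = (H.shadow).filter (fun S => S ⊆ E) := by
    intro E hE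
    ext S
    simp only [Finset.mem_image, Finset.mem_filter]
    constructor
    · rintro ⟨v, hv, rfl⟩
      exact ⟨Finset.mem_shadow_iff.mpr ⟨E, hE, v, hv, rfl⟩, Finset.erase_subset _ _⟩
    · rintro ⟨hS, hSE⟩
      obtain ⟨E', hE', a, ha, rfl⟩ := Finset.mem_shadow_iff.mp hS
      have hcS : (E'.erase a).card = k - 1 := by
        rw [Finset.card_erase_of_mem ha, huniform E' hE']
      have hne' : E'.erase a ≠ E := by
        intro h
        have := huniform E hE
        rw [h, this] at hcS
        omega
      obtain ⟨v, hvE, hvS⟩ := Finset.exists_of_ssubset (Finset.ssubset_iff_subset_ne.mpr ⟨hSE, hne'⟩)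
      refine ⟨v, hvE, ?_⟩
      refine (Finset.eq_of_subset_of_card_le ?_ ?_).symm
      · intro x hx
        exact Finset.mem_erase.mpr ⟨fun h => hvS (h ▸ hx), hSE hx⟩
      · rw [Finset.card_erase_of_mem hvE, huniform E hE, hcS]
  have hinj : ∀ E ∈ H, Set.InjOn (fun v => E.erase v) E := by
    intro E hE v hv w hw hvw
    by_contra hne'
    have : v ∈ E.erase w := Finset.mem_erase.mpr ⟨hne', hv⟩
    have hvw' : E.erase v = E.erase w := hvw
    rw [← hvw'] at this
    exact (Finset.mem_erase.mp this).1 rfl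
  have swap : ∑ E ∈ H, ∑ v ∈ E, g (E.erase v) = ∑ S ∈ H.shadow, (t S : ℚ) * g S := by
    calc ∑ E ∈ H, ∑ v ∈ E, g (E.erase v)
        = ∑ E ∈ H, ∑ S ∈ (H.shadow).filter (fun S => S ⊆ E), g S := by
          refine Finset.sum_congr rfl fun E hE => ?_
          rw [← himage E hE, Finset.sum_image (fun v hv w hw => hinj E hE hv hw)]
      _ = ∑ E ∈ H, ∑ S ∈ H.shadow, if S ⊆ E then g S else 0 := by
          simp [Finset.sum_filter]
      _ = ∑ S ∈ H.shadow, ∑ E ∈ H, if S ⊆ E then g S else 0 := Finset.sum_comm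
      _ = ∑ S ∈ H.shadow, (t S : ℚ) * g S := by
          refine Finset.sum_congr rfl fun S hS => ?_
          rw [← Finset.sum_filter, Finset.sum_const, ht]
          simp [nsmul_eq_mul]
  have hshadow1 : ∀ S ∈ H.shadow, 1 ≤ t S := by
    intro S hS
    obtain ⟨E, hE, a, ha, rfl⟩ := Finset.mem_shadow_iff.mp hS
    exact ht1 E hE a ha
  have hrhs : ∑ S ∈ H.shadow, (t S : ℚ) * g S = (H.shadow.card : ℚ) := by
    rw [Finset.card_eq_sum_ones H.shadow]
    push_cast
    refine Finset.sum_congr rfl fun S hS => ?_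
    have h1 := hshadow1 S hS
    have : (t S : ℚ) ≠ 0 := Nat.cast_ne_zero.mpr (by omega)
    simp only [hg]
    field_simp
  have main : (H.card : ℚ) * ((2*(k:ℚ) - d + 1)/2) ≤ (H.shadow.card : ℚ) := by
    rw [← hrhs, ← swap]
    calc (H.card : ℚ) * ((2*(k:ℚ) - d + 1)/2)
        = ∑ _E ∈ H, ((2*(k:ℚ) - d + 1))/2 := by rw [Finset.sum_const, nsmul_eq_mul]
      _ ≤ ∑ E ∈ H, ∑ v ∈ E, g (E.erase v) := Finset.sum_le_sum edge
  have final : ((2*(k:ℚ) - d + 1)) * (H.card : ℚ) ≤ 2 * (H.shadow.card : ℚ) := by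
    linarith
  have : ((2 * (k:ℤ) - d + 1)) * (H.card : ℤ) ≤ 2 * (H.shadow.card : ℤ) := by
    exact_mod_cast final
  exact this
end

section
/- Let k ≥ 3 be an integer and x ≥ k − 1 a real number, and let H be a nonempty k-uniform hypergraph whose maximum degree is at most the generalized binomial coefficient C(x, k−1) = x(x−1)···(x−k+2)/(k−1)!. Then |σ(H)|/|H| ≥ k/(x − k + 2), i.e., (x − k + 2)·|σ(H)| ≥ k·|H|. -/
noncomputable def bcReal (x : ℝ) (r : ℕ) : ℝ :=
  (∏ i ∈ Finset.range r, (x - i)) / (Nat.factorial r : ℝ)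

lemma prod_desc_self : ∀ m : ℕ, ∏ i ∈ Finset.range m, ((m : ℝ) - i) = Nat.factorial m := by
  intro m
  induction m with
  | zero => simp
  | succ m ih =>
    rw [Finset.prod_range_succ']
    have h : ∀ i ∈ Finset.range m, ((m : ℝ) + 1 - (i + 1)) = (m : ℝ) - i := by
      intro i _; ring
    push_cast
    rw [Finset.prod_congr rfl h, ih]
    rw [Nat.factorial_succ]
    push_cast
    ring

lemma prod_desc_succ (m : ℕ) :
    ∏ i ∈ Finset.range m, ((m : ℝ) + 1 - i) = Nat.factorial (m + 1) := by
  have h := prod_desc_self (m + 1)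
  rw [Finset.prod_range_succ] at h
  push_cast at h ⊢
  have : (m : ℝ) + 1 - m = 1 := by ring
  rw [this, mul_one] at h
  convert h using 2 with i
  
lemma bcReal_zero (x : ℝ) : bcReal x 0 = 1 := by simp [bcReal]

lemma bcReal_succ (x : ℝ) (r : ℕ) : bcReal x (r + 1) = bcReal x r * (x - r) / (r + 1) := by
  have h1 : (Nat.factorial r : ℝ) ≠ 0 := by positivity
  have h2 : ((r : ℝ) + 1) ≠ 0 := by positivity
  rw [bcReal, bcReal, Finset.prod_range_succ, Nat.factorial_succ]
  push_cast
  rw [div_mul_eq_mul_div, div_div, div_eq_div_iff (by positivity) (by positivity)]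
  ring

lemma bcReal_shift (x : ℝ) (r : ℕ) : bcReal x (r + 1) = x * bcReal (x - 1) r / (r + 1) := by
  have h1 : (Nat.factorial r : ℝ) ≠ 0 := by positivity
  have h2 : ((r : ℝ) + 1) ≠ 0 := by positivity
  rw [bcReal, bcReal, Finset.prod_range_succ', Nat.factorial_succ]
  have h : ∀ i ∈ Finset.range r, (x - (i + 1) : ℝ) = (x - 1 - i) := by
    intro i _; push_cast; ring
  push_cast
  rw [Finset.prod_congr rfl h]
  field_simp
  ring

lemma bcReal_pascal (x : ℝ) (r : ℕ) :
    bcReal x (r + 1) = bcReal (x - 1) (r + 1) + bcReal (x - 1) r := by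
  rw [bcReal_shift, bcReal_succ (x - 1) r]
  have h2 : ((r : ℝ) + 1) ≠ 0 := by positivity
  field_simp
  ring

lemma bcReal_nonneg {x : ℝ} {r : ℕ} (hx : (r : ℝ) - 1 ≤ x) : 0 ≤ bcReal x r := by
  apply div_nonneg _ (by positivity)
  apply Finset.prod_nonneg
  intro i hi
  rw [Finset.mem_range] at hi
  have : (i : ℝ) ≤ (r : ℝ) - 1 := by
    have : (i : ℝ) + 1 ≤ r := by exact_mod_cast hi
    linarith
  linarith

lemma bcReal_one_le {x : ℝ} {r : ℕ} (hx : (r : ℝ) ≤ x) : 1 ≤ bcReal x r := by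
  rw [bcReal, le_div_iff₀ (by positivity : (0:ℝ) < (Nat.factorial r : ℝ)), one_mul]
  calc (Nat.factorial r : ℝ) = ∏ i ∈ Finset.range r, ((r : ℝ) - i) := (prod_desc_self r).symm
    _ ≤ ∏ i ∈ Finset.range r, (x - i) := by
        apply Finset.prod_le_prod
        · intro i hi
          rw [Finset.mem_range] at hi
          have : (i : ℝ) < r := by exact_mod_cast hi
          linarith
        · intro i _; linarith

lemma bcReal_lt_one {x : ℝ} {m : ℕ} (h1 : (m : ℝ) ≤ x) (h2 : x < (m : ℝ) + 1) :
    bcReal x (m + 1) < 1 := by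
  have hb : bcReal x m ≤ (m : ℝ) + 1 := by
    rw [bcReal, div_le_iff₀ (by positivity : (0:ℝ) < (Nat.factorial m : ℝ))]
    calc ∏ i ∈ Finset.range m, (x - i) ≤ ∏ i ∈ Finset.range m, ((m : ℝ) + 1 - i) := by
          apply Finset.prod_le_prod
          · intro i hi
            rw [Finset.mem_range] at hi
            have : (i : ℝ) < m := by exact_mod_cast hi
            linarith
          · intro i _; linarith
      _ = (Nat.factorial (m + 1) : ℝ) := prod_desc_succ m
      _ = ((m : ℝ) + 1) * (Nat.factorial m : ℝ) := by
          rw [Nat.factorial_succ]; push_cast; ring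
  have hnn : (0:ℝ) ≤ x - m := by linarith
  rw [bcReal_succ]
  rw [div_lt_one (by positivity : (0:ℝ) < (m : ℝ) + 1)]
  calc bcReal x m * (x - m) ≤ ((m : ℝ) + 1) * (x - m) := by
        apply mul_le_mul_of_nonneg_right hb hnn
    _ < ((m : ℝ) + 1) * 1 := by
        apply mul_lt_mul_of_pos_left (by linarith) (by positivity)
    _ = (m : ℝ) + 1 := mul_one _

lemma bcReal_lt_succ {x : ℝ} {m : ℕ} (h1 : (m : ℝ) + 1 ≤ x) (h2 : x < (m : ℝ) + 2) :
    bcReal x (m + 1) < (m : ℝ) + 2 := by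
  rw [bcReal, div_lt_iff₀ (by positivity : (0:ℝ) < (Nat.factorial (m+1) : ℝ))]
  have key : ∏ i ∈ Finset.range (m+1), (x - i) < ∏ i ∈ Finset.range (m+1), ((m : ℝ) + 2 - i) := by
    apply Finset.prod_lt_prod_of_nonempty
    · intro i hi
      rw [Finset.mem_range] at hi
      have : (i : ℝ) ≤ m := by exact_mod_cast Nat.lt_succ_iff.1 hi
      linarith
    · intro i hi
      rw [Finset.mem_range] at hi
      linarith
    · exact Finset.nonempty_range_iff.2 (Nat.succ_ne_zero m)
  have hp : ∏ i ∈ Finset.range (m+1), ((m : ℝ) + 2 - i) = (Nat.factorial (m + 2) : ℝ) := by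
    have := prod_desc_succ (m + 1)
    push_cast at this ⊢
    convert this using 2 with i
    ring
  calc ∏ i ∈ Finset.range (m+1), (x - i) < (Nat.factorial (m+2) : ℝ) := by rw [← hp]; exact key
    _ = ((m : ℝ) + 2) * (Nat.factorial (m+1) : ℝ) := by
        rw [show m + 2 = (m+1)+1 from rfl, Nat.factorial_succ]; push_cast; ring
section Helpers

variable {α : Type*} [DecidableEq α]

open Finset UV
open scoped FinsetFamily

lemma compress_singleton_eq {a₀ u : α} (hu : u ≠ a₀) {A : Finset α} (ha : a₀ ∉ A)
    (hua : u ∈ A) :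
    UV.compress {a₀} {u} A = insert a₀ (A.erase u) := by
  rw [UV.compress_of_disjoint_of_le (by simpa using ha) (by simpa using hua)]
  ext b
  simp only [sup_eq_union, mem_sdiff, mem_union, mem_singleton, mem_insert, mem_erase]
  constructor
  · rintro ⟨h | h, hb⟩
    · exact Or.inr ⟨hb, h⟩
    · exact Or.inl h
  · rintro (rfl | ⟨hb, hbA⟩)
    · exact ⟨Or.inr rfl, Ne.symm hu⟩
    · exact ⟨Or.inl hbA, hb⟩

lemma insert_mem_of_isCompressed {a₀ u : α} {L : Finset (Finset α)}
    (h : UV.IsCompressed {a₀} {u} L) {A : Finset α} (hA : A ∈ L) (ha : a₀ ∉ A) (hua : u ∈ A) :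
    insert a₀ (A.erase u) ∈ L := by
  have hne : u ≠ a₀ := by rintro rfl; exact ha hua
  have h2 := UV.compress_mem_compression (u := ({a₀} : Finset α)) (v := ({u} : Finset α)) hA
  rw [UV.IsCompressed] at h
  rw [h, compress_singleton_eq hne ha hua] at h2
  exact h2

lemma compress_changed_mem {a₀ u : α} (hu : u ≠ a₀) {B : Finset α}
    (hBc : UV.compress {a₀} {u} B ≠ B) :
    a₀ ∉ B ∧ u ∈ B ∧ a₀ ∈ UV.compress {a₀} {u} B := by
  by_cases hcond : Disjoint ({a₀} : Finset α) B ∧ ({u} : Finset α) ≤ B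
  · have h1 : a₀ ∉ B := by simpa using hcond.1
    have h2 : u ∈ B := by simpa using hcond.2
    refine ⟨h1, h2, ?_⟩
    rw [compress_singleton_eq hu h1 h2]
    exact mem_insert_self _ _
  · exact absurd (if_neg hcond) hBc

lemma filter_compression_lt {a₀ u : α} {L : Finset (Finset α)} (hu : u ≠ a₀)
    (h : ¬ UV.IsCompressed {a₀} {u} L) :
    ((UV.compression {a₀} {u} L).filter (fun A => a₀ ∉ A)).card
      < (L.filter (fun A => a₀ ∉ A)).card := by
  have hex : ∃ B ∈ L, UV.compress {a₀} {u} B ∉ L := by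
    by_contra hall
    push_neg at hall
    apply h
    rw [UV.IsCompressed]
    ext A
    rw [UV.mem_compression]
    constructor
    · rintro (⟨hA, _⟩ | ⟨hA, B, hB, rfl⟩)
      · exact hA
      · exact absurd (hall B hB) hA
    · intro hA
      exact Or.inl ⟨hA, hall A hA⟩
  obtain ⟨B, hB, hBc⟩ := hex
  have hBne : UV.compress {a₀} {u} B ≠ B := fun hc => hBc (by rw [hc]; exact hB)
  obtain ⟨haB, -, -⟩ := compress_changed_mem hu hBne
  have hsub : (UV.compression {a₀} {u} L).filter (fun A => a₀ ∉ A)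
      ⊆ (L.filter (fun A => a₀ ∉ A)).erase B := by
    intro A hA
    rw [mem_filter] at hA
    obtain ⟨hAc, haA⟩ := hA
    rw [UV.mem_compression] at hAc
    rcases hAc with ⟨hAL, hALc⟩ | ⟨hAL, C, hC, rfl⟩
    · refine mem_erase.2 ⟨?_, mem_filter.2 ⟨hAL, haA⟩⟩
      rintro rfl
      exact hBc hALc
    · have hCne : UV.compress {a₀} {u} C ≠ C := fun hc => hAL (by rw [hc]; exact hC)
      obtain ⟨-, -, hmem⟩ := compress_changed_mem hu hCne
      exact absurd hmem haA
  calc ((UV.compression {a₀} {u} L).filter (fun A => a₀ ∉ A)).card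
      ≤ ((L.filter (fun A => a₀ ∉ A)).erase B).card := card_le_card hsub
    _ < (L.filter (fun A => a₀ ∉ A)).card :=
        card_erase_lt_of_mem (mem_filter.2 ⟨hB, haB⟩)

lemma card_le_card_shadow {L : Finset (Finset α)} {E : Finset α} (hE : E ∈ L) :
    E.card ≤ (∂ L).card := by
  have hinj : Set.InjOn (fun u => E.erase u) ↑E := by
    intro u hu u' hu' hh
    by_contra hne
    have hh' : E.erase u = E.erase u' := hh
    have h1 : u' ∈ E.erase u := mem_erase.2 ⟨fun hc => hne hc.symm, hu'⟩
    rw [hh'] at h1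
    exact notMem_erase _ _ h1
  have hsub : E.image (fun u => E.erase u) ⊆ ∂ L := by
    intro S hS
    rw [mem_image] at hS
    obtain ⟨u, hu, rfl⟩ := hS
    exact erase_mem_shadow hE hu
  calc E.card = (E.image (fun u => E.erase u)).card := (card_image_of_injOn hinj).symm
    _ ≤ (∂ L).card := card_le_card hsub

lemma mem_link_iff {a₀ : α} {L : Finset (Finset α)} {T : Finset α} :
    T ∈ (L.filter fun A => a₀ ∈ A).image (fun A => A.erase a₀) ↔
      a₀ ∉ T ∧ insert a₀ T ∈ L := by
  constructor
  · intro hT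
    simp only [mem_image, mem_filter] at hT
    obtain ⟨A, ⟨hA, haA⟩, rfl⟩ := hT
    exact ⟨notMem_erase _ _, by rwa [insert_erase haA]⟩
  · rintro ⟨ha, hins⟩
    simp only [mem_image, mem_filter]
    exact ⟨insert a₀ T, ⟨hins, mem_insert_self _ _⟩, by rw [erase_insert ha]⟩

lemma link_card_add_shadow_le (a₀ : α) (L : Finset (Finset α)) :
    ((L.filter fun A => a₀ ∈ A).image (fun A => A.erase a₀)).card
      + (∂ ((L.filter fun A => a₀ ∈ A).image (fun A => A.erase a₀))).card ≤ (∂ L).card := by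
  set F1 := (L.filter fun A => a₀ ∈ A).image (fun A => A.erase a₀) with hF1
  have h1 : F1 ⊆ (∂ L).filter (fun S => a₀ ∉ S) := by
    intro T hT
    obtain ⟨ha, hins⟩ := mem_link_iff.1 hT
    refine mem_filter.2 ⟨?_, ha⟩
    have h := erase_mem_shadow hins (mem_insert_self a₀ T)
    rwa [erase_insert ha] at h
  have h2 : (∂ F1).image (insert a₀) ⊆ (∂ L).filter (fun S => a₀ ∈ S) := by
    intro S hS
    rw [mem_image] at hS
    obtain ⟨T, hT, rfl⟩ := hS
    rw [mem_shadow_iff] at hT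
    obtain ⟨T', hT', w, hw, rfl⟩ := hT
    obtain ⟨ha', hins⟩ := mem_link_iff.1 hT'
    refine mem_filter.2 ⟨?_, mem_insert_self _ _⟩
    have hwa : a₀ ≠ w := by rintro rfl; exact ha' hw
    rw [← Finset.erase_insert_of_ne hwa]
    exact erase_mem_shadow hins (mem_insert_of_mem hw)
  have hnotmem : ∀ T ∈ ∂ F1, a₀ ∉ T := by
    intro T hT
    rw [mem_shadow_iff] at hT
    obtain ⟨B, hB, w, hw, rfl⟩ := hT
    exact fun hc => (mem_link_iff.1 hB).1 (mem_of_mem_erase hc)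
  have hinj : ((∂ F1).image (insert a₀)).card = (∂ F1).card := by
    apply card_image_of_injOn
    intro T hT T' hT' hh
    have e1 : (insert a₀ T).erase a₀ = T := erase_insert (hnotmem T hT)
    have e2 : (insert a₀ T').erase a₀ = T' := erase_insert (hnotmem T' hT')
    rw [← e1, ← e2, hh]
  calc F1.card + (∂ F1).card
      ≤ ((∂ L).filter (fun S => a₀ ∉ S)).card + ((∂ L).filter (fun S => a₀ ∈ S)).card := by
        refine Nat.add_le_add (card_le_card h1) ?_
        rw [← hinj]; exact card_le_card h2
    _ = (∂ L).card := by
        rw [Nat.add_comm]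
        exact card_filter_add_card_filter_not (fun S => a₀ ∈ S)

end Helpers
section EL

variable {α : Type*} [DecidableEq α]

open Finset UV
open scoped FinsetFamily

lemma EL_main (a₀ : α) (r : ℕ) :
    ∀ (n : ℕ) (L : Finset (Finset α)),
      2 * L.card + (L.filter (fun A => a₀ ∉ A)).card ≤ n →
      ∀ x : ℝ, (r : ℝ) + 1 ≤ x → (∀ E ∈ L, E.card = r + 1) →
      bcReal x (r + 1) ≤ (L.card : ℝ) → bcReal x r ≤ ((∂ L).card : ℝ) := by
  induction r with
  | zero =>
    intro n L _ x hx hu hc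
    rw [bcReal_zero]
    have h1 : (1 : ℝ) ≤ bcReal x 1 := bcReal_one_le (by push_cast; linarith)
    have hL : 1 ≤ L.card := by exact_mod_cast h1.trans hc
    obtain ⟨E, hE⟩ := card_pos.1 hL
    have h2 : 1 ≤ (∂ L).card := by
      have := card_le_card_shadow hE
      rw [hu E hE] at this
      exact this
    exact_mod_cast h2
  | succ r ihr =>
    intro n
    induction n using Nat.strong_induction_on with
    | _ n ihn =>
    intro L hmeas x hx hu hc
    have hx2 : (r : ℝ) + 2 ≤ x := by push_cast at hx; linarith
    have hone : (1 : ℝ) ≤ (L.card : ℝ) :=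
      le_trans (bcReal_one_le (by push_cast; linarith)) hc
    have hLne : L.Nonempty := card_pos.1 (by exact_mod_cast hone)
    by_cases hcomp : ∀ u, UV.IsCompressed {a₀} {u} L
    · -- compressed case
      set F1 := (L.filter fun A => a₀ ∈ A).image (fun A => A.erase a₀) with hF1def
      set F0 := L.filter (fun A => a₀ ∉ A) with hF0def
      have propi : ∀ E ∈ L, a₀ ∉ E → ∀ u ∈ E, insert a₀ (E.erase u) ∈ L :=
        fun E hE ha u hu' => insert_mem_of_isCompressed (hcomp u) hE ha hu'
      have hcard_split : L.card = (L.filter fun A => a₀ ∈ A).card + F0.card :=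
        (card_filter_add_card_filter_not (fun A => a₀ ∈ A)).symm
      have hF1card : F1.card = (L.filter fun A => a₀ ∈ A).card := by
        apply card_image_of_injOn
        intro A hA B hB hh
        have hh' : A.erase a₀ = B.erase a₀ := hh
        rw [mem_coe, mem_filter] at hA hB
        rw [← insert_erase hA.2, ← insert_erase hB.2, hh']
      have hF1uniform : ∀ T ∈ F1, T.card = r + 1 := by
        intro T hT
        rw [hF1def, mem_image] at hT
        obtain ⟨A, hA, rfl⟩ := hT
        rw [mem_filter] at hA
        rw [card_erase_of_mem hA.2, hu A hA.1]
        omega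
      have hF1ne : F1.Nonempty := by
        obtain ⟨E, hE⟩ := hLne
        by_cases haE : a₀ ∈ E
        · exact ⟨E.erase a₀, by
            rw [hF1def]; exact mem_image_of_mem _ (mem_filter.2 ⟨hE, haE⟩)⟩
        · have hEne : E.Nonempty := by
            rw [← card_pos, hu E hE]; omega
          obtain ⟨u, hu'⟩ := hEne
          have hm := propi E hE haE u hu'
          exact ⟨(insert a₀ (E.erase u)).erase a₀, by
            rw [hF1def]
            exact mem_image_of_mem _ (mem_filter.2 ⟨hm, mem_insert_self _ _⟩)⟩
      have hF0lt : F0.card < L.card := by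
        have h0 : 0 < (L.filter fun A => a₀ ∈ A).card := by
          rw [← hF1card]; exact card_pos.2 hF1ne
        omega
      have hF1big : bcReal (x - 1) (r + 1) ≤ (F1.card : ℝ) := by
        by_contra hlt
        push_neg at hlt
        have hshadF0 : ∂ F0 ⊆ F1 := by
          intro S hS
          rw [mem_shadow_iff] at hS
          obtain ⟨E, hE0, u, hu', rfl⟩ := hS
          rw [hF0def, mem_filter] at hE0
          have h := propi E hE0.1 hE0.2 u hu'
          rw [hF1def]
          exact mem_link_iff.2 ⟨fun hc' => hE0.2 (mem_of_mem_erase hc'), h⟩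
        have hsh0 : ((∂ F0).card : ℝ) < bcReal (x - 1) (r + 1) := by
          have := card_le_card hshadF0
          have h2 : ((∂ F0).card : ℝ) ≤ (F1.card : ℝ) := by exact_mod_cast this
          linarith
        have hF0big : bcReal (x - 1) (r + 1 + 1) < (F0.card : ℝ) := by
          have e1 : (F0.card : ℝ) = (L.card : ℝ) - (F1.card : ℝ) := by
            rw [hcard_split, hF1card]; push_cast; ring
          have pasc := bcReal_pascal x (r + 1)
          rw [e1]
          linarith
        by_cases hx3 : (r : ℝ) + 3 ≤ x
        · have hfeq : F0.filter (fun A => a₀ ∉ A) = F0 := by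
            apply filter_eq_self.2
            intro A hA
            rw [hF0def, mem_filter] at hA
            exact hA.2
          have h3lt : 3 * F0.card < n := by omega
          have happ := ihn (3 * F0.card) h3lt F0 (by rw [hfeq]; omega) (x - 1)
            (by push_cast; linarith)
            (fun E hE => hu E (mem_filter.1 hE).1)
            (le_of_lt hF0big)
          linarith
        · push_neg at hx3
          have hF0ne : F0.Nonempty := by
            rw [← card_pos]
            have hnn : (0 : ℝ) ≤ bcReal (x - 1) (r + 1 + 1) :=
              bcReal_nonneg (by push_cast; linarith)
            have : (0 : ℝ) < (F0.card : ℝ) := lt_of_le_of_lt hnn hF0big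
            exact_mod_cast this
          obtain ⟨E, hE0⟩ := hF0ne
          have hEcard : E.card = r + 2 := hu E (mem_filter.1 hE0).1
          have hsh_ge : (r + 2 : ℕ) ≤ (∂ F0).card := by
            have := card_le_card_shadow hE0
            rw [hEcard] at this
            exact this
          have hlt2 : bcReal (x - 1) (r + 1) < (r : ℝ) + 2 :=
            bcReal_lt_succ (m := r) (by push_cast; linarith) (by push_cast; linarith)
          have hsh_ge' : ((r : ℝ) + 2) ≤ ((∂ F0).card : ℝ) := by exact_mod_cast hsh_ge
          linarith
      have hshadF1 : bcReal (x - 1) r ≤ ((∂ F1).card : ℝ) :=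
        ihr (2 * F1.card + (F1.filter fun A => a₀ ∉ A).card) F1 le_rfl (x - 1)
          (by push_cast; linarith) hF1uniform hF1big
      have hkey : F1.card + (∂ F1).card ≤ (∂ L).card := link_card_add_shadow_le a₀ L
      have hkey' : (F1.card : ℝ) + ((∂ F1).card : ℝ) ≤ ((∂ L).card : ℝ) := by
        exact_mod_cast hkey
      have pasc := bcReal_pascal x r
      linarith
    · -- not compressed case
      push_neg at hcomp
      obtain ⟨u, hncomp⟩ := hcomp
      have hune : u ≠ a₀ := by
        rintro rfl
        exact hncomp (UV.isCompressed_self _ _)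
      set L' := UV.compression {a₀} {u} L with hL'def
      have hcardL' : L'.card = L.card := UV.card_compression _ _ _
      have hsz : ((L : Set (Finset α))).Sized (r + 1 + 1) := fun A hA => hu A hA
      have huniL' : ∀ E ∈ L', E.card = r + 1 + 1 := by
        intro E hE
        exact hsz.uvCompression (by simp) hE
      have hcompcond : ∀ z ∈ ({a₀} : Finset α), ∃ y ∈ ({u} : Finset α),
          UV.IsCompressed (({a₀} : Finset α).erase z) (({u} : Finset α).erase y) L := by
        intro z hz
        rw [mem_singleton] at hz
        subst hz
        refine ⟨u, mem_singleton_self u, ?_⟩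
        rw [Finset.erase_singleton, Finset.erase_singleton]
        exact UV.compression_self _ _
      have hshadL' : (∂ L').card ≤ (∂ L).card :=
        UV.card_shadow_compression_le _ _ hcompcond
      have hflt : (L'.filter (fun A => a₀ ∉ A)).card < (L.filter (fun A => a₀ ∉ A)).card :=
        filter_compression_lt hune hncomp
      have hmlt : 2 * L'.card + (L'.filter fun A => a₀ ∉ A).card < n := by omega
      have happ := ihn (2 * L'.card + (L'.filter fun A => a₀ ∉ A).card) hmlt L' le_rfl x hx
        huniL' (by rw [hcardL']; exact hc)
      have hs' : ((∂ L').card : ℝ) ≤ ((∂ L).card : ℝ) := by exact_mod_cast hshadL'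
      linarith

end EL
section FL

variable {α : Type*} [DecidableEq α]

open Finset
open scoped FinsetFamily

lemma FL_ratio (r : ℕ) (x : ℝ) (hx : (r : ℝ) ≤ x)
    (L : Finset (Finset α)) (hu : ∀ E ∈ L, E.card = r + 1)
    (hc : (L.card : ℝ) ≤ bcReal x (r + 1)) :
    ((r : ℝ) + 1) * (L.card : ℝ) ≤ (x - r) * ((∂ L).card : ℝ) := by
  rcases L.eq_empty_or_nonempty with rfl | hLne
  · simp
  have honeN : 1 ≤ L.card := card_pos.2 hLne
  have hone : (1 : ℝ) ≤ (L.card : ℝ) := by exact_mod_cast honeN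
  by_cases hxr : x < (r : ℝ) + 1
  · exfalso
    have := bcReal_lt_one (m := r) hx hxr
    linarith
  push_neg at hxr
  -- continuity
  have hcont : ContinuousOn (fun y => bcReal y (r + 1)) (Set.Icc ((r : ℝ) + 1) x) := by
    apply Continuous.continuousOn
    apply Continuous.div_const
    exact continuous_finset_prod _ (fun i _ => continuous_id.sub continuous_const)
  have h1 : bcReal ((r : ℝ) + 1) (r + 1) = 1 := by
    have hp := prod_desc_self (r + 1)
    push_cast at hp
    rw [bcReal, hp, div_self (by positivity)]
  have hIcc : (L.card : ℝ) ∈ Set.Icc (bcReal ((r : ℝ) + 1) (r + 1)) (bcReal x (r + 1)) := by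
    rw [h1]
    exact ⟨hone, hc⟩
  obtain ⟨y, hy, hyeq'⟩ := intermediate_value_Icc hxr hcont hIcc
  have hyeq : bcReal y (r + 1) = (L.card : ℝ) := hyeq'
  -- get a base point a₀
  obtain ⟨E, hE⟩ := hLne
  have hEne : E.Nonempty := by rw [← card_pos, hu E hE]; omega
  obtain ⟨a₀, -⟩ := hEne
  have hEL : bcReal y r ≤ ((∂ L).card : ℝ) :=
    EL_main a₀ r (2 * L.card + (L.filter (fun A => a₀ ∉ A)).card) L le_rfl y hy.1 hu
      (le_of_eq hyeq)
  have hsucc := bcReal_succ y r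
  have hyr : (1 : ℝ) ≤ y - r := by
    have := hy.1; linarith
  have e : ((r : ℝ) + 1) * (L.card : ℝ) = bcReal y r * (y - r) := by
    rw [← hyeq, hsucc]
    field_simp
  have step1 : bcReal y r * (y - r) ≤ ((∂ L).card : ℝ) * (y - r) :=
    mul_le_mul_of_nonneg_right hEL (by linarith)
  have step2 : ((∂ L).card : ℝ) * (y - r) ≤ ((∂ L).card : ℝ) * (x - r) := by
    apply mul_le_mul_of_nonneg_left _ (by positivity)
    have := hy.2; linarith
  linarith

lemma shadow_link_card (v : α) (H : Finset (Finset α)) :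
    (∂ ((H.filter (fun E => v ∈ E)).image (fun E => E.erase v))).card
      = ((∂ H).filter (fun S => v ∈ S)).card := by
  set Lv := (H.filter (fun E => v ∈ E)).image (fun E => E.erase v) with hLv
  have hnotmem : ∀ T ∈ ∂ Lv, v ∉ T := by
    intro T hT
    rw [mem_shadow_iff] at hT
    obtain ⟨B, hB, w, hw, rfl⟩ := hT
    exact fun hcon => (mem_link_iff.1 hB).1 (mem_of_mem_erase hcon)
  have himg : (∂ Lv).image (insert v) = (∂ H).filter (fun S => v ∈ S) := by
    apply Finset.Subset.antisymm
    · intro S hS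
      rw [mem_image] at hS
      obtain ⟨T, hT, rfl⟩ := hS
      rw [mem_shadow_iff] at hT
      obtain ⟨A, hA, w, hw, rfl⟩ := hT
      obtain ⟨hvA, hins⟩ := mem_link_iff.1 hA
      have hwv : v ≠ w := by rintro rfl; exact hvA hw
      refine mem_filter.2 ⟨?_, mem_insert_self _ _⟩
      rw [← Finset.erase_insert_of_ne hwv]
      exact erase_mem_shadow hins (mem_insert_of_mem hw)
    · intro S hS
      rw [mem_filter] at hS
      obtain ⟨hS, hvS⟩ := hS
      rw [mem_shadow_iff] at hS
      obtain ⟨E, hE, w, hw, rfl⟩ := hS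
      have hvw : v ≠ w := by rintro rfl; exact (notMem_erase _ _) hvS
      have hvE : v ∈ E := mem_of_mem_erase hvS
      rw [mem_image]
      refine ⟨(E.erase w).erase v, ?_, insert_erase hvS⟩
      rw [mem_shadow_iff]
      refine ⟨E.erase v, mem_link_iff.2 ⟨notMem_erase _ _, by rw [insert_erase hvE]; exact hE⟩,
        w, mem_erase.2 ⟨fun hc => hvw hc.symm, hw⟩, ?_⟩
      exact Finset.erase_right_comm
  calc (∂ Lv).card = ((∂ Lv).image (insert v)).card := by
        rw [card_image_of_injOn]
        intro T hT T' hT' hh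
        have e1 : (insert v T).erase v = T := erase_insert (hnotmem T hT)
        have e2 : (insert v T').erase v = T' := erase_insert (hnotmem T' hT')
        rw [← e1, ← e2, hh]
    _ = ((∂ H).filter (fun S => v ∈ S)).card := by rw [himg]

end FL
open Finset in
open scoped FinsetFamily in
/-- If `k ≥ 3`, `x ≥ k − 1` is real, and `H` is a nonempty `k`-uniform hypergraph whose
maximum degree is at most the generalized binomial coefficient
`C(x, k−1) = x(x−1)⋯(x−k+2)/(k−1)!`, then `(x − k + 2)·|σ(H)| ≥ k·|H|`. -/
theorem stmt_3 {α : Type*} [DecidableEq α] (k : ℕ) (hk : 3 ≤ k)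
    (x : ℝ) (hx : (k : ℝ) - 1 ≤ x)
    (H : Finset (Finset α)) (huniform : ∀ E ∈ H, E.card = k)
    (hne : H.Nonempty)
    (hdeg : ∀ v : α, ((H.filter (fun E => v ∈ E)).card : ℝ) ≤
      (∏ i ∈ Finset.range (k - 1), (x - i)) / (Nat.factorial (k - 1) : ℝ)) :
    (x - k + 2) * ((Finset.shadow H).card : ℝ) ≥ k * (H.card : ℝ) := by
  obtain ⟨m, rfl⟩ : ∃ m, k = m + 3 := ⟨k - 3, by omega⟩
  have hk1 : m + 3 - 1 = m + 2 := by omega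
  have hxm : ((m : ℝ) + 1) ≤ x := by push_cast at hx ⊢; linarith
  set V := H.biUnion id with hV
  have hsubV : ∀ E ∈ H, E ⊆ V := fun E hE a ha => mem_biUnion.2 ⟨E, hE, ha⟩
  -- the links
  set Lk := fun v => (H.filter (fun E => v ∈ E)).image (fun E => E.erase v) with hLk
  have hlinkcard : ∀ v, (Lk v).card = (H.filter (fun E => v ∈ E)).card := by
    intro v
    apply card_image_of_injOn
    intro A hA B hB hh
    have hh' : A.erase v = B.erase v := hh
    rw [mem_coe, mem_filter] at hA hB
    rw [← insert_erase hA.2, ← insert_erase hB.2, hh']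
  have hlinkuni : ∀ v, ∀ T ∈ Lk v, T.card = (m + 1) + 1 := by
    intro v T hT
    rw [hLk, mem_image] at hT
    obtain ⟨A, hA, rfl⟩ := hT
    rw [mem_filter] at hA
    rw [card_erase_of_mem hA.2, huniform A hA.1]
    omega
  have hlinkbound : ∀ v, ((Lk v).card : ℝ) ≤ bcReal x ((m + 1) + 1) := by
    intro v
    rw [hlinkcard v]
    have := hdeg v
    rw [hk1] at this
    exact this
  -- fractional Lovász per link
  have hFL : ∀ v, ((m : ℝ) + 2) * ((Lk v).card : ℝ)
      ≤ (x - (m + 1)) * ((∂ (Lk v)).card : ℝ) := by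
    intro v
    have h := FL_ratio (m + 1) x (by push_cast; linarith) (Lk v) (hlinkuni v) (hlinkbound v)
    push_cast at h ⊢
    linarith
  -- counting sums
  have hS1 : ∑ v ∈ V, (H.filter (fun E => v ∈ E)).card = (m + 3) * H.card := by
    calc ∑ v ∈ V, (H.filter (fun E => v ∈ E)).card
        = ∑ v ∈ V, ∑ E ∈ H, if v ∈ E then 1 else 0 := by
          refine sum_congr rfl fun v _ => ?_
          rw [card_filter]
      _ = ∑ E ∈ H, ∑ v ∈ V, if v ∈ E then 1 else 0 := sum_comm
      _ = ∑ E ∈ H, (V.filter (fun v => v ∈ E)).card := by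
          refine sum_congr rfl fun E _ => ?_
          rw [card_filter]
      _ = ∑ E ∈ H, E.card := by
          refine sum_congr rfl fun E hE => ?_
          congr 1
          ext a
          simp only [mem_filter]
          exact ⟨fun h => h.2, fun h => ⟨hsubV E hE h, h⟩⟩
      _ = ∑ E ∈ H, (m + 3) := sum_congr rfl fun E hE => huniform E hE
      _ = (m + 3) * H.card := by rw [sum_const, smul_eq_mul, Nat.mul_comm]
  have hshadowsized : ∀ S ∈ ∂ H, S.card = m + 2 := by
    intro S hS
    have hsz : ((H : Set (Finset α))).Sized (m + 3) := fun A hA => huniform A hA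
    have := hsz.shadow (𝒜 := H) hS
    rwa [hk1] at this
  have hshadowsub : ∀ S ∈ ∂ H, S ⊆ V := by
    intro S hS
    obtain ⟨E, hE, hSE⟩ := exists_subset_of_mem_shadow hS
    exact hSE.trans (hsubV E hE)
  have hS2 : ∑ v ∈ V, ((∂ H).filter (fun S => v ∈ S)).card = (m + 2) * (∂ H).card := by
    calc ∑ v ∈ V, ((∂ H).filter (fun S => v ∈ S)).card
        = ∑ v ∈ V, ∑ S ∈ ∂ H, if v ∈ S then 1 else 0 := by
          refine sum_congr rfl fun v _ => ?_
          rw [card_filter]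
      _ = ∑ S ∈ ∂ H, ∑ v ∈ V, if v ∈ S then 1 else 0 := sum_comm
      _ = ∑ S ∈ ∂ H, (V.filter (fun v => v ∈ S)).card := by
          refine sum_congr rfl fun S _ => ?_
          rw [card_filter]
      _ = ∑ S ∈ ∂ H, S.card := by
          refine sum_congr rfl fun S hS => ?_
          congr 1
          ext a
          simp only [mem_filter]
          exact ⟨fun h => h.2, fun h => ⟨hshadowsub S hS h, h⟩⟩
      _ = ∑ S ∈ ∂ H, (m + 2) := sum_congr rfl fun S hS => hshadowsized S hS
      _ = (m + 2) * (∂ H).card := by rw [sum_const, smul_eq_mul, Nat.mul_comm]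
  have hS3 : ∑ v ∈ V, (∂ (Lk v)).card = (m + 2) * (∂ H).card := by
    rw [← hS2]
    refine sum_congr rfl fun v _ => ?_
    exact shadow_link_card v H
  -- real inequality
  have hsum : ∑ v ∈ V, ((m : ℝ) + 2) * ((Lk v).card : ℝ)
      ≤ ∑ v ∈ V, (x - (m + 1)) * ((∂ (Lk v)).card : ℝ) :=
    sum_le_sum fun v _ => hFL v
  have hL : ∑ v ∈ V, ((m : ℝ) + 2) * ((Lk v).card : ℝ)
      = ((m : ℝ) + 2) * ((m : ℝ) + 3) * (H.card : ℝ) := by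
    rw [← mul_sum]
    have : ∑ v ∈ V, ((Lk v).card : ℝ) = (((m + 3) * H.card : ℕ) : ℝ) := by
      rw [← hS1]
      push_cast
      exact sum_congr rfl fun v _ => by rw [hlinkcard v]
    rw [this]
    push_cast
    ring
  have hR : ∑ v ∈ V, (x - (m + 1)) * ((∂ (Lk v)).card : ℝ)
      = (x - (m + 1)) * (((m : ℝ) + 2) * ((∂ H).card : ℝ)) := by
    rw [← mul_sum]
    congr 1
    have : ∑ v ∈ V, ((∂ (Lk v)).card : ℝ) = (((m + 2) * (∂ H).card : ℕ) : ℝ) := by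
      rw [← hS3]
      push_cast
      rfl
    rw [this]
    push_cast
    ring
  rw [hL, hR] at hsum
  have hm2 : (0 : ℝ) < (m : ℝ) + 2 := by positivity
  have hfinal : ((m : ℝ) + 3) * (H.card : ℝ) ≤ (x - (m + 1)) * ((∂ H).card : ℝ) := by
    have h := hsum
    nlinarith [hsum]
  rw [ge_iff_le]
  push_cast
  calc ((m : ℝ) + 3) * (H.card : ℝ) ≤ (x - (m + 1)) * ((∂ H).card : ℝ) := hfinal
    _ = (x - ((m : ℝ) + 3) + 2) * ((∂ H).card : ℝ) := by ring
end

section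
/- Let t ≥ k ≥ 3 be integers and let H be a nonempty k-uniform hypergraph whose maximum degree is at most C(t, k−1) + Σ_{u=1}^{k−2} C(t − ⌈u(t+1)/(k−1)⌉, k−1−u), i.e., at most C(t,k−1) + C(t − ⌈(t+1)/(k−1)⌉, k−2) + C(t − ⌈2(t+1)/(k−1)⌉, k−3) + … + C(t − ⌈(k−2)(t+1)/(k−1)⌉, 1). Then |σ(H)|/|H| ≥ k/(t − k + 2), i.e., (t − k + 2)·|σ(H)| ≥ k·|H|. -/
open Finset.Colex


namespace Stmt4
open Finset

/-- ceiling division -/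
def cdiv (a b : ℕ) : ℕ := (a + b - 1) / b

lemma le_mul_cdiv (a b : ℕ) (hb : 0 < b) : a ≤ b * cdiv a b := by
  have h1 := Nat.div_add_mod (a + b - 1) b
  have h2 := Nat.mod_lt (a + b - 1) hb
  unfold cdiv; omega

lemma cdiv_le (a b m : ℕ) (hb : 0 < b) (h : a ≤ b * m) : cdiv a b ≤ m := by
  unfold cdiv
  rw [Nat.div_le_iff_le_mul_add_pred hb]
  omega

lemma cdiv_add_self (a b : ℕ) (hb : 0 < b) : cdiv (a + b) b = cdiv a b + 1 := by
  unfold cdiv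
  have : a + b + b - 1 = (a + b - 1) + b := by omega
  rw [this, Nat.add_div_right _ hb]

lemma cdiv_mono (b : ℕ) {a a' : ℕ} (h : a ≤ a') : cdiv a b ≤ cdiv a' b :=
  Nat.div_le_div_right (by omega)

lemma one_le_cdiv {a b : ℕ} (ha : 0 < a) (hb : 0 < b) : 1 ≤ cdiv a b := by
  unfold cdiv
  rw [Nat.le_div_iff_mul_le hb]
  omega

lemma ceil_eq_cdiv (a b : ℕ) (hb : 0 < b) : ⌈(a : ℚ) / (b : ℚ)⌉₊ = cdiv a b := by
  have hbq : (0:ℚ) < b := by exact_mod_cast hb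
  apply le_antisymm
  · apply Nat.ceil_le.2
    rw [div_le_iff₀ hbq]
    have := le_mul_cdiv a b hb
    calc (a:ℚ) ≤ (b * cdiv a b : ℕ) := by exact_mod_cast this
    _ = (cdiv a b : ℚ) * b := by push_cast; ring
  · have h := Nat.le_ceil ((a:ℚ) / (b:ℚ))
    apply cdiv_le _ _ _ hb
    have : (a : ℚ) ≤ b * ⌈(a : ℚ) / (b : ℚ)⌉₊ := by
      rw [mul_comm, ← div_le_iff₀ hbq] at *
      exact h
    exact_mod_cast this

lemma choose_mono' {a b : ℕ} (k : ℕ) (h : a ≤ b) : Nat.choose a k ≤ Nat.choose b k :=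
  Nat.choose_mono k h

lemma succ_le_choose (r j : ℕ) (hj : 1 ≤ j) : r + 1 ≤ (r + j).choose j := by
  induction j with
  | zero => omega
  | succ j ih =>
    rcases Nat.eq_zero_or_pos j with rfl | hj'
    · simp
    · calc r + 1 ≤ (r + j).choose j := ih hj'
        _ ≤ (r + j).choose j + (r + j).choose (j+1) := Nat.le_add_right _ _
        _ = (r + j + 1).choose (j+1) := (Nat.choose_succ_succ' _ _).symm
        _ = (r + (j+1)).choose (j+1) := by ring_nf

/-- largest `a` with `choose a j ≤ r` (for `j ≥ 1`) -/
def maxa (j r : ℕ) : ℕ := Nat.findGreatest (fun a => Nat.choose a j ≤ r) (r + j)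

lemma maxa_spec (j r : ℕ) (hj : 1 ≤ j) : (maxa j r).choose j ≤ r := by
  show (Nat.findGreatest (fun a => Nat.choose a j ≤ r) (r + j)).choose j ≤ r
  apply Nat.findGreatest_spec (P := fun a => Nat.choose a j ≤ r) (m := 0) (Nat.zero_le _)
  simp [Nat.choose_eq_zero_of_lt (by omega : 0 < j)]

lemma maxa_succ_spec (j r : ℕ) (hj : 1 ≤ j) : r < ((maxa j r) + 1).choose j := by
  by_contra h
  push_neg at h
  have hle : maxa j r + 1 ≤ r + j := by
    by_contra h2
    push_neg at h2
    have : r + 1 ≤ (r + j).choose j := succ_le_choose r j hj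
    have : (r+j).choose j ≤ (maxa j r + 1).choose j := choose_mono' _ (by omega)
    omega
  have hlt : maxa j r < maxa j r + 1 := Nat.lt_succ_self _
  exact Nat.findGreatest_is_greatest hlt hle h

lemma maxa_lt_of_lt_choose {j r b : ℕ} (hj : 1 ≤ j) (h : r < b.choose j) : maxa j r < b := by
  by_contra h2
  push_neg at h2
  have := choose_mono' j h2
  have := maxa_spec j r hj
  omega

lemma maxa_eq_of {j r a : ℕ} (hj : 1 ≤ j) (h1 : a.choose j ≤ r) (h2 : r < (a+1).choose j) :
    maxa j r = a := by
  have hlt : maxa j r < a + 1 := maxa_lt_of_lt_choose hj h2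
  have hge : a ≤ maxa j r := by
    apply Nat.le_findGreatest (P := fun a => Nat.choose a j ≤ r) _ h1
    by_contra h3
    push_neg at h3
    have : r + 1 ≤ (r + j).choose j := succ_le_choose r j hj
    have : (r+j).choose j ≤ a.choose j := choose_mono' _ (by omega)
    omega
  omega

lemma pred_le_maxa (j r : ℕ) (hj : 1 ≤ j) : j - 1 ≤ maxa j r := by
  apply Nat.le_findGreatest (by omega)
  simp [Nat.choose_eq_zero_of_lt (by omega : j - 1 < j)]

lemma maxa_zero (j : ℕ) (hj : 1 ≤ j) : maxa j 0 = j - 1 := by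
  apply maxa_eq_of hj
  · simp [Nat.choose_eq_zero_of_lt (by omega : j - 1 < j)]
  · have : j - 1 + 1 = j := by omega
    rw [this, Nat.choose_self]; omega

/-- minimal shadow rank of the colex initial segment with `r+1` sets of size `j` -/
def msr : ℕ → ℕ → ℕ
  | 0, _ => 1
  | 1, _ => 1
  | (j+2), r => (maxa (j+2) r).choose (j+1) + msr (j+1) (r - (maxa (j+2) r).choose (j+2))

lemma msr_succ_succ (j r : ℕ) :
    msr (j+2) r = (maxa (j+2) r).choose (j+1) + msr (j+1) (r - (maxa (j+2) r).choose (j+2)) := rfl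

lemma msr_pos (j r : ℕ) : 1 ≤ msr j r := by
  induction j generalizing r with
  | zero => simp [msr]
  | succ j ih =>
    cases j with
    | zero => simp [msr]
    | succ j' => rw [msr_succ_succ]; have := ih (r - (maxa (j'+2) r).choose (j'+2)); omega

lemma msr_zero (j : ℕ) (hj : 1 ≤ j) : msr j 0 = j := by
  induction j with
  | zero => omega
  | succ j ih =>
    cases j with
    | zero => simp [msr]
    | succ j' =>
      rw [msr_succ_succ, maxa_zero _ (by omega)]
      have h1 : (j' + 2 - 1).choose (j'+1) = 1 := by
        have : j' + 2 - 1 = j' + 1 := by omega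
        rw [this, Nat.choose_self]
      have h2 : (j' + 2 - 1).choose (j'+2) = 0 := Nat.choose_eq_zero_of_lt (by omega)
      rw [h1, h2, Nat.sub_zero, ih (by omega)]; omega




-- PART1 goes here when merged



/-- residual bound: `Σ_{u=i+1}^{J-1} C(t - ⌈u(t+1)/J⌉, J-u)` -/
def Bres (J t i : ℕ) : ℕ := ∑ u ∈ Ico (i+1) J, Nat.choose (t - cdiv (u*(t+1)) J) (J-u)

def Dbound (J t : ℕ) : ℕ := Nat.choose t J + Bres J t 0

lemma Bres_step (J t i : ℕ) (h : i + 1 < J) :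
    Bres J t i = Nat.choose (t - cdiv ((i+1)*(t+1)) J) (J-(i+1)) + Bres J t (i+1) := by
  unfold Bres
  rw [Finset.sum_eq_sum_Ico_succ_bot h]

lemma Bres_empty (J t i : ℕ) (h : J ≤ i + 1) : Bres J t i = 0 := by
  unfold Bres
  rw [Ico_eq_empty (by omega), sum_empty]

lemma cdiv_le_t (J t u : ℕ) (hJ : 1 ≤ J) (ht : J ≤ t + 1) (hu : u + 1 ≤ J) :
    cdiv (u*(t+1)) J ≤ t := by
  apply cdiv_le _ _ _ (by omega)
  nlinarith

lemma cdiv_lt_cdiv_succ (J t u : ℕ) (hJ : 1 ≤ J) (ht : J ≤ t + 1) :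
    cdiv (u*(t+1)) J + 1 ≤ cdiv ((u+1)*(t+1)) J := by
  have h1 : cdiv (u*(t+1) + J) J = cdiv (u*(t+1)) J + 1 := cdiv_add_self _ _ (by omega)
  have h2 : cdiv (u*(t+1) + J) J ≤ cdiv ((u+1)*(t+1)) J := by
    apply cdiv_mono
    nlinarith
  omega

/-- chain bound: Bres J t i + 1 ≤ C(cap_{i+1} + 1, J - (i+1)) -/
lemma Bres_chain (J t : ℕ) (hJ : 1 ≤ J) (ht : J ≤ t + 1) :
    ∀ d i, J ≤ i + 1 + d →
      Bres J t i + 1 ≤ (t - cdiv ((i+1)*(t+1)) J + 1).choose (J-(i+1)) := by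
  intro d
  induction d with
  | zero =>
    intro i hi
    rw [Bres_empty _ _ _ (by omega)]
    have : J - (i+1) = 0 := by omega
    rw [this, Nat.choose_zero_right]
  | succ d ih =>
    intro i hi
    rcases le_or_gt J (i+1) with h | h
    · rw [Bres_empty _ _ _ h]
      have : J - (i+1) = 0 := by omega
      rw [this, Nat.choose_zero_right]
    · rw [Bres_step _ _ _ h]
      rcases le_or_gt J (i+2) with hJ2 | hJ2
      · rw [Bres_empty _ _ _ (by omega)]
        rw [show J-(i+1) = 1 from by omega]
        simp [Nat.choose_one_right]
      have hih := ih (i+1) (by omega)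
      have hcap : t - cdiv ((i+1+1)*(t+1)) J + 1 ≤ t - cdiv ((i+1)*(t+1)) J := by
        have h1 := cdiv_lt_cdiv_succ J t (i+1) hJ ht
        have h2 := cdiv_le_t J t (i+1+1) hJ ht (by omega)
        omega
      have h4 : (t - cdiv ((i+1+1)*(t+1)) J + 1).choose (J-(i+1+1)) ≤
          (t - cdiv ((i+1)*(t+1)) J).choose (J-(i+1+1)) := choose_mono' _ hcap
      set n := t - cdiv ((i+1)*(t+1)) J with hn
      have expand : (n+1).choose (J-(i+1)) = n.choose (J-(i+1+1)) + n.choose (J-(i+1)) := by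
        obtain ⟨k, hk⟩ : ∃ k, J-(i+1) = k+1 := ⟨J-(i+1+1), by omega⟩
        rw [hk, Nat.choose_succ_succ', show J-(i+1+1) = k from by omega]
      omega

lemma Dbound_lt (J t : ℕ) (hJ : 1 ≤ J) (ht : J ≤ t) : Dbound J t < (t+1).choose J := by
  have h0 := Bres_chain J t hJ (by omega) J 0 (by omega)
  have h1 : t - cdiv (1*(t+1)) J + 1 ≤ t := by
    have : 1 ≤ cdiv (1*(t+1)) J := one_le_cdiv (by omega) (by omega)
    have : cdiv (1*(t+1)) J ≤ t ∨ t < cdiv (1*(t+1)) J := le_or_gt _ _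
    omega
  have h2 : (t - cdiv (1*(t+1)) J + 1).choose (J-1) ≤ t.choose (J-1) := choose_mono' _ h1
  have h3 : (t+1).choose J = t.choose (J-1) + t.choose J := by
    obtain ⟨J', rfl⟩ : ∃ J', J = J'+1 := ⟨J-1, by omega⟩
    simp [Nat.choose_succ_succ']
  unfold Dbound
  have h4 : 0 + 1 = 1 := rfl
  rw [h4] at h0
  omega

/-- key linear fact: `J * (cap - (j₂-1)) ≤ j₂ * (t - J + 1)` where `cap = t - ⌈(J-j₂)(t+1)/J⌉` -/
lemma subfact (J t j₂ : ℕ) (h1 : 1 ≤ j₂) (h2 : j₂ + 1 ≤ J) (h3 : J ≤ t) :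
    J * ((t - cdiv ((J - j₂)*(t+1)) J) - (j₂ - 1)) ≤ j₂ * (t - J + 1) := by
  set c := cdiv ((J - j₂)*(t+1)) J with hc
  have hcl : (J - j₂)*(t+1) ≤ J * c := le_mul_cdiv _ _ (by omega)
  rcases le_or_gt (t - c) (j₂ - 1) with h | h
  · rw [Nat.sub_eq_zero_of_le h]; simp
  · -- t - c ≥ j₂, so c ≤ t - j₂, and subtractions are nonneg
    have hct : c ≤ t := by omega
    zify [hct, (by omega : j₂ - 1 ≤ t - c), (by omega : J ≤ t), (by omega : 1 ≤ j₂),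
      (by omega : j₂ ≤ J)] at *
    nlinarith

lemma Bres_split (J t j₂ : ℕ) (h1 : 1 ≤ j₂) (h2 : j₂ + 1 ≤ J) :
    Bres J t (J-1-j₂) = Nat.choose (t - cdiv ((J-j₂)*(t+1)) J) j₂ + Bres J t (J-j₂) := by
  have h := Bres_step J t (J-1-j₂) (by omega)
  rw [h, show J-1-j₂+1 = J-j₂ from by omega, show J-(J-j₂) = j₂ from by omega]

lemma Bres_chain' (J t j₂ : ℕ) (h1 : 1 ≤ j₂) (h2 : j₂ + 1 ≤ J) (ht : J ≤ t+1) :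
    Bres J t (J-1-j₂) + 1 ≤ (t - cdiv ((J-j₂)*(t+1)) J + 1).choose j₂ := by
  have h := Bres_chain J t (by omega) ht J (J-1-j₂) (by omega)
  rwa [show J-1-j₂+1 = J-j₂ from by omega, show J-(J-j₂) = j₂ from by omega] at h

/-- inner residual statement -/
lemma Slem (J t : ℕ)
    (IH : ∀ j' t' m, 1 ≤ j' → j' < J → j' ≤ t' → 1 ≤ m → m ≤ Dbound j' t' →
      j' * m ≤ (t' - j' + 1) * msr j' (m-1)) :
    ∀ j₂, 1 ≤ j₂ → j₂ + 1 ≤ J → J ≤ t →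
      ∀ m, 1 ≤ m → m ≤ Bres J t (J-1-j₂) → J * m ≤ (t - J + 1) * msr j₂ (m-1) := by
  intro j₂
  induction j₂ with
  | zero => intro h1; omega
  | succ j ihj =>
    intro h1 h2 h3 m hm1 hm2
    rcases Nat.eq_zero_or_pos j with rfl | hj
    · -- base case j₂ = 1
      set c := cdiv ((J-1)*(t+1)) J with hc
      have hsplit := Bres_split J t 1 (by omega) h2
      have hempty : Bres J t (J-1) = 0 := Bres_empty _ _ _ (by omega)
      rw [hsplit, hempty, Nat.choose_one_right] at hm2
      have hmc : m ≤ t - c := by omega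
      have hcle : (J-1)*(t+1) ≤ J * c := le_mul_cdiv _ _ (by omega)
      have hmul : J * m ≤ J * (t - c) := Nat.mul_le_mul_left _ hmc
      have h5 : c ≤ t := by omega
      have h6 : J * (t - c) + J * c = J * t := by rw [← Nat.mul_add]; congr 1; omega
      have h7 : (J-1)*(t+1) + (t+1) = J * (t+1) := by
        rw [← Nat.succ_mul, Nat.succ_eq_add_one, show J - 1 + 1 = J from by omega]
      have h8 : J * (t+1) = J * t + J := by ring
      rw [show msr 1 (m-1) = 1 from rfl, Nat.mul_one]
      omega
    · -- step case j₂ = j'+2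
      obtain ⟨j', rfl⟩ : ∃ j', j = j'+1 := ⟨j-1, by omega⟩
      rw [show j'+1+1 = j'+2 from by omega] at h2 hm2 ⊢
      set c := cdiv ((J-(j'+2))*(t+1)) J with hc
      set cap := t - c with hcap
      have hchain := Bres_chain' J t (j'+2) (by omega) h2 (by omega)
      have hsplit := Bres_split J t (j'+2) (by omega) h2
      rw [← hc, ← hcap] at hchain hsplit
      have hmlt : m - 1 < (cap + 1).choose (j'+2) := by omega
      have halt : maxa (j'+2) (m-1) ≤ cap := by
        have := maxa_lt_of_lt_choose (by omega : 1 ≤ j'+2) hmlt; omega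
      have hsf := subfact J t (j'+2) (by omega) h2 h3
      rw [show j'+2-1 = j'+1 from by omega] at hsf
      -- hsf : J * (cap - (j'+1)) ≤ (j'+2) * (t - J + 1)
      rcases le_or_gt (Nat.choose cap (j'+2)) (m-1) with hbig | hsmall
      · -- strip top block
        have haeq : maxa (j'+2) (m-1) = cap := maxa_eq_of (by omega) hbig hmlt
        rw [msr_succ_succ, haeq]
        set m₂ := m - Nat.choose cap (j'+2) with hm₂d
        rw [show m - 1 - Nat.choose cap (j'+2) = m₂ - 1 from by omega]
        have hm₂B : m₂ ≤ Bres J t (J-(j'+2)) := by omega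
        have hrec := ihj (by omega) (by omega) h3 m₂ (by omega)
          (by rwa [show J-1-(j'+1) = J-(j'+2) from by omega])
        have hid : Nat.choose cap (j'+2) * (j'+2) = Nat.choose cap (j'+1) * (cap - (j'+1)) :=
          Nat.choose_succ_right_eq cap (j'+1)
        have hblock : (j'+2) * (J * Nat.choose cap (j'+2)) ≤
            (j'+2) * ((t-J+1) * Nat.choose cap (j'+1)) := by
          calc (j'+2) * (J * Nat.choose cap (j'+2))
              = J * (Nat.choose cap (j'+2) * (j'+2)) := by ring
            _ = J * (Nat.choose cap (j'+1) * (cap - (j'+1))) := by rw [hid]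
            _ = (J * (cap - (j'+1))) * Nat.choose cap (j'+1) := by ring
            _ ≤ ((j'+2) * (t-J+1)) * Nat.choose cap (j'+1) := Nat.mul_le_mul_right _ hsf
            _ = (j'+2) * ((t-J+1) * Nat.choose cap (j'+1)) := by ring
        have hblock' : J * Nat.choose cap (j'+2) ≤ (t-J+1) * Nat.choose cap (j'+1) :=
          Nat.le_of_mul_le_mul_left hblock (by omega)
        have hexp : J * m = J * Nat.choose cap (j'+2) + J * m₂ := by
          rw [← Nat.mul_add]; congr 1; omega
        rw [hexp, Nat.mul_add]
        exact Nat.add_le_add hblock' hrec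
      · -- small top block: use outer IH at uniformity j'+2 with t*
        set tstar := j'+1 + ((j'+2)*(t-J+1))/J with htstar
        have hmC : m ≤ Nat.choose cap (j'+2) := by omega
        have hcaple : cap ≤ tstar := by
          have hdiv : cap - (j'+1) ≤ ((j'+2)*(t-J+1))/J := by
            rw [Nat.le_div_iff_mul_le (by omega : 0 < J)]
            rw [mul_comm] at hsf; exact hsf
          omega
        rcases lt_or_ge tstar (j'+2) with hts | hts
        · have hA : Nat.choose cap (j'+2) ≤ Nat.choose tstar (j'+2) := choose_mono' _ hcaple
          have hB : Nat.choose tstar (j'+2) = 0 := Nat.choose_eq_zero_of_lt hts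
          omega
        · have hDle : m ≤ Dbound (j'+2) tstar := by
            have hA : Nat.choose cap (j'+2) ≤ Nat.choose tstar (j'+2) := choose_mono' _ hcaple
            have hB : Nat.choose tstar (j'+2) ≤ Dbound (j'+2) tstar := Nat.le_add_right _ _
            omega
          have hIH := IH (j'+2) tstar m (by omega) (by omega) hts hm1 hDle
          have hts2 : tstar - (j'+2) + 1 = ((j'+2)*(t-J+1))/J := by omega
          have hmul : J * ((j'+2)*(t-J+1)/J) ≤ (j'+2)*(t-J+1) := by
            rw [mul_comm]; exact Nat.div_mul_le_self _ _
          have final : (j'+2) * (J * m) ≤ (j'+2) * ((t-J+1) * msr (j'+2) (m-1)) := by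
            calc (j'+2)*(J*m) = J*((j'+2)*m) := by ring
              _ ≤ J*((tstar-(j'+2)+1) * msr (j'+2) (m-1)) := Nat.mul_le_mul_left _ hIH
              _ = (J*((j'+2)*(t-J+1)/J)) * msr (j'+2) (m-1) := by rw [hts2]; ring
              _ ≤ ((j'+2)*(t-J+1)) * msr (j'+2) (m-1) := Nat.mul_le_mul_right _ hmul
              _ = (j'+2) * ((t-J+1) * msr (j'+2) (m-1)) := by ring
          exact Nat.le_of_mul_le_mul_left final (by omega)

/-- The main numeric theorem -/
theorem KEYnum : ∀ J t m, 1 ≤ J → J ≤ t → 1 ≤ m → m ≤ Dbound J t →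
    J * m ≤ (t - J + 1) * msr J (m-1) := by
  intro J
  induction J using Nat.strong_induction_on with
  | _ J IH =>
  intro t m hJ hJt hm hmD
  rcases Nat.lt_or_ge J 2 with hJ2 | hJ2
  · -- J = 1
    obtain rfl : J = 1 := by omega
    have hD : Dbound 1 t = t := by
      unfold Dbound
      rw [Bres_empty 1 t 0 (by omega), Nat.choose_one_right]
      omega
    rw [show msr 1 (m-1) = 1 from rfl]
    omega
  · obtain ⟨j', rfl⟩ : ∃ j', J = j'+2 := ⟨J-2, by omega⟩
    have hslem := Slem (j'+2) t (fun j'' t'' m'' a b c d e => IH j'' b t'' m'' a c d e)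
    have hDlt := Dbound_lt (j'+2) t (by omega) hJt
    rcases le_or_gt (Nat.choose t (j'+2)) (m-1) with hbig | hsmall
    · -- top block is t
      have haeq : maxa (j'+2) (m-1) = t := maxa_eq_of (by omega) hbig (by omega)
      rw [msr_succ_succ, haeq]
      set m₂ := m - Nat.choose t (j'+2) with hm₂d
      rw [show m - 1 - Nat.choose t (j'+2) = m₂ - 1 from by omega]
      have hm₂B : m₂ ≤ Bres (j'+2) t 0 := by
        unfold Dbound at hmD; omega
      have hrec := hslem (j'+1) (by omega) (by omega) hJt m₂ (by omega)
        (by rwa [show (j'+2)-1-(j'+1) = 0 from by omega])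
      have hid := Nat.choose_succ_right_eq t (j'+1)
      have hblock : (j'+2) * Nat.choose t (j'+2) = (t - (j'+2) + 1) * Nat.choose t (j'+1) := by
        calc (j'+2)*Nat.choose t (j'+2) = Nat.choose t (j'+2) * (j'+2) := by ring
          _ = Nat.choose t (j'+1) * (t - (j'+1)) := hid
          _ = (t-(j'+2)+1) * Nat.choose t (j'+1) := by
              rw [show t - (j'+1) = t - (j'+2) + 1 from by omega]; ring
      have hexp : (j'+2) * m = (j'+2) * Nat.choose t (j'+2) + (j'+2) * m₂ := by
        rw [← Nat.mul_add]; congr 1; omega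
      rw [hexp, Nat.mul_add, hblock]
      exact Nat.add_le_add le_rfl hrec
    · -- top block below t
      rcases Nat.eq_or_lt_of_le hm with hm1 | hm2
      · -- m = 1
        obtain rfl : m = 1 := hm1.symm
        rw [show (1:ℕ) - 1 = 0 from rfl, msr_zero _ (by omega), Nat.mul_one]
        calc j' + 2 = 1 * (j'+2) := (Nat.one_mul _).symm
          _ ≤ (t - (j'+2) + 1) * (j'+2) := Nat.mul_le_mul_right _ (by omega)
      · -- m ≥ 2
        set a := maxa (j'+2) (m-1) with had
        have haspec : Nat.choose a (j'+2) ≤ m - 1 := maxa_spec (j'+2) (m-1) (by omega)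
        have hasucc : m - 1 < Nat.choose (a+1) (j'+2) := maxa_succ_spec (j'+2) (m-1) (by omega)
        have haJ : j'+2 ≤ a := by
          by_contra hlt
          push_neg at hlt
          have h9 := pred_le_maxa (j'+2) (m-1) (by omega)
          have ha1 : a = j'+1 := by omega
          rw [ha1, show j'+1+1 = j'+2 from by omega, Nat.choose_self] at hasucc
          omega
        have halt' : a + 1 ≤ t := by
          have := maxa_lt_of_lt_choose (by omega : 1 ≤ j'+2) hsmall
          omega
        set m₂ := m - Nat.choose a (j'+2) with hm₂d
        have hm₂1 : 1 ≤ m₂ := by omega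
        have hm₂C : m₂ ≤ Nat.choose a (j'+1) := by
          have hcs : (a+1).choose (j'+2) = a.choose (j'+1) + a.choose (j'+2) :=
            Nat.choose_succ_succ' a (j'+1)
          omega
        have hIH := IH (j'+1) (by omega) a m₂ (by omega) (by omega) hm₂1
          (le_trans hm₂C (Nat.le_add_right _ _))
        -- hIH : (j'+1) * m₂ ≤ (a - (j'+1) + 1) * msr (j'+1) (m₂ - 1)
        rw [msr_succ_succ, ← had, show m - 1 - Nat.choose a (j'+2) = m₂ - 1 from by omega]
        have hta : a - (j'+1) + 1 ≤ t - (j'+2) + 1 := by omega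
        have hid2 : Nat.choose a (j'+2) * (j'+2) = Nat.choose a (j'+1) * (a - (j'+1)) :=
          Nat.choose_succ_right_eq a (j'+1)
        have hfin : (j'+2) * m ≤ (a-(j'+1)+1) * (Nat.choose a (j'+1) + msr (j'+1) (m₂-1)) := by
          calc (j'+2)*m = Nat.choose a (j'+2) * (j'+2) + m₂ + (j'+1)*m₂ := by
                have : m = Nat.choose a (j'+2) + m₂ := by omega
                rw [this]; ring
            _ = Nat.choose a (j'+1) * (a-(j'+1)) + m₂ + (j'+1)*m₂ := by rw [hid2]
            _ ≤ Nat.choose a (j'+1) * (a-(j'+1)) + Nat.choose a (j'+1) + (j'+1)*m₂ := by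
                exact Nat.add_le_add (Nat.add_le_add le_rfl hm₂C) le_rfl
            _ = (a-(j'+1)+1) * Nat.choose a (j'+1) + (j'+1)*m₂ := by ring
            _ ≤ (a-(j'+1)+1) * Nat.choose a (j'+1) + (a-(j'+1)+1) * msr (j'+1) (m₂-1) :=
                Nat.add_le_add le_rfl hIH
            _ = (a-(j'+1)+1) * (Nat.choose a (j'+1) + msr (j'+1) (m₂-1)) := by ring
        exact le_trans hfin (Nat.mul_le_mul_right _ hta)

/-! ### cascade sets and colex counting -/

def casc : ℕ → ℕ → Finset ℕ
  | 0, _ => ∅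
  | (j+1), r => insert (maxa (j+1) r) (casc j (r - (maxa (j+1) r).choose (j+1)))

lemma casc_succ (j r : ℕ) :
    casc (j+1) r = insert (maxa (j+1) r) (casc j (r - (maxa (j+1) r).choose (j+1))) := rfl

lemma rem_lt (j r : ℕ) (hj : 1 ≤ j) :
    r - (maxa (j+1) r).choose (j+1) < (maxa (j+1) r).choose j := by
  have h1 := maxa_spec (j+1) r (by omega)
  have h2 := maxa_succ_spec (j+1) r (by omega)
  have h3 : (maxa (j+1) r + 1).choose (j+1) =
      (maxa (j+1) r).choose j + (maxa (j+1) r).choose (j+1) :=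
    Nat.choose_succ_succ' _ j
  omega

lemma casc_mem_le (j : ℕ) : ∀ r, ∀ x ∈ casc j r, x ≤ maxa j r := by
  induction j with
  | zero => intro r x hx; simp [casc] at hx
  | succ j ih =>
    intro r x hx
    rw [casc_succ] at hx
    rcases mem_insert.1 hx with rfl | hx2
    · exact le_rfl
    · rcases Nat.eq_zero_or_pos j with rfl | hj
      · simp [casc] at hx2
      · have h1 := ih _ x hx2
        have h2 : maxa j (r - (maxa (j+1) r).choose (j+1)) < maxa (j+1) r :=
          maxa_lt_of_lt_choose hj (rem_lt j r hj)
        omega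

lemma casc_card (j : ℕ) : ∀ r, (casc j r).card = j := by
  induction j with
  | zero => intro r; simp [casc]
  | succ j ih =>
    intro r
    rw [casc_succ, card_insert_of_notMem, ih]
    intro hmem
    rcases Nat.eq_zero_or_pos j with rfl | hj
    · simp [casc] at hmem
    · have h1 := casc_mem_le j _ _ hmem
      have h2 : maxa j (r - (maxa (j+1) r).choose (j+1)) < maxa (j+1) r :=
        maxa_lt_of_lt_choose hj (rem_lt j r hj)
      omega

def cascS : ℕ → ℕ → Finset ℕ
  | 0, _ => ∅
  | 1, _ => ∅
  | (j+2), r => insert (maxa (j+2) r) (cascS (j+1) (r - (maxa (j+2) r).choose (j+2)))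

lemma cascS_succ (j r : ℕ) :
    cascS (j+2) r = insert (maxa (j+2) r) (cascS (j+1) (r - (maxa (j+2) r).choose (j+2))) := rfl

lemma cascS_subset_casc (j : ℕ) : ∀ r, cascS j r ⊆ casc j r := by
  induction j with
  | zero => intro r; simp [cascS]
  | succ j ih =>
    intro r
    cases j with
    | zero => simp [cascS]
    | succ j' =>
      rw [cascS_succ, casc_succ]
      exact insert_subset_insert _ (ih _)

lemma cascS_card (j : ℕ) : ∀ r, (cascS j r).card = j - 1 := by
  induction j with
  | zero => intro r; simp [cascS]
  | succ j ih =>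
    intro r
    cases j with
    | zero => simp [cascS]
    | succ j' =>
      rw [cascS_succ, card_insert_of_notMem, ih]
      · omega
      · intro hmem
        have h1 := casc_mem_le (j'+1) _ _ (cascS_subset_casc _ _ hmem)
        have h2 : maxa (j'+1) (r - (maxa (j'+2) r).choose (j'+2)) < maxa (j'+2) r :=
          maxa_lt_of_lt_choose (by omega) (rem_lt (j'+1) r (by omega))
        omega

lemma maxa_one (r : ℕ) : maxa 1 r = r := by
  apply maxa_eq_of (by omega)
  · rw [Nat.choose_one_right]
  · rw [Nat.choose_one_right]; omega

lemma casc_one (r : ℕ) : casc 1 r = {r} := by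
  rw [casc_succ, maxa_one]
  simp [casc]

/-- cascS is casc minus its minimum -/
lemma cascS_erase (j : ℕ) : ∀ r, ∃ m, m ∈ casc (j+1) r ∧ (∀ y ∈ casc (j+1) r, m ≤ y) ∧
    cascS (j+1) r = (casc (j+1) r).erase m := by
  induction j with
  | zero =>
    intro r
    refine ⟨r, ?_, ?_, ?_⟩
    · rw [casc_one]; exact mem_singleton_self r
    · intro y hy; rw [casc_one, mem_singleton] at hy; omega
    · rw [casc_one, show cascS 1 r = ∅ from rfl, erase_singleton]
  | succ j ih =>
    intro r
    set a := maxa (j+2) r with ha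
    set r' := r - a.choose (j+2) with hr'
    obtain ⟨m, hm1, hm2, hm3⟩ := ih r'
    have hlt : ∀ x ∈ casc (j+1) r', x < a := by
      intro x hx
      have h1 := casc_mem_le (j+1) r' x hx
      have h2 : maxa (j+1) r' < a := maxa_lt_of_lt_choose (by omega) (rem_lt (j+1) r (by omega))
      omega
    refine ⟨m, ?_, ?_, ?_⟩
    · rw [casc_succ, ← ha, ← hr']; exact mem_insert_of_mem hm1
    · intro y hy
      rw [casc_succ, ← ha, ← hr'] at hy
      rcases mem_insert.1 hy with rfl | hy2
      · exact le_of_lt (lt_of_le_of_lt (hm2 m hm1) (hlt m hm1))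
      · exact hm2 y hy2
    · rw [casc_succ, cascS_succ, ← ha, ← hr']
      have hma : a ≠ m := by
        have := hlt m hm1; omega
      rw [erase_insert_of_ne hma, hm3]

/-- initial segment of colex among j-subsets of range n -/
def iseg (j n : ℕ) (T : Finset ℕ) : Finset (Finset ℕ) :=
  (powersetCard j (range n)).filter (fun S => toColex S ≤ toColex T)

lemma mem_iseg {j n : ℕ} {T S : Finset ℕ} :
    S ∈ iseg j n T ↔ (S ⊆ range n ∧ S.card = j) ∧ toColex S ≤ toColex T := by
  rw [iseg, mem_filter, mem_powersetCard]

lemma iseg_zero (n : ℕ) : (iseg 0 n ∅).card = 1 := by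
  have : iseg 0 n ∅ = {∅} := by
    ext S
    rw [mem_iseg, mem_singleton]
    constructor
    · rintro ⟨⟨-, hc⟩, -⟩; exact card_eq_zero.1 hc
    · rintro rfl; simp
  rw [this, card_singleton]

lemma iseg_step (n j a : ℕ) (T : Finset ℕ) (hT : ∀ x ∈ T, x < a) (han : a < n)
    (hTc : T.card = j) :
    (iseg (j+1) n (insert a T)).card = Nat.choose a (j+1) + (iseg j n T).card := by
  classical
  have haT : a ∉ T := fun h => lt_irrefl a (hT a h)
  have hsplit := card_filter_add_card_filter_not
    (s := iseg (j+1) n (insert a T)) (p := fun S => a ∈ S)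
  have h1 : (iseg (j+1) n (insert a T)).filter (fun S => ¬ a ∈ S)
      = powersetCard (j+1) (range a) := by
    ext S
    rw [mem_filter, mem_iseg, mem_powersetCard]
    constructor
    · rintro ⟨⟨⟨hSn, hSc⟩, hle⟩, haS⟩
      refine ⟨fun x hx => mem_range.2 ?_, hSc⟩
      have hbound : ∀ b ∈ insert a T, b < a + 1 := by
        intro b hb
        rcases mem_insert.1 hb with rfl | hb2
        · omega
        · have := hT b hb2; omega
      have := Colex.forall_lt_mono hle hbound x hx
      have : x ≠ a := fun h => haS (h ▸ hx)
      omega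
    · rintro ⟨hSa, hSc⟩
      have haS : a ∉ S := fun h => by have := mem_range.1 (hSa h); omega
      refine ⟨⟨⟨fun x hx => ?_, hSc⟩, ?_⟩, haS⟩
      · have := mem_range.1 (hSa hx); exact mem_range.2 (by omega)
      · apply le_of_lt
        rw [Colex.toColex_lt_toColex_iff_exists_forall_lt]
        exact ⟨a, mem_insert_self _ _, haS,
          fun b hb _ => mem_range.1 (hSa hb)⟩
  have h2 : ((iseg (j+1) n (insert a T)).filter (fun S => a ∈ S)).card
      = (iseg j n T).card := by
    refine card_bij' (fun S _ => S.erase a) (fun S₂ _ => insert a S₂) ?hi ?hj ?li ?ri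
    case hi =>
      intro S hS
      rw [mem_filter, mem_iseg] at hS
      obtain ⟨⟨⟨hSn, hSc⟩, hle⟩, haS⟩ := hS
      rw [mem_iseg]
      refine ⟨⟨subset_trans (erase_subset _ _) hSn, by rw [card_erase_of_mem haS, hSc]; omega⟩, ?_⟩
      have := (Colex.toColex_sdiff_le_toColex_sdiff
        (singleton_subset_iff.2 haS) (singleton_subset_iff.2 (mem_insert_self a T))).2 hle
      rwa [sdiff_singleton_eq_erase, sdiff_singleton_eq_erase, erase_insert haT] at this
    case hj =>
      intro S₂ hS₂
      rw [mem_iseg] at hS₂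
      obtain ⟨⟨hSn, hSc⟩, hle⟩ := hS₂
      have haS₂ : a ∉ S₂ := by
        intro h
        have := Colex.forall_lt_mono hle hT a h
        omega
      rw [mem_filter, mem_iseg]
      refine ⟨⟨⟨insert_subset (mem_range.2 (by omega)) hSn,
          by rw [card_insert_of_notMem haS₂, hSc]⟩, ?_⟩, mem_insert_self _ _⟩
      have := (Colex.toColex_sdiff_le_toColex_sdiff
        (singleton_subset_iff.2 (mem_insert_self a S₂))
        (singleton_subset_iff.2 (mem_insert_self a T))).1
      rw [sdiff_singleton_eq_erase, sdiff_singleton_eq_erase, erase_insert haT,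
        erase_insert haS₂] at this
      exact this hle
    case li =>
      intro S hS
      rw [mem_filter] at hS
      exact insert_erase hS.2
    case ri =>
      intro S₂ hS₂
      rw [mem_iseg] at hS₂
      have haS₂ : a ∉ S₂ := by
        intro h
        have := Colex.forall_lt_mono hS₂.2 hT a h
        omega
      exact erase_insert haS₂
  have h3 : (powersetCard (j+1) (range a)).card = Nat.choose a (j+1) := by
    rw [card_powersetCard, card_range]
  rw [h1] at hsplit
  omega

lemma maxa_zero_zero : maxa 0 0 = 0 := by
  have := Nat.findGreatest_le (P := fun a => Nat.choose a 0 ≤ 0) (0 + 0)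
  unfold maxa
  omega

lemma iseg_casc_card (j : ℕ) : ∀ r n, maxa j r < n → (j = 0 → r = 0) →
    (iseg j n (casc j r)).card = r + 1 := by
  induction j with
  | zero =>
    intro r n h h0
    rw [h0 rfl, show casc 0 0 = ∅ from rfl, iseg_zero]
  | succ j ih =>
    intro r n h h0
    set a := maxa (j+1) r with ha
    set r' := r - a.choose (j+1) with hr'
    rcases Nat.eq_zero_or_pos j with rfl | hj
    · -- j+1 = 1
      rw [casc_one]
      have hrn : r < n := by
        have h2 := h
        rw [ha] at h2
        simpa [maxa_one] using h2
      have hstep := iseg_step n 0 r ∅ (by simp) hrn (by simp)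
      rw [show insert r (∅ : Finset ℕ) = {r} from rfl] at hstep
      rw [hstep, iseg_zero, Nat.choose_one_right]
    · have hlt : ∀ x ∈ casc j r', x < a := by
        intro x hx
        have h1 := casc_mem_le j r' x hx
        have h2 : maxa j r' < a := maxa_lt_of_lt_choose hj (rem_lt j r hj)
        omega
      rw [casc_succ, ← ha, ← hr']
      rw [iseg_step n j a _ hlt (by omega) (casc_card j r')]
      have hihyp : maxa j r' < n := by
        have h2 : maxa j r' < a := maxa_lt_of_lt_choose hj (rem_lt j r hj)
        omega
      rw [ih r' n hihyp (by omega)]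
      have hms := maxa_spec (j+1) r (by omega)
      rw [← ha] at hms
      omega

lemma iseg_cascS_card (j : ℕ) : ∀ r n, 1 ≤ j → maxa j r < n →
    (iseg (j-1) n (cascS j r)).card = msr j r := by
  induction j with
  | zero => intro r n hj; omega
  | succ j ih =>
    intro r n hj h
    cases j with
    | zero => rw [show cascS 1 r = ∅ from rfl, iseg_zero, show msr 1 r = 1 from rfl]
    | succ j' =>
      set a := maxa (j'+2) r with ha
      set r' := r - a.choose (j'+2) with hr'
      have h2 : maxa (j'+1) r' < a := maxa_lt_of_lt_choose (by omega) (rem_lt (j'+1) r (by omega))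
      have hlt : ∀ x ∈ cascS (j'+1) r', x < a := by
        intro x hx
        have h1 := casc_mem_le (j'+1) r' x (cascS_subset_casc _ _ hx)
        omega
      rw [cascS_succ, ← ha, ← hr']
      rw [show j' + 1 + 1 - 1 = j' + 1 from by omega]
      rw [iseg_step n j' a _ hlt (by omega) (by rw [cascS_card]; omega)]
      rw [show (iseg j' n (cascS (j'+1) r')) = (iseg ((j'+1)-1) n (cascS (j'+1) r')) from by
        rw [show j'+1-1 = j' from by omega]]
      rw [ih r' n (by omega) (by omega)]
      rw [msr_succ_succ, ← ha, ← hr']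

/-! ### colex shadow core lemma -/

lemma colex_shadow_core (T R : Finset ℕ) (m : ℕ) (hm : m ∈ T) (hmin : ∀ y ∈ T, m ≤ y)
    (hcard : R.card + 1 = T.card)
    (hR : toColex R ≤ toColex (T.erase m)) :
    ∃ x, x ∉ R ∧ (∃ y ∈ T, x ≤ y) ∧ toColex (insert x R) ≤ toColex T := by
  rcases eq_or_lt_of_le hR with heq | hlt
  · have hReq : R = T.erase m := toColex_inj.1 heq
    refine ⟨m, ?_, ⟨m, hm, le_rfl⟩, ?_⟩
    · rw [hReq]; exact notMem_erase _ _
    · rw [hReq, insert_erase hm]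
  · obtain ⟨w, hwT', hwR, hwall⟩ := toColex_lt_toColex_iff_exists_forall_lt.1 hlt
    have hwT : w ∈ T := mem_of_mem_erase hwT'
    set X := (range (w+1)) \ R with hX
    have hwX : w ∈ X := mem_sdiff.2 ⟨mem_range.2 (by omega), hwR⟩
    have hXne : X.Nonempty := ⟨w, hwX⟩
    set x := X.min' hXne with hxdef
    have hxX : x ∈ X := min'_mem _ _
    have hxR : x ∉ R := (mem_sdiff.1 hxX).2
    have hxw : x ≤ w := by have := mem_range.1 (mem_sdiff.1 hxX).1; omega
    refine ⟨x, hxR, ⟨w, hwT, hxw⟩, ?_⟩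
    by_cases hST : insert x R = T
    · rw [hST]
    have hzlt : ∀ z ∈ insert x R, z ∉ T → z < w := by
      intro z hzS hzT
      have hzw : z ≠ w := fun h => hzT (h ▸ hwT)
      rcases mem_insert.1 hzS with hzx | hzR
      · omega
      · by_cases hz' : z ∈ T.erase m
        · exact absurd (mem_of_mem_erase hz') hzT
        · have := hwall z hzR hz'
          omega
    rw [toColex_le_toColex]
    intro z hzS hzT
    have hzw := hzlt z hzS hzT
    by_cases hwS : w ∈ insert x R
    · have hxw' : x = w := by
        rcases mem_insert.1 hwS with h | h
        · omega
        · exact absurd h hwR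
      have hrange : ∀ u, u < w → u ∈ R := by
        intro u hu
        by_contra huR
        have huX : u ∈ X := mem_sdiff.2 ⟨mem_range.2 (by omega), huR⟩
        have := min'_le X u huX
        omega
      have hTS : (T \ insert x R).Nonempty := by
        rw [sdiff_nonempty]
        intro hsub
        refine hST ((eq_of_subset_of_card_le hsub ?_).symm)
        rw [card_insert_of_notMem hxR]
        omega
      obtain ⟨y, hy⟩ := hTS
      rw [mem_sdiff] at hy
      refine ⟨y, hy.1, hy.2, ?_⟩
      have hyw : w ≤ y := by
        by_contra hyw'
        push_neg at hyw'
        exact hy.2 (mem_insert_of_mem (hrange y hyw'))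
      omega
    · exact ⟨w, hwT, hwS, by omega⟩

lemma shadow_step (j r n : ℕ) (hj : 1 ≤ j) (hn : maxa j r < n) :
    ∀ R ∈ iseg (j-1) n (cascS j r), ∃ S ∈ iseg j n (casc j r), R ⊆ S ∧ S.card = R.card + 1 := by
  obtain ⟨j', rfl⟩ : ∃ j', j = j'+1 := ⟨j-1, by omega⟩
  intro R hR
  rw [mem_iseg] at hR
  obtain ⟨⟨hRn, hRc⟩, hRle⟩ := hR
  obtain ⟨m, hm1, hm2, hm3⟩ := cascS_erase j' r
  rw [hm3] at hRle
  have hcard : R.card + 1 = (casc (j'+1) r).card := by rw [casc_card, hRc]; omega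
  obtain ⟨x, hxR, ⟨y, hyT, hxy⟩, hle⟩ := colex_shadow_core _ R m hm1 hm2 hcard hRle
  have hyn : y < n := by
    have := casc_mem_le (j'+1) r y hyT; omega
  refine ⟨insert x R, ?_, subset_insert _ _, by rw [card_insert_of_notMem hxR]⟩
  rw [mem_iseg]
  exact ⟨⟨insert_subset (mem_range.2 (by omega)) hRn,
    by rw [card_insert_of_notMem hxR, hRc]; omega⟩, hle⟩

/-! ### Fin n side: Kruskal-Katona application -/

set_option maxHeartbeats 2000000 in
lemma fin_bound (n j m : ℕ) (hn : 0 < n) (hj : 1 ≤ j) (hm : 1 ≤ m)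
    (hmaxa : maxa j (m-1) < n)
    (𝒜 : Finset (Finset (Fin n))) (hsz : (𝒜 : Set (Finset (Fin n))).Sized j)
    (hcard : 𝒜.card = m) :
    msr j (m-1) ≤ (Finset.shadow 𝒜).card := by
  set T := casc j (m-1) with hT
  have hTsub : ∀ x ∈ T, x < n := by
    intro x hx
    have := casc_mem_le j (m-1) x hx
    omega
  set f : ℕ → Fin n := fun x => ⟨x % n, Nat.mod_lt x hn⟩ with hfdef
  have hf : ∀ x, x < n → ((f x : Fin n) : ℕ) = x := fun x hx => Nat.mod_eq_of_lt hx
  have hvf : ∀ S : Finset ℕ, S ⊆ range n → (S.image f).image Fin.val = S := by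
    intro S hS
    ext z
    simp only [mem_image]
    constructor
    · rintro ⟨u, ⟨v, hv, rfl⟩, rfl⟩
      rwa [hf v (mem_range.1 (hS hv))]
    · intro hz
      exact ⟨f z, ⟨z, hz, rfl⟩, hf z (mem_range.1 (hS hz))⟩
  have himgcard : ∀ S : Finset ℕ, S ⊆ range n → (S.image f).card = S.card := by
    intro S hS
    have h1 := card_image_le (s := S.image f) (f := Fin.val)
    rw [hvf S hS] at h1
    have h2 := card_image_le (s := S) (f := f)
    omega
  have hfva : ∀ A : Finset (Fin n), (A.image Fin.val).image f = A := by
    intro A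
    rw [image_image]
    have : (f ∘ Fin.val) = id := by
      funext a
      exact Fin.ext (hf _ a.isLt)
    rw [this, image_id]
  set 𝒞 : Finset (Finset (Fin n)) := (iseg j n T).image (Finset.image f) with h𝒞
  have hsub_iseg : ∀ {S : Finset ℕ}, S ∈ iseg j n T → S ⊆ range n := by
    intro S hS
    exact (mem_iseg.1 hS).1.1
  have hmem𝒞 : ∀ A : Finset (Fin n), A ∈ 𝒞 ↔ A.image Fin.val ∈ iseg j n T := by
    intro A
    constructor
    · intro hA
      obtain ⟨S', hS', rfl⟩ := mem_image.1 hA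
      rwa [hvf S' (hsub_iseg hS')]
    · intro h
      exact mem_image.2 ⟨A.image Fin.val, h, hfva A⟩
  have hcard𝒞 : 𝒞.card = m := by
    rw [h𝒞, card_image_of_injOn, iseg_casc_card j (m-1) n hmaxa (by omega)]
    · omega
    · intro S₁ h₁ S₂ h₂ heq
      have := congrArg (Finset.image Fin.val) heq
      rwa [hvf S₁ (hsub_iseg h₁), hvf S₂ (hsub_iseg h₂)] at this
  have hsized𝒞 : (𝒞 : Set (Finset (Fin n))).Sized j := by
    intro A hA
    rw [Finset.mem_coe, hmem𝒞] at hA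
    have hc := (mem_iseg.1 hA).1.2
    have := card_image_of_injective A Fin.val_injective
    omega
  have hinit : IsInitSeg 𝒞 j := by
    refine ⟨hsized𝒞, ?_⟩
    intro A B hA hB
    rw [hmem𝒞] at hA ⊢
    rw [mem_iseg] at hA ⊢
    have hlt : toColex (B.image Fin.val) < toColex (A.image Fin.val) :=
      (toColex_image_lt_toColex_image Fin.val_strictMono).2 hB.1
    refine ⟨⟨?_, ?_⟩, le_trans hlt.le hA.2⟩
    · intro z hz
      obtain ⟨b, _, rfl⟩ := mem_image.1 hz
      exact mem_range.2 b.isLt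
    · rw [card_image_of_injective B Fin.val_injective, hB.2]
  have hKK := Finset.kruskal_katona hsz (by rw [hcard𝒞, hcard]) hinit
  -- lower bound the shadow of 𝒞
  have hSmem : ∀ R' ∈ iseg (j-1) n (cascS j (m-1)), (R'.image f) ∈ Finset.shadow 𝒞 := by
    intro R' hR'
    obtain ⟨S', hS', hsub, hc⟩ := shadow_step j (m-1) n hj hmaxa R' hR'
    rw [mem_shadow_iff_exists_mem_card_add_one]
    refine ⟨S'.image f, (hmem𝒞 _).2 (by rwa [hvf S' (hsub_iseg hS')]),
      image_subset_image hsub, ?_⟩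
    rw [himgcard S' (hsub_iseg hS'), himgcard R' ((mem_iseg.1 hR').1.1), hc]
  have hinj2 : Set.InjOn (Finset.image f) (iseg (j-1) n (cascS j (m-1))) := by
    intro S₁ h₁ S₂ h₂ heq
    have := congrArg (Finset.image Fin.val) heq
    rwa [hvf S₁ (mem_iseg.1 h₁).1.1, hvf S₂ (mem_iseg.1 h₂).1.1] at this
  have hsub𝒞 : (iseg (j-1) n (cascS j (m-1))).image (Finset.image f) ⊆ Finset.shadow 𝒞 := by
    intro R hR
    obtain ⟨R', hR', rfl⟩ := mem_image.1 hR
    exact hSmem R' hR'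
  have hcount : ((iseg (j-1) n (cascS j (m-1))).image (Finset.image f)).card = msr j (m-1) := by
    rw [card_image_of_injOn hinj2, iseg_cascS_card j (m-1) n hj hmaxa]
  calc msr j (m-1) = ((iseg (j-1) n (cascS j (m-1))).image (Finset.image f)).card := hcount.symm
    _ ≤ (Finset.shadow 𝒞).card := card_le_card hsub𝒞
    _ ≤ (Finset.shadow 𝒜).card := by convert hKK using 3

/-! ### transfer along an injection -/

lemma image_erase_injOn {α β : Type*} [DecidableEq α] [DecidableEq β] {g : α → β} {V E : Finset α}
    (hinj : Set.InjOn g V) (hEV : E ⊆ V) {e : α} (he : e ∈ E) :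
    (E.image g).erase (g e) = (E.erase e).image g := by
  ext z
  simp only [mem_erase, mem_image]
  constructor
  · rintro ⟨hzne, e', he', rfl⟩
    exact ⟨e', ⟨fun h => hzne (by rw [h]), he'⟩, rfl⟩
  · rintro ⟨e', ⟨hne, he'⟩, rfl⟩
    exact ⟨fun h => hne (hinj (hEV he') (hEV he) h), e', he', rfl⟩

lemma shadow_image_eq {α β : Type*} [DecidableEq α] [DecidableEq β] {g : α → β} {V : Finset α}
    (hinj : Set.InjOn g V) (G : Finset (Finset α)) (hG : ∀ E ∈ G, E ⊆ V) :
    Finset.shadow (G.image (Finset.image g)) = (Finset.shadow G).image (Finset.image g) := by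
  ext R
  rw [mem_image]
  constructor
  · intro hR
    rw [mem_shadow_iff] at hR
    obtain ⟨A, hA, x, hx, rfl⟩ := hR
    obtain ⟨E, hE, rfl⟩ := mem_image.1 hA
    obtain ⟨e, he, rfl⟩ := mem_image.1 hx
    exact ⟨E.erase e, mem_shadow_iff.2 ⟨E, hE, e, he, rfl⟩,
      (image_erase_injOn hinj (hG E hE) he).symm⟩
  · rintro ⟨R₀, hR₀, rfl⟩
    rw [mem_shadow_iff] at hR₀ ⊢
    obtain ⟨E, hE, e, he, rfl⟩ := hR₀
    exact ⟨E.image g, mem_image_of_mem _ hE, g e, mem_image_of_mem _ he,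
      image_erase_injOn hinj (hG E hE) he⟩

lemma card_image_family {α β : Type*} [DecidableEq α] [DecidableEq β] {g : α → β} {V : Finset α}
    (hinj : Set.InjOn g V) (G : Finset (Finset α)) (hG : ∀ E ∈ G, E ⊆ V) :
    (G.image (Finset.image g)).card = G.card := by
  apply card_image_of_injOn
  have key : ∀ E₁' E₂' : Finset α, E₁' ⊆ V → E₂' ⊆ V → E₁'.image g ⊆ E₂'.image g → E₁' ⊆ E₂' := by
    intro E₁' E₂' hV1 hV2 hsub a ha
    obtain ⟨b, hb, hba⟩ := mem_image.1 (hsub (mem_image_of_mem g ha))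
    rwa [← hinj (hV2 hb) (hV1 ha) hba]
  intro E₁ h₁ E₂ h₂ heq
  rw [mem_coe] at h₁ h₂
  exact subset_antisymm (key _ _ (hG _ h₁) (hG _ h₂) (le_of_eq heq))
    (key _ _ (hG _ h₂) (hG _ h₁) (le_of_eq heq.symm))

/-- KEY: any `j`-uniform family of size at most `Dbound j t` has shadow ratio at least
`j / (t - j + 1)`. -/
lemma key_shadow {α : Type*} [DecidableEq α] (j t : ℕ) (hj : 1 ≤ j) (hjt : j ≤ t)
    (G : Finset (Finset α)) (huni : ∀ E ∈ G, E.card = j) (hD : G.card ≤ Dbound j t) :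
    j * G.card ≤ (t - j + 1) * (Finset.shadow G).card := by
  classical
  rcases G.eq_empty_or_nonempty with rfl | hne
  · simp
  have hm : 1 ≤ G.card := card_pos.2 hne
  set m := G.card with hmdef
  set V := G.sup id with hV
  have hGV : ∀ E ∈ G, E ⊆ V := fun E hE => le_sup (f := id) hE
  set n := V.card + maxa j (m-1) + 1 with hn
  have hVn : V.card ≤ n := by omega
  set g : α → Fin n := fun a =>
    if h : a ∈ V then Fin.castLE hVn (V.equivFin ⟨a, h⟩) else ⟨0, by omega⟩ with hg
  have hginj : Set.InjOn g V := by
    intro a ha b hb heq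
    rw [mem_coe] at ha hb
    rw [hg] at heq
    simp only [dif_pos ha, dif_pos hb] at heq
    have h2 := Fin.castLE_injective hVn heq
    have h3 := V.equivFin.injective h2
    exact Subtype.ext_iff.1 h3
  have hshadow_eq := shadow_image_eq hginj G hGV
  have hc1 : (G.image (Finset.image g)).card = m := card_image_family hginj G hGV
  have hshadow_sub : ∀ R ∈ Finset.shadow G, R ⊆ V := by
    intro R hR
    rw [mem_shadow_iff] at hR
    obtain ⟨E, hE, x, _, rfl⟩ := hR
    exact subset_trans (erase_subset _ _) (hGV E hE)
  have hc2 : (Finset.shadow (G.image (Finset.image g))).card = (Finset.shadow G).card := by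
    rw [hshadow_eq]
    exact card_image_family hginj _ hshadow_sub
  have hsz : ((G.image (Finset.image g)) : Set (Finset (Fin n))).Sized j := by
    intro A hA
    rw [mem_coe] at hA
    obtain ⟨E, hE, rfl⟩ := mem_image.1 hA
    rw [card_image_of_injOn (hginj.mono (coe_subset.2 (hGV E hE)))]
    exact huni E hE
  have hfb := fin_bound n j m (by omega) hj hm (by omega) _ hsz hc1
  rw [hc2] at hfb
  calc j * m ≤ (t - j + 1) * msr j (m-1) := KEYnum j t m hj hjt hm hD
    _ ≤ (t - j + 1) * (Finset.shadow G).card := Nat.mul_le_mul_left _ hfb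


end Stmt4

/-- If `t ≥ k ≥ 3` and `H` is a nonempty `k`-uniform hypergraph whose maximum degree is at
most `C(t,k−1) + Σ_{u=1}^{k−2} C(t − ⌈u(t+1)/(k−1)⌉, k−1−u)`, then
`(t − k + 2)·|σ(H)| ≥ k·|H|`. -/
theorem stmt_4 {α : Type*} [DecidableEq α] (t k : ℕ) (hk : 3 ≤ k) (htk : k ≤ t)
    (H : Finset (Finset α)) (huniform : ∀ E ∈ H, E.card = k)
    (hne : H.Nonempty)
    (hdeg : ∀ v : α, (H.filter (fun E => v ∈ E)).card ≤
      Nat.choose t (k - 1) +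
        ∑ u ∈ Finset.Icc 1 (k - 2),
          Nat.choose (t - ⌈(u * (t + 1) : ℚ) / ((k : ℚ) - 1)⌉₊) (k - 1 - u)) :
    (t - k + 2) * (Finset.shadow H).card ≥ k * H.card := by
  classical
  open Finset in
  -- identify the degree bound with `Dbound (k-1) t`
  have hDeq : Nat.choose t (k - 1) + ∑ u ∈ Finset.Icc 1 (k - 2),
      Nat.choose (t - ⌈(u * (t + 1) : ℚ) / ((k : ℚ) - 1)⌉₊) (k - 1 - u)
      = Stmt4.Dbound (k-1) t := by
    unfold Stmt4.Dbound Stmt4.Bres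
    congr 1
    rw [show Finset.Ico (0+1) (k-1) = Finset.Icc 1 (k-2) from by
      rw [show k-1 = (k-2)+1 from by omega, Finset.Ico_add_one_right_eq_Icc]]
    apply Finset.sum_congr rfl
    intro u hu
    congr 2
    rw [show ((k:ℚ) - 1) = (((k-1 : ℕ)) : ℚ) from by
      rw [Nat.cast_sub (by omega : 1 ≤ k)]; norm_num]
    rw [show ((u * (t+1) : ℚ)) = (((u*(t+1) : ℕ)) : ℚ) from by push_cast; ring]
    rw [Stmt4.ceil_eq_cdiv _ _ (by omega : 0 < k - 1)]
  set V := H.sup id with hV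
  have hEV : ∀ E ∈ H, E ⊆ V := fun E hE => Finset.le_sup (f := id) hE
  have hSV : ∀ S ∈ Finset.shadow H, S ⊆ V := by
    intro S hS
    rw [Finset.mem_shadow_iff] at hS
    obtain ⟨E, hE, x, _, rfl⟩ := hS
    exact subset_trans (Finset.erase_subset _ _) (hEV E hE)
  have hsized : (H : Set (Finset α)).Sized k := fun E hE => huniform E (Finset.mem_coe.1 hE)
  have hshadow_sized : ∀ S ∈ Finset.shadow H, S.card = k - 1 :=
    fun S hS => hsized.shadow (Finset.mem_coe.2 hS)
  -- double counting
  have hsum1 : ∑ v ∈ V, (H.filter (fun E => v ∈ E)).card = k * H.card := by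
    calc ∑ v ∈ V, (H.filter (fun E => v ∈ E)).card
        = ∑ v ∈ V, ∑ E ∈ H, if v ∈ E then 1 else 0 := by
          exact Finset.sum_congr rfl fun v _ => Finset.card_filter _ _
      _ = ∑ E ∈ H, ∑ v ∈ V, if v ∈ E then 1 else 0 := Finset.sum_comm
      _ = ∑ E ∈ H, E.card := by
          refine Finset.sum_congr rfl fun E hE => ?_
          rw [← Finset.card_filter]
          congr 1
          ext v
          rw [Finset.mem_filter]
          exact ⟨fun h => h.2, fun h => ⟨hEV E hE h, h⟩⟩
      _ = ∑ _E ∈ H, k := Finset.sum_congr rfl huniform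
      _ = k * H.card := by rw [Finset.sum_const, smul_eq_mul, mul_comm]
  have hsum2 : ∑ v ∈ V, ((Finset.shadow H).filter (fun S => v ∈ S)).card
      = (k-1) * (Finset.shadow H).card := by
    calc ∑ v ∈ V, ((Finset.shadow H).filter (fun S => v ∈ S)).card
        = ∑ v ∈ V, ∑ S ∈ Finset.shadow H, if v ∈ S then 1 else 0 := by
          exact Finset.sum_congr rfl fun v _ => Finset.card_filter _ _
      _ = ∑ S ∈ Finset.shadow H, ∑ v ∈ V, if v ∈ S then 1 else 0 := Finset.sum_comm
      _ = ∑ S ∈ Finset.shadow H, S.card := by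
          refine Finset.sum_congr rfl fun S hS => ?_
          rw [← Finset.card_filter]
          congr 1
          ext v
          rw [Finset.mem_filter]
          exact ⟨fun h => h.2, fun h => ⟨hSV S hS h, h⟩⟩
      _ = ∑ _S ∈ Finset.shadow H, (k-1) := Finset.sum_congr rfl hshadow_sized
      _ = (k-1) * (Finset.shadow H).card := by rw [Finset.sum_const, smul_eq_mul, mul_comm]
  -- per-vertex estimate via the link
  have hper : ∀ v : α, (k-1) * (H.filter (fun E => v ∈ E)).card ≤
      (t - k + 2) * ((Finset.shadow H).filter (fun S => v ∈ S)).card := by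
    intro v
    set L := (H.filter (fun E => v ∈ E)).image (fun E => E.erase v) with hL
    have hLcard : L.card = (H.filter (fun E => v ∈ E)).card := by
      apply Finset.card_image_of_injOn
      intro E₁ h₁ E₂ h₂ heq
      rw [Finset.mem_coe, Finset.mem_filter] at h₁ h₂
      have heq' : E₁.erase v = E₂.erase v := heq
      rw [← Finset.insert_erase h₁.2, heq', Finset.insert_erase h₂.2]
    have hLuni : ∀ F ∈ L, F.card = k - 1 := by
      intro F hF
      obtain ⟨E, hE, rfl⟩ := Finset.mem_image.1 hF
      rw [Finset.mem_filter] at hE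
      rw [Finset.card_erase_of_mem hE.2, huniform E hE.1]
    have hLD : L.card ≤ Stmt4.Dbound (k-1) t := by
      rw [hLcard, ← hDeq]; exact hdeg v
    have hkey := Stmt4.key_shadow (k-1) t (by omega) (by omega) L hLuni hLD
    have hshadow_inj : (Finset.shadow L).card ≤
        ((Finset.shadow H).filter (fun S => v ∈ S)).card := by
      have hvnot : ∀ T ∈ Finset.shadow L, v ∉ T := by
        intro T hT
        rw [Finset.mem_shadow_iff] at hT
        obtain ⟨F, hF, u, hu, rfl⟩ := hT
        obtain ⟨E, hE, rfl⟩ := Finset.mem_image.1 hF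
        intro hvT
        exact (Finset.mem_erase.1 (Finset.mem_of_mem_erase hvT)).1 rfl
      apply Finset.card_le_card_of_injOn (fun T => insert v T)
      · intro T hT
        rw [Finset.mem_coe, Finset.mem_shadow_iff] at hT
        obtain ⟨F, hF, u, hu, rfl⟩ := hT
        obtain ⟨E, hE, rfl⟩ := Finset.mem_image.1 hF
        rw [Finset.mem_filter] at hE
        have hu' := Finset.mem_erase.1 hu
        rw [Finset.mem_coe, Finset.mem_filter]
        constructor
        · rw [Finset.mem_shadow_iff]
          refine ⟨E, hE.1, u, hu'.2, ?_⟩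
          rw [Finset.erase_right_comm]
          dsimp only
          rw [Finset.insert_erase (Finset.mem_erase.2 ⟨fun h => hu'.1 h.symm, hE.2⟩)]
        · exact Finset.mem_insert_self _ _
      · intro T₁ h₁ T₂ h₂ heq
        have := congrArg (fun S => Finset.erase S v) heq
        simpa [Finset.erase_insert (hvnot T₁ (Finset.mem_coe.1 h₁)),
          Finset.erase_insert (hvnot T₂ (Finset.mem_coe.1 h₂))] using this
    calc (k-1) * (H.filter (fun E => v ∈ E)).card = (k-1) * L.card := by rw [hLcard]
      _ ≤ (t - (k-1) + 1) * (Finset.shadow L).card := hkey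
      _ = (t - k + 2) * (Finset.shadow L).card := by
          rw [show t - (k-1) + 1 = t - k + 2 from by omega]
      _ ≤ (t - k + 2) * ((Finset.shadow H).filter (fun S => v ∈ S)).card :=
          Nat.mul_le_mul_left _ hshadow_inj
  have hcomb : (k-1) * (k * H.card) ≤ (k-1) * ((t-k+2) * (Finset.shadow H).card) := by
    calc (k-1) * (k * H.card)
        = ∑ v ∈ V, (k-1) * (H.filter (fun E => v ∈ E)).card := by
          rw [← Finset.mul_sum, hsum1]
      _ ≤ ∑ v ∈ V, (t-k+2) * ((Finset.shadow H).filter (fun S => v ∈ S)).card :=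
          Finset.sum_le_sum fun v _ => hper v
      _ = (t-k+2) * ((k-1) * (Finset.shadow H).card) := by rw [← Finset.mul_sum, hsum2]
      _ = (k-1) * ((t-k+2) * (Finset.shadow H).card) := by ring
  exact Nat.le_of_mul_le_mul_left hcomb (by omega)
end

section
/- For all integers t ≥ k ≥ 3 there exists a k-uniform hypergraph H such that the maximum degree of H is at most C(t, k−1) + C(t + 1 − ⌈(t+2)/k⌉, k−2) and |σ(H)|/|H| < k/(t − k + 2), i.e., (t − k + 2)·|σ(H)| < k·|H|. -/
/-!
The complete `k`-graph on `t + 1` vertices has shadow ratio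
`C(t+1,k-1) / C(t+1,k) = k / (t - k + 2)`. Add a cone: an apex joined to every `(k-1)`-subset
of the first `x = t + 2 - ⌈(t+2)/k⌉` base vertices. It brings `C(x,k-1)` new edges but only
`C(x,k-2)` new shadow sets (those through the apex), and `C(x,k-2) / C(x,k-1) = (k-1) / (x-k+2)`
is below `k / (t-k+2)` for this choice of `x`, so the ratio drops strictly. A base vertex gains
degree `C(x-1,k-2)`, and the apex has degree `C(x,k-1) ≤ C(t,k-1)`.
-/

open Finset FinsetFamily

namespace Finset

variable {α : Type*}

lemma notMem_of_mem_powersetCard {s T : Finset α} {a : α} {r : ℕ} (has : a ∉ s)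
    (hT : T ∈ s.powersetCard r) : a ∉ T :=
  notMem_mono (mem_powersetCard.1 hT).1 has

variable [DecidableEq α]

lemma card_filter_mem_powersetCard_le (s : Finset α) (r : ℕ) (v : α) :
    #{E ∈ s.powersetCard r | v ∈ E} ≤ (#s - 1).choose (r - 1) := by
  by_cases hv : v ∈ s
  · calc #{E ∈ s.powersetCard r | v ∈ E}
        ≤ #(((s.erase v).powersetCard (r - 1)).image (insert v)) := by
          refine card_le_card fun E hE => ?_
          rw [mem_filter, mem_powersetCard] at hE
          refine mem_image.2 ⟨E.erase v, mem_powersetCard.2 ⟨erase_subset_erase v hE.1.1, ?_⟩,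
            insert_erase hE.2⟩
          rw [card_erase_of_mem hE.2, hE.1.2]
      _ ≤ (#s - 1).choose (r - 1) := by
          rw [← card_erase_of_mem hv, ← card_powersetCard]
          exact card_image_le
  · rw [filter_false_of_mem fun E hE hvE => hv ((mem_powersetCard.1 hE).1 hvE), card_empty]
    exact Nat.zero_le _

lemma shadow_powersetCard_subset (s : Finset α) (r : ℕ) :
    ∂ (s.powersetCard r) ⊆ s.powersetCard (r - 1) := by
  intro T hT
  obtain ⟨E, hE, w, hw, rfl⟩ := mem_shadow_iff.1 hT
  rw [mem_powersetCard] at hE ⊢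
  exact ⟨(erase_subset w E).trans hE.1, by rw [card_erase_of_mem hw, hE.2]⟩

lemma shadow_union (𝒜 ℬ : Finset (Finset α)) : ∂ (𝒜 ∪ ℬ) = ∂ 𝒜 ∪ ∂ ℬ :=
  sup_union

variable {𝒜 : Finset (Finset α)} {a : α}

lemma card_image_insert (ha : ∀ T ∈ 𝒜, a ∉ T) : #(𝒜.image (insert a)) = #𝒜 :=
  card_image_of_injOn fun T hT T' hT' h => by
    rw [← erase_insert (ha T hT), ← erase_insert (ha T' hT')]
    exact congrArg (erase · a) h

lemma card_filter_mem_image_insert_le {v : α} (hv : v ≠ a) :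
    #{E ∈ 𝒜.image (insert a) | v ∈ E} ≤ #{T ∈ 𝒜 | v ∈ T} := by
  rw [filter_image]
  refine card_image_le.trans_eq ?_
  simp only [mem_insert, hv, false_or]

lemma shadow_image_insert_subset (ha : ∀ T ∈ 𝒜, a ∉ T) :
    ∂ (𝒜.image (insert a)) ⊆ 𝒜 ∪ (∂ 𝒜).image (insert a) := by
  intro S hS
  obtain ⟨_, hE, w, hw, rfl⟩ := mem_shadow_iff.1 hS
  obtain ⟨T, hT, rfl⟩ := mem_image.1 hE
  rcases eq_or_ne w a with rfl | hwa
  · exact mem_union_left _ (by rwa [erase_insert (ha T hT)])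
  · refine mem_union_right _ (mem_image.2 ⟨T.erase w, erase_mem_shadow hT ?_, ?_⟩)
    · exact (mem_insert.1 hw).resolve_left hwa
    · rw [erase_insert_of_ne hwa.symm]

end Finset

lemma mul_choose_lt_mul_choose_succ {p q n r : ℕ} (h : p * (r + 1) < q * (n - r)) :
    p * n.choose r < q * n.choose (r + 1) := by
  have hr : r < n := Nat.lt_of_sub_pos (Nat.pos_of_mul_pos_left (Nat.zero_lt_of_lt h))
  refine Nat.lt_of_mul_lt_mul_right (a := r + 1) ?_
  calc p * n.choose r * (r + 1) = p * (r + 1) * n.choose r := by ring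
    _ < q * (n - r) * n.choose r := Nat.mul_lt_mul_of_pos_right h (Nat.choose_pos hr.le)
    _ = q * n.choose (r + 1) * (r + 1) := by
        rw [mul_assoc, mul_comm (n - r), ← Nat.choose_succ_right_eq, mul_assoc]

lemma le_ceil_div_mul_lt_add {K : Type*} [Field K] [LinearOrder K] [IsStrictOrderedRing K]
    [FloorSemiring K] (n k : ℕ) (hk : 0 < k) :
    n ≤ ⌈(n : K) / k⌉₊ * k ∧ ⌈(n : K) / k⌉₊ * k < n + k := by
  have hkK : (0 : K) < k := by exact_mod_cast hk
  constructor
  · exact_mod_cast (div_le_iff₀ hkK).1 (Nat.le_ceil ((n : K) / k))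
  · have h := mul_lt_mul_of_pos_right (Nat.ceil_lt_add_one (by positivity : (0 : K) ≤ n / k)) hkK
    rw [add_mul, one_mul, div_mul_cancel₀ _ hkK.ne'] at h
    exact_mod_cast h

section ConeExtension

variable {α : Type*} [DecidableEq α]

def coneExtension (U s : Finset α) (a : α) (k : ℕ) : Finset (Finset α) :=
  U.powersetCard k ∪ (s.powersetCard (k - 1)).image (insert a)

variable {U s : Finset α} {a : α} {k : ℕ}

lemma card_of_mem_coneExtension (has : a ∉ s) (hk : 1 ≤ k) {E : Finset α}
    (hE : E ∈ coneExtension U s a k) : #E = k := by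
  rcases mem_union.1 hE with hE | hE
  · exact (mem_powersetCard.1 hE).2
  · obtain ⟨T, hT, rfl⟩ := mem_image.1 hE
    rw [card_insert_of_notMem (notMem_of_mem_powersetCard has hT), (mem_powersetCard.1 hT).2]
    omega

lemma card_coneExtension (hsU : s ⊆ U) (haU : a ∉ U) :
    #(coneExtension U s a k) = (#U).choose k + (#s).choose (k - 1) := by
  have hdisj : Disjoint (U.powersetCard k) ((s.powersetCard (k - 1)).image (insert a)) :=
    disjoint_left.2 fun _ hA hB => by
      obtain ⟨T, _, rfl⟩ := mem_image.1 hB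
      exact haU ((mem_powersetCard.1 hA).1 (mem_insert_self a T))
  rw [coneExtension, card_union_of_disjoint hdisj,
    card_image_insert fun _ => notMem_of_mem_powersetCard (notMem_mono hsU haU),
    card_powersetCard, card_powersetCard]

lemma card_shadow_coneExtension_le (hsU : s ⊆ U) (has : a ∉ s) :
    #(∂ (coneExtension U s a k)) ≤ (#U).choose (k - 1) + (#s).choose (k - 2) := by
  have hsub : ∂ (coneExtension U s a k) ⊆
      U.powersetCard (k - 1) ∪ (s.powersetCard (k - 2)).image (insert a) := by
    rw [coneExtension, shadow_union]
    refine union_subset ((shadow_powersetCard_subset U k).trans subset_union_left)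
      ((shadow_image_insert_subset fun _ => notMem_of_mem_powersetCard has).trans
        (union_subset_union (powersetCard_mono hsU) (image_subset_image ?_)))
    exact shadow_powersetCard_subset s (k - 1)
  calc #(∂ (coneExtension U s a k))
      ≤ #(U.powersetCard (k - 1)) + #((s.powersetCard (k - 2)).image (insert a)) :=
        (card_le_card hsub).trans (card_union_le _ _)
    _ ≤ (#U).choose (k - 1) + (#s).choose (k - 2) := by
        rw [card_powersetCard, ← card_powersetCard (k - 2) s]
        exact Nat.add_le_add_left card_image_le _

lemma card_filter_mem_coneExtension_le (haU : a ∉ U) (hs : #s < #U) (v : α) :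
    #{E ∈ coneExtension U s a k | v ∈ E} ≤ (#U - 1).choose (k - 1) + (#s - 1).choose (k - 2) := by
  rw [coneExtension, filter_union]
  refine (card_union_le _ _).trans ?_
  rcases eq_or_ne v a with rfl | hva
  · rw [filter_false_of_mem fun E hE hvE => haU ((mem_powersetCard.1 hE).1 hvE), card_empty,
      zero_add]
    calc #{E ∈ (s.powersetCard (k - 1)).image (insert v) | v ∈ E}
        ≤ (#s).choose (k - 1) := (card_filter_le _ _).trans (card_image_le.trans_eq
          (card_powersetCard _ _))
      _ ≤ (#U - 1).choose (k - 1) := Nat.choose_le_choose _ (by omega)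
      _ ≤ _ := Nat.le_add_right _ _
  · exact Nat.add_le_add (card_filter_mem_powersetCard_le U k v)
      ((card_filter_mem_image_insert_le hva).trans (card_filter_mem_powersetCard_le s (k - 1) v))

lemma mul_card_shadow_coneExtension_lt (hsU : s ⊆ U) (haU : a ∉ U) (hk : 2 ≤ k)
    (h : (#U - (k - 1)) * (k - 1) < k * (#s - (k - 2))) :
    (#U - (k - 1)) * #(∂ (coneExtension U s a k)) < k * #(coneExtension U s a k) := by
  have hk' : k - 2 + 1 = k - 1 := by omega
  have hU : (#U - (k - 1)) * (#U).choose (k - 1) = k * (#U).choose k := by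
    rw [mul_comm, ← Nat.choose_succ_right_eq, Nat.sub_add_cancel (by omega), mul_comm]
  have hs : (#U - (k - 1)) * (#s).choose (k - 2) < k * (#s).choose (k - 1) := by
    rw [← hk'] at h ⊢
    exact mul_choose_lt_mul_choose_succ h
  calc (#U - (k - 1)) * #(∂ (coneExtension U s a k))
      ≤ (#U - (k - 1)) * ((#U).choose (k - 1) + (#s).choose (k - 2)) :=
        Nat.mul_le_mul_left _ (card_shadow_coneExtension_le hsU (notMem_mono hsU haU))
    _ < k * (#U).choose k + k * (#s).choose (k - 1) := by
        rw [mul_add, hU]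
        exact Nat.add_lt_add_left hs _
    _ = k * #(coneExtension U s a k) := by rw [card_coneExtension hsU haU, mul_add]

end ConeExtension

/-- For all integers `t ≥ k ≥ 3` there exists a `k`-uniform hypergraph `H` with maximum
degree at most `C(t,k−1) + C(t+1−⌈(t+2)/k⌉, k−2)` and `(t − k + 2)·|σ(H)| < k·|H|`. -/
theorem stmt_5 (t k : ℕ) (hk : 3 ≤ k) (htk : k ≤ t) :
    ∃ H : Finset (Finset ℕ),
      (∀ E ∈ H, E.card = k) ∧
      (∀ v : ℕ, (H.filter (fun E => v ∈ E)).card ≤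
        Nat.choose t (k - 1) +
          Nat.choose (t + 1 - ⌈((t : ℚ) + 2) / (k : ℚ)⌉₊) (k - 2)) ∧
      (t - k + 2) * (Finset.shadow H).card < k * H.card := by
  set m := ⌈((t : ℚ) + 2) / (k : ℚ)⌉₊
  obtain ⟨hm_lo, hm_hi⟩ : t + 2 ≤ m * k ∧ m * k < t + 2 + k := by
    simpa using le_ceil_div_mul_lt_add (K := ℚ) (t + 2) k (by omega)
  have hm : 2 ≤ m := by nlinarith
  have hmk : m + k ≤ t + 4 := by nlinarith
  have hkey : (t + 1 - (k - 1)) * (k - 1) < k * (t + 2 - m - (k - 2)) := by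
    zify [show k - 1 ≤ t + 1 by omega, show k - 2 ≤ t + 2 - m by omega, show m ≤ t + 2 by omega,
      show 2 ≤ k by omega, show 1 ≤ k by omega]
    nlinarith
  have has : t + 1 ∉ range (t + 2 - m) := by simp; omega
  refine ⟨coneExtension (range (t + 1)) (range (t + 2 - m)) (t + 1) k,
    fun E => card_of_mem_coneExtension has (by omega), fun v => ?_, ?_⟩
  · simpa [show t + 2 - m - 1 = t + 1 - m by omega] using
      card_filter_mem_coneExtension_le (U := range (t + 1)) (s := range (t + 2 - m))
        (k := k) notMem_range_self (by simp; omega) v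
  · have := mul_card_shadow_coneExtension_lt (U := range (t + 1)) (s := range (t + 2 - m))
      (k := k) (range_subset_range.2 (by omega)) notMem_range_self (by omega) (by simpa using hkey)
    rwa [card_range, show t + 1 - (k - 1) = t - k + 2 by omega] at this
end

section
/- Let k be a positive integer, x ≥ k a real number, and let H be a nonempty k-uniform hypergraph with |H| ≤ C(x, k) = x(x−1)···(x−k+1)/k!. Then |σ(H)|/|H| ≥ k/(x − k + 1), i.e., (x − k + 1)·|σ(H)| ≥ k·|H|. -/
open Finset UV
open scoped FinsetFamily

namespace StmtAux

noncomputable def B (k : ℕ) (x : ℝ) : ℝ := (∏ i ∈ Finset.range k, (x - i)) / (Nat.factorial k : ℝ)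

lemma prod_shift (k : ℕ) (x : ℝ) :
    ∏ i ∈ range (k+1), (x - i) = x * ∏ i ∈ range k, ((x-1) - i) := by
  rw [Finset.prod_range_succ']
  simp only [Nat.cast_zero, sub_zero]
  rw [mul_comm]
  congr 1
  apply Finset.prod_congr rfl
  intro i _
  push_cast
  ring

lemma fact_eq_prod (k : ℕ) : ((Nat.factorial k : ℝ)) = ∏ i ∈ range k, ((k : ℝ) - i) := by
  induction k with
  | zero => simp
  | succ n ih =>
    rw [prod_shift]
    push_cast
    simp only [add_sub_cancel_right]
    rw [← ih, Nat.factorial_succ]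
    push_cast; ring

lemma B_one_le {k : ℕ} {x : ℝ} (hx : (k:ℝ) ≤ x) : 1 ≤ B k x := by
  rw [B, le_div_iff₀ (by positivity), one_mul, fact_eq_prod]
  apply Finset.prod_le_prod
  · intro i hi
    rw [mem_range] at hi
    have : (i:ℝ) + 1 ≤ (k:ℝ) := by exact_mod_cast hi
    linarith
  · intro i hi; rw [mem_range] at hi; linarith [hx]

lemma B_nonneg {k : ℕ} {x : ℝ} (hx : (k:ℝ) - 1 ≤ x) : 0 ≤ B k x := by
  rw [B]
  apply div_nonneg _ (by positivity)
  apply Finset.prod_nonneg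
  intro i hi
  rw [mem_range] at hi
  have : (i:ℝ) ≤ (k:ℝ) - 1 := by
    have : (i:ℝ) + 1 ≤ (k:ℝ) := by exact_mod_cast hi
    linarith
  linarith

lemma B_mono {k : ℕ} {a b : ℝ} (ha : (k:ℝ) - 1 ≤ a) (hab : a ≤ b) : B k a ≤ B k b := by
  rw [B, B]
  apply div_le_div_of_nonneg_right _ (by positivity : (0:ℝ) ≤ Nat.factorial k)
  apply Finset.prod_le_prod
  · intro i hi
    rw [mem_range] at hi
    have : (i:ℝ) + 1 ≤ (k:ℝ) := by exact_mod_cast hi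
    linarith
  · intro i hi
    linarith

lemma B_self (k : ℕ) : B k k = 1 := by
  rw [B, ← fact_eq_prod, div_self (by positivity)]

lemma B_pascal (k : ℕ) (x : ℝ) : B (k+1) x = B (k+1) (x-1) + B k (x-1) := by
  rw [B, B, B, prod_shift, Finset.prod_range_succ]
  have h1 : (Nat.factorial (k+1) : ℝ) = (k+1) * Nat.factorial k := by
    rw [Nat.factorial_succ]; push_cast; ring
  rw [h1]
  have h2 : ((Nat.factorial k : ℝ)) ≠ 0 := by positivity
  field_simp
  push_cast
  ring

lemma B_ratio (k : ℕ) (x : ℝ) : (k+1 : ℝ) * B (k+1) x = (x - k) * B k x := by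
  rw [B, B, Finset.prod_range_succ, Nat.factorial_succ]
  push_cast
  have h2 : ((Nat.factorial k : ℝ)) ≠ 0 := by positivity
  field_simp

lemma B_shift (k : ℕ) (x : ℝ) : B (k+1) x = x / (k+1) * B k (x-1) := by
  rw [B, B, prod_shift, Nat.factorial_succ]
  have h2 : ((Nat.factorial k : ℝ)) ≠ 0 := by positivity
  push_cast
  field_simp

lemma B_cont (k : ℕ) : Continuous (B k) := by
  unfold B
  fun_prop


/-- family measure: sum of all elements of all member sets -/
def mu (𝒜 : Finset (Finset ℕ)) : ℕ := ∑ A ∈ 𝒜, ∑ a ∈ A, a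

def IsShifted (𝒜 : Finset (Finset ℕ)) : Prop :=
  ∀ A ∈ 𝒜, ∀ j ∈ A, ∀ i < j, i ∉ A → insert i (A.erase j) ∈ 𝒜

lemma compress_singleton {i j : ℕ} {A : Finset ℕ} (hj : j ∈ A) (hi : i ∉ A) :
    UV.compress {i} {j} A = insert i (A.erase j) := by
  rw [UV.compress]
  rw [if_pos ⟨by simpa using hi, by simpa using hj⟩]
  ext x
  simp [Finset.mem_sdiff, Finset.mem_union, Finset.mem_insert, Finset.mem_erase]
  aesop

lemma mu_compression_lt {i j : ℕ} (hij : i < j) (𝒜 : Finset (Finset ℕ))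
    (hne : 𝓒 {i} {j} 𝒜 ≠ 𝒜) : mu (𝓒 {i} {j} 𝒜) < mu 𝒜 := by
  set u : Finset ℕ := {i}
  set v : Finset ℕ := {j}
  have q : ∀ Q ∈ {A ∈ 𝒜 | UV.compress u v A ∉ 𝒜}, UV.compress u v Q ≠ Q := by
    simp_rw [mem_filter]
    intro Q hQ h
    rw [h] at hQ
    exact hQ.2 hQ.1
  have uA : {A ∈ 𝒜 | UV.compress u v A ∈ 𝒜} ∪ {A ∈ 𝒜 | UV.compress u v A ∉ 𝒜} = 𝒜 :=
    filter_union_filter_not_eq _ _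
  have ne₂ : {A ∈ 𝒜 | UV.compress u v A ∉ 𝒜}.Nonempty := by
    refine nonempty_iff_ne_empty.2 fun z ↦ hne ?_
    rw [UV.compression, filter_image, z, image_empty, union_empty]
    rwa [z, union_empty] at uA
  rw [mu, mu, UV.compression, sum_union UV.compress_disjoint]
  conv_rhs => rw [← uA]
  rw [sum_union (disjoint_filter_filter_not _ _ _), add_lt_add_iff_left, filter_image,
    sum_image UV.compress_injOn]
  refine sum_lt_sum_of_nonempty ne₂ fun A hA ↦ ?_
  have hA' := q A hA
  -- compress fired, so i ∉ A, j ∈ A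
  by_cases hcond : j ∈ A ∧ i ∉ A
  · rw [compress_singleton hcond.1 hcond.2]
    have hij' : i ∉ A.erase j := fun h ↦ hcond.2 (Finset.mem_of_mem_erase h)
    rw [Finset.sum_insert hij']
    have : ∑ a ∈ A.erase j, a + j = ∑ a ∈ A, a := Finset.sum_erase_add _ _ hcond.1
    omega
  · exfalso
    apply hA'
    rw [UV.compress]
    rw [if_neg]
    intro ⟨h1, h2⟩
    apply hcond
    constructor
    · simpa [v] using h2
    · simpa [u, Finset.disjoint_left] using h1

lemma exists_shifted (k : ℕ) (𝒜 : Finset (Finset ℕ)) (hu : ∀ A ∈ 𝒜, A.card = k) :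
    ∃ ℬ : Finset (Finset ℕ), (∂ ℬ).card ≤ (∂ 𝒜).card ∧ ℬ.card = 𝒜.card ∧
      (∀ A ∈ ℬ, A.card = k) ∧ IsShifted ℬ := by
  by_cases hsh : IsShifted 𝒜
  · exact ⟨𝒜, le_rfl, rfl, hu, hsh⟩
  · simp only [IsShifted, not_forall] at hsh
    obtain ⟨A, hA, j, hj, i, hij, hi, hins⟩ := hsh
    set ℬ := 𝓒 {i} {j} 𝒜 with hB
    have hBne : ℬ ≠ 𝒜 := by
      intro h
      apply hins
      have : UV.compress {i} {j} A ∈ ℬ := UV.compress_mem_compression hA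
      rw [h, compress_singleton hj hi] at this
      exact this
    have hmu : mu ℬ < mu 𝒜 := mu_compression_lt hij 𝒜 hBne
    have hu' : ∀ A ∈ ℬ, A.card = k := by
      intro A hA
      exact (Set.Sized.uvCompression (by simp) (fun B hB => hu B hB)) hA
    obtain ⟨𝒞, h1, h2, h3, h4⟩ := exists_shifted k ℬ hu'
    refine ⟨𝒞, h1.trans ?_, h2.trans ?_, h3, h4⟩
    · apply UV.card_shadow_compression_le
      intro x hx
      simp only [Finset.mem_singleton] at hx
      subst hx
      exact ⟨j, by simp, by simpa using UV.isCompressed_self ∅ _⟩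
    · exact UV.card_compression _ _ _
termination_by mu 𝒜


def ShAbove (t : ℕ) (𝒜 : Finset (Finset ℕ)) : Prop :=
  (∀ A ∈ 𝒜, ∀ a ∈ A, t ≤ a) ∧
  ∀ A ∈ 𝒜, ∀ j ∈ A, ∀ i, t ≤ i → i < j → i ∉ A → insert i (A.erase j) ∈ 𝒜

theorem lovasz (k t : ℕ) (x : ℝ) (𝒜 : Finset (Finset ℕ))
    (hx : (k:ℝ) + 1 ≤ x) (hu : ∀ A ∈ 𝒜, A.card = k + 1)
    (hs : ShAbove t 𝒜) (hne : 𝒜.Nonempty) (hm : B (k+1) x ≤ (𝒜.card : ℝ)) :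
    B k x ≤ ((∂ 𝒜).card : ℝ) := by
  match k with
  | 0 =>
    -- shadow contains ∅
    have : (∅ : Finset ℕ) ∈ ∂ 𝒜 := by
      obtain ⟨A, hA⟩ := hne
      have hcard := hu A hA
      obtain ⟨a, ha⟩ := Finset.card_eq_one.1 hcard
      subst ha
      have := Finset.erase_mem_shadow hA (Finset.mem_singleton_self a)
      simpa using this
    have h1 : 1 ≤ (∂ 𝒜).card := Finset.card_pos.2 ⟨∅, this⟩
    have : B 0 x = 1 := by simp [B]
    rw [this]
    exact_mod_cast h1
  | k + 1 =>
    -- r = k + 2 uniform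
    set 𝒜t := 𝒜.filter (fun A => t ∈ A) with h𝒜t
    set 𝒜₀ := 𝒜.filter (fun A => t ∉ A) with h𝒜₀
    set L := 𝒜t.image (fun A => A.erase t) with hL
    -- L members avoid t
    have hLfree : ∀ C ∈ L, t ∉ C := by
      intro C hC
      rw [hL, Finset.mem_image] at hC
      obtain ⟨A, _, rfl⟩ := hC
      exact Finset.notMem_erase _ _
    have hLcard : L.card = 𝒜t.card := by
      apply Finset.card_image_of_injOn
      intro A hA B hB hAB
      simp only [Finset.coe_filter, Set.mem_setOf_eq, h𝒜t] at hA hB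
      obtain hA := hA; obtain hB := hB
      have : insert t (A.erase t) = insert t (B.erase t) :=
        congrArg (insert t) hAB
      rwa [Finset.insert_erase hA.2, Finset.insert_erase hB.2] at this
    have hsplit : 𝒜₀.card + L.card = 𝒜.card := by
      rw [hLcard, add_comm]
      exact Finset.card_filter_add_card_filter_not (p := fun A => t ∈ A)
    -- L is (k+1)-uniform
    have hLu : ∀ C ∈ L, C.card = k + 1 := by
      intro C hC
      rw [hL, Finset.mem_image] at hC
      obtain ⟨A, hA, rfl⟩ := hC
      rw [h𝒜t, Finset.mem_filter] at hA
      rw [Finset.card_erase_of_mem hA.2, hu A hA.1]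
      omega
    -- L is shifted above t+1
    have hLs : ShAbove (t+1) L := by
      constructor
      · intro C hC a ha
        rw [hL, Finset.mem_image] at hC
        obtain ⟨A, hA, rfl⟩ := hC
        rw [h𝒜t, Finset.mem_filter] at hA
        have h1 := hs.1 A hA.1 a (Finset.mem_of_mem_erase ha)
        have h2 := (Finset.mem_erase.1 ha).1
        omega
      · intro C hC j hj i hti hij hiC
        rw [hL, Finset.mem_image] at hC
        obtain ⟨A, hA, rfl⟩ := hC
        rw [h𝒜t, Finset.mem_filter] at hA
        have hjA : j ∈ A := Finset.mem_of_mem_erase hj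
        have hjt : j ≠ t := (Finset.mem_erase.1 hj).1
        have hiA : i ∉ A := by
          intro h
          apply hiC
          rw [Finset.mem_erase]
          exact ⟨by omega, h⟩
        have := hs.2 A hA.1 j hjA i (by omega) hij hiA
        rw [hL, Finset.mem_image]
        refine ⟨insert i (A.erase j), Finset.mem_filter.2 ⟨this, ?_⟩, ?_⟩
        · rw [Finset.mem_insert, Finset.mem_erase]
          right
          exact ⟨Ne.symm hjt, hA.2⟩
        · rw [Finset.erase_insert_of_ne (by omega)]
          ext y
          simp only [Finset.mem_insert, Finset.mem_erase]
          constructor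
          · rintro (rfl | ⟨h1, h2, h3⟩)
            · exact Or.inl rfl
            · exact Or.inr ⟨h2, h1, h3⟩
          · rintro (rfl | ⟨h1, h2, h3⟩)
            · exact Or.inl rfl
            · exact Or.inr ⟨h2, h1, h3⟩
    -- L nonempty
    have hLne : L.Nonempty := by
      obtain ⟨A, hA⟩ := hne
      by_cases ht : t ∈ A
      · exact ⟨A.erase t, Finset.mem_image.2 ⟨A, Finset.mem_filter.2 ⟨hA, ht⟩, rfl⟩⟩
      · have hAne : A.Nonempty := by
          rw [← Finset.card_pos, hu A hA]; omega
        obtain ⟨u, hup⟩ := hAne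
        have htu : t < u := by
          have := hs.1 A hA u hup
          rcases Nat.lt_or_ge t u with h | h
          · exact h
          · exfalso; apply ht; have : t = u := by omega
            rwa [this]
        have hmem := hs.2 A hA u hup t le_rfl htu ht
        refine ⟨(insert t (A.erase u)).erase t, Finset.mem_image.2
          ⟨insert t (A.erase u), Finset.mem_filter.2 ⟨hmem, Finset.mem_insert_self _ _⟩, rfl⟩⟩
    -- L ⊆ ∂𝒜
    have hLsub : L ⊆ ∂ 𝒜 := by
      intro C hC
      rw [hL, Finset.mem_image] at hC
      obtain ⟨A, hA, rfl⟩ := hC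
      rw [h𝒜t, Finset.mem_filter] at hA
      exact Finset.erase_mem_shadow hA.1 hA.2
    -- insert t '' ∂L ⊆ ∂𝒜
    have hIns : (∂ L).image (insert t) ⊆ ∂ 𝒜 := by
      intro S hS
      rw [Finset.mem_image] at hS
      obtain ⟨BB, hBB, rfl⟩ := hS
      rw [Finset.mem_shadow_iff] at hBB
      obtain ⟨C, hC, u, hu', rfl⟩ := hBB
      rw [hL, Finset.mem_image] at hC
      obtain ⟨A, hA, rfl⟩ := hC
      rw [h𝒜t, Finset.mem_filter] at hA
      have hut : u ≠ t := (Finset.mem_erase.1 hu').1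
      have : insert t ((A.erase t).erase u) = A.erase u := by
        rw [Finset.erase_right_comm, Finset.insert_erase]
        rw [Finset.mem_erase]
        exact ⟨Ne.symm hut, hA.2⟩
      rw [this]
      exact Finset.erase_mem_shadow hA.1 (Finset.mem_of_mem_erase hu')
    -- shadow lower bound : #∂𝒜 ≥ #L + #∂L
    have hshadow : (L.card : ℝ) + ((∂ L).card : ℝ) ≤ ((∂ 𝒜).card : ℝ) := by
      have hdisj : Disjoint L ((∂ L).image (insert t)) := by
        rw [Finset.disjoint_left]
        intro C hC hC'
        rw [Finset.mem_image] at hC'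
        obtain ⟨BB, _, rfl⟩ := hC'
        exact hLfree _ hC (Finset.mem_insert_self _ _)
      have hicard : ((∂ L).image (insert t)).card = (∂ L).card := by
        apply Finset.card_image_of_injOn
        intro C1 h1 C2 h2 h12
        have hfree : ∀ C ∈ ∂ L, t ∉ C := by
          intro C hC
          obtain ⟨D, hD, hsub⟩ := Finset.exists_subset_of_mem_shadow hC
          exact fun h => hLfree D hD (hsub h)
        have e1 : (insert t C1).erase t = C1 := Finset.erase_insert (hfree C1 h1)
        have e2 : (insert t C2).erase t = C2 := Finset.erase_insert (hfree C2 h2)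
        rw [← e1, ← e2, h12]
      have hsub2 : L ∪ (∂ L).image (insert t) ⊆ ∂ 𝒜 := Finset.union_subset hLsub hIns
      have := Finset.card_le_card hsub2
      rw [Finset.card_union_of_disjoint hdisj, hicard] at this
      exact_mod_cast this
    -- Frankl: ∂𝒜₀ ⊆ L
    have hFrankl : ∂ 𝒜₀ ⊆ L := by
      intro C hC
      rw [Finset.mem_shadow_iff] at hC
      obtain ⟨A, hA, u, hu', rfl⟩ := hC
      rw [h𝒜₀, Finset.mem_filter] at hA
      have htu : t < u := by
        have h1 := hs.1 A hA.1 u hu'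
        rcases Nat.lt_or_ge t u with h | h
        · exact h
        · exfalso; apply hA.2; have : t = u := by omega
          rwa [this]
      have hmem := hs.2 A hA.1 u hu' t le_rfl htu hA.2
      rw [hL, Finset.mem_image]
      refine ⟨insert t (A.erase u), Finset.mem_filter.2 ⟨hmem, Finset.mem_insert_self _ _⟩, ?_⟩
      rw [Finset.erase_insert]
      rw [Finset.mem_erase]
      rintro ⟨-, h⟩
      exact hA.2 h
    -- Case split
    by_cases hcase : B (k+1) (x-1) ≤ (L.card : ℝ)
    · -- Case 1
      have hxL : (k:ℝ) + 1 ≤ x - 1 := by push_cast at hx ⊢; linarith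
      have ihL := lovasz k (t+1) (x-1) L hxL hLu hLs hLne hcase
      have : B (k+1) x = B (k+1) (x-1) + B k (x-1) := B_pascal k x
      rw [this]
      calc B (k+1) (x-1) + B k (x-1) ≤ (L.card : ℝ) + ((∂ L).card : ℝ) := by
            exact add_le_add hcase ihL
        _ ≤ ((∂ 𝒜).card : ℝ) := hshadow
    · -- Case 2 : derive contradiction
      exfalso
      push_neg at hcase
      have hd0 : (0:ℝ) ≤ (L.card : ℝ) := by positivity
      -- 𝒜₀ nonempty
      have h𝒜₀ne : 𝒜₀.Nonempty := by
        rw [← Finset.card_pos]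
        by_contra h
        push_neg at h
        have h𝒜₀card : 𝒜₀.card = 0 := by omega
        have hAcard : (𝒜.card : ℝ) = (L.card : ℝ) := by
          rw [← hsplit, h𝒜₀card]; norm_num
        have hB2 : B (k+1) (x-1) ≤ B (k+2) x := by
          have hx1 : (1:ℝ) ≤ x / ((k:ℝ)+1+1) := by
            rw [le_div_iff₀ (by positivity)]
            push_cast at hx ⊢
            linarith
          have hBnn : 0 ≤ B (k+1) (x-1) := B_nonneg (by push_cast at hx ⊢; linarith)
          calc B (k+1) (x-1) = 1 * B (k+1) (x-1) := (one_mul _).symm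
            _ ≤ x / ((k:ℝ)+1+1) * B (k+1) (x-1) := by
                apply mul_le_mul_of_nonneg_right hx1 hBnn
            _ = B (k+2) x := by rw [B_shift (k+1) x]; push_cast; ring_nf
        have hmm := hm
        rw [hAcard] at hmm
        have : B (k+1) (x-1) ≤ (L.card : ℝ) := le_trans hB2 hmm
        linarith
      -- apply induction to 𝒜₀ with parameter y = max (x-1) (k+2)
      set y := max (x-1) ((k:ℝ)+2) with hy
      have h𝒜₀u : ∀ A ∈ 𝒜₀, A.card = k + 2 := by
        intro A hA
        rw [h𝒜₀, Finset.mem_filter] at hA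
        have := hu A hA.1; omega
      have h𝒜₀s : ShAbove (t+1) 𝒜₀ := by
        constructor
        · intro A hA a ha
          rw [h𝒜₀, Finset.mem_filter] at hA
          have h1 := hs.1 A hA.1 a ha
          have : a ≠ t := fun h => hA.2 (h ▸ ha)
          omega
        · intro A hA j hj i hti hij hiA
          rw [h𝒜₀, Finset.mem_filter] at hA
          have := hs.2 A hA.1 j hj i (by omega) hij hiA
          rw [h𝒜₀, Finset.mem_filter]
          refine ⟨this, ?_⟩
          rw [Finset.mem_insert, Finset.mem_erase]
          rintro (rfl | ⟨-, h⟩)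
          · omega
          · exact hA.2 h
      have hxy : (k:ℝ) + 1 + 1 ≤ y := by
        rw [hy]
        push_cast
        exact le_max_of_le_right (by linarith)
      have hmy : B (k+2) y ≤ (𝒜₀.card : ℝ) := by
        rcases le_total ((k:ℝ)+2) (x-1) with h | h
        · have hymax : y = x - 1 := max_eq_left h
          rw [hymax]
          -- B (k+2) (x-1) = B (k+2) x - B (k+1) (x-1) ≤ #𝒜 - #L = #𝒜₀
          have hp := B_pascal (k+1) x
          have hA0 : (𝒜₀.card : ℝ) = (𝒜.card : ℝ) - (L.card : ℝ) := by
            rw [← hsplit]; push_cast; ring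
          rw [hA0]
          push_cast at hp ⊢
          linarith [hm, hcase.le]
        · have hymax : y = (k:ℝ)+2 := max_eq_right h
          rw [hymax]
          have : ((k:ℝ)+2) = ((k+2 : ℕ) : ℝ) := by push_cast; ring
          rw [this, B_self]
          have := Finset.card_pos.2 h𝒜₀ne
          exact_mod_cast this
      have h𝒜₀lt : 𝒜₀.card < 𝒜.card := by
        have hL1 : 1 ≤ L.card := Finset.card_pos.2 hLne
        omega
      have ih := lovasz (k+1) (t+1) y 𝒜₀ (by push_cast at hxy ⊢; linarith) h𝒜₀u h𝒜₀s h𝒜₀ne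
        (by push_cast at hmy ⊢; linarith [hmy])
      -- ih : B (k+1) y ≤ #∂𝒜₀ ≤ #L < B (k+1) (x-1) ≤ B (k+1) y
      have h1 : ((∂ 𝒜₀).card : ℝ) ≤ (L.card : ℝ) := by
        exact_mod_cast Finset.card_le_card hFrankl
      have h2 : B (k+1) (x-1) ≤ B (k+1) y := by
        apply B_mono _ (le_max_left _ _)
        push_cast at hx ⊢
        linarith
      linarith
termination_by (k, 𝒜.card)
decreasing_by
  · exact Prod.Lex.left _ _ (by omega)
  · exact Prod.Lex.right _ h𝒜₀lt


/-- transferred Lovász over arbitrary type -/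
theorem lovasz_gen {α : Type*} [DecidableEq α] (k : ℕ) (x : ℝ)
    (H : Finset (Finset α)) (hx : (k:ℝ) + 1 ≤ x) (hu : ∀ A ∈ H, A.card = k + 1)
    (hne : H.Nonempty) (hm : B (k+1) x ≤ (H.card : ℝ)) :
    B k x ≤ ((∂ H).card : ℝ) := by
  classical
  -- support
  set s : Finset α := H.sup id with hsupp
  have hsub : ∀ A ∈ H, A ⊆ s := fun A hA => Finset.le_sup (f := id) hA
  obtain ⟨f, hfinj⟩ : ∃ f : α → ℕ, Set.InjOn f ↑s := by
    refine ⟨fun a => if h : a ∈ s then (s.equivFin ⟨a, h⟩ : ℕ) else 0, ?_⟩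
    intro a ha b hb hab
    rw [Finset.mem_coe] at ha hb
    simp only [dif_pos ha, dif_pos hb] at hab
    have := s.equivFin.injective (Fin.val_injective hab)
    simpa using this
  set F : Finset α → Finset ℕ := fun A => A.image f with hF
  set H' : Finset (Finset ℕ) := H.image F with hH'
  have hinjA : ∀ A ∈ H, ∀ B ∈ H, F A = F B → A = B := by
    intro A hA B hB hAB
    apply Finset.Subset.antisymm
    · intro a ha
      have : f a ∈ F B := hAB ▸ Finset.mem_image_of_mem f ha
      obtain ⟨b, hb, hfb⟩ := Finset.mem_image.1 this
      have : b = a := hfinj (hsub B hB hb) (hsub A hA ha) hfb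
      exact this ▸ hb
    · intro b hb
      have : f b ∈ F A := hAB ▸ Finset.mem_image_of_mem f hb
      obtain ⟨a, ha, hfa⟩ := Finset.mem_image.1 this
      have : a = b := hfinj (hsub A hA ha) (hsub B hB hb) hfa
      exact this ▸ ha
  have hcard' : H'.card = H.card := Finset.card_image_of_injOn hinjA
  have hu' : ∀ A' ∈ H', A'.card = k + 1 := by
    intro A' hA'
    obtain ⟨A, hA, rfl⟩ := Finset.mem_image.1 hA'
    rw [hF]
    rw [Finset.card_image_of_injOn (hfinj.mono (by exact_mod_cast hsub A hA))]
    exact hu A hA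
  have hne' : H'.Nonempty := hne.image F
  have hm' : B (k+1) x ≤ (H'.card : ℝ) := by rw [hcard']; exact hm
  have h1 : B k x ≤ ((∂ H').card : ℝ) := by
    obtain ⟨ℬ, hb1, hb2, hb3, hb4⟩ := exists_shifted (k+1) H' hu'
    have hbs : ShAbove 0 ℬ := ⟨fun A _ a _ => Nat.zero_le a,
      fun A hA j hj i _ hij hiA => hb4 A hA j hj i hij hiA⟩
    have hbne : ℬ.Nonempty := by
      rw [← Finset.card_pos, hb2, Finset.card_pos]; exact hne'
    have := lovasz k 0 x ℬ hx hb3 hbs hbne (by rw [hb2]; exact hm')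
    calc B k x ≤ ((∂ ℬ).card : ℝ) := this
      _ ≤ ((∂ H').card : ℝ) := by exact_mod_cast hb1
  -- ∂H' ⊆ image F (∂H)
  have h2 : ∂ H' ⊆ (∂ H).image F := by
    intro T hT
    rw [Finset.mem_shadow_iff] at hT
    obtain ⟨S', hS', b, hb, rfl⟩ := hT
    rw [hH', Finset.mem_image] at hS'
    obtain ⟨A, hA, rfl⟩ := hS'
    rw [hF] at hb
    obtain ⟨a, ha, rfl⟩ := Finset.mem_image.1 hb
    refine Finset.mem_image.2 ⟨A.erase a, Finset.erase_mem_shadow hA ha, ?_⟩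
    -- F (A.erase a) = (F A).erase (f a)
    ext y
    simp only [hF, Finset.mem_image, Finset.mem_erase]
    constructor
    · rintro ⟨c, ⟨hca, hc⟩, rfl⟩
      refine ⟨?_, ⟨c, hc, rfl⟩⟩
      intro h
      exact hca (hfinj (hsub A hA hc) (hsub A hA ha) h)
    · rintro ⟨hy, c, hc, rfl⟩
      exact ⟨c, ⟨fun h => hy (h ▸ rfl), hc⟩, rfl⟩
  have h3 : (∂ H').card ≤ (∂ H).card :=
    le_trans (Finset.card_le_card h2) (Finset.card_image_le)
  calc B k x ≤ ((∂ H').card : ℝ) := h1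
    _ ≤ ((∂ H).card : ℝ) := by exact_mod_cast h3

end StmtAux

/-- If `k` is a positive integer, `x ≥ k` is real, and `H` is a nonempty `k`-uniform
hypergraph with `|H| ≤ C(x,k) = x(x−1)⋯(x−k+1)/k!`, then `(x − k + 1)·|σ(H)| ≥ k·|H|`. -/
theorem stmt_8 {α : Type*} [DecidableEq α] (k : ℕ) (hk : 0 < k)
    (x : ℝ) (hx : (k : ℝ) ≤ x)
    (H : Finset (Finset α)) (huniform : ∀ E ∈ H, E.card = k)
    (hne : H.Nonempty)
    (hcard : (H.card : ℝ) ≤ (∏ i ∈ Finset.range k, (x - i)) / (Nat.factorial k : ℝ)) :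
    (x - k + 1) * ((Finset.shadow H).card : ℝ) ≥ k * (H.card : ℝ) := by
  classical
  obtain ⟨k, rfl⟩ : ∃ k', k = k' + 1 := ⟨k - 1, by omega⟩
  have hcard' : (H.card : ℝ) ≤ StmtAux.B (k+1) x := hcard
  -- IVT: find y ∈ [k+1, x] with B (k+1) y = H.card
  have hone : (1:ℝ) ≤ (H.card : ℝ) := by
    have := Finset.card_pos.2 hne
    exact_mod_cast this
  have hBk : StmtAux.B (k+1) ((k:ℝ)+1) = 1 := by
    have := StmtAux.B_self (k+1); push_cast at this ⊢; convert this using 2 <;> push_cast <;> ring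
  obtain ⟨y, hy, hyB⟩ : ∃ y ∈ Set.Icc ((k:ℝ)+1) x, StmtAux.B (k+1) y = (H.card : ℝ) := by
    have hcont : ContinuousOn (StmtAux.B (k+1)) (Set.Icc ((k:ℝ)+1) x) :=
      (StmtAux.B_cont (k+1)).continuousOn
    have hx' : ((k:ℝ)+1) ≤ x := by push_cast at hx; linarith
    have := intermediate_value_Icc hx' hcont
    have hmem : (H.card : ℝ) ∈ Set.Icc (StmtAux.B (k+1) ((k:ℝ)+1)) (StmtAux.B (k+1) x) := by
      rw [hBk]
      exact ⟨hone, hcard'⟩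
    obtain ⟨y, hy, hyB⟩ := this hmem
    exact ⟨y, hy, hyB⟩
  obtain ⟨hy1, hy2⟩ := hy
  -- Lovász at y
  have hlov := StmtAux.lovasz_gen k y H (by push_cast; linarith) huniform hne (le_of_eq hyB)
  -- ratio
  have hratio := StmtAux.B_ratio k y
  -- (k+1) * H.card = (k+1) * B (k+1) y = (y - k) * B k y ≤ (x - k) * |∂H| roughly
  have hBnn : 0 ≤ StmtAux.B k y := StmtAux.B_nonneg (by push_cast; linarith)
  have hyk : (0:ℝ) < y - (k:ℝ) := by linarith
  have key : ((k:ℝ)+1) * (H.card : ℝ) ≤ (y - k) * ((∂ H).card : ℝ) := by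
    rw [← hyB, hratio]
    apply mul_le_mul_of_nonneg_left hlov (le_of_lt hyk)
  have hxy : (y:ℝ) - k ≤ x - (k+1) + 1 := by push_cast; linarith
  have hshnn : (0:ℝ) ≤ ((∂ H).card : ℝ) := by positivity
  push_cast
  calc ((k:ℝ)+1) * (H.card : ℝ) ≤ (y - k) * ((∂ H).card : ℝ) := key
    _ ≤ (x - (k+1) + 1) * ((∂ H).card : ℝ) := mul_le_mul_of_nonneg_right hxy hshnn
end

section
/- Let k ≥ 2 be an integer, let H be a nonempty k-uniform hypergraph, and let α be a real number. Suppose that for every vertex v contained in some hyperedge of H, the (k−1)-uniform link hypergraph H_{−v} = { E \ {v} : E ∈ H, v ∈ E } satisfies |σ(H_{−v})| ≥ α·|H_{−v}|. Then |σ(H)| ≥ (k·α/(k−1))·|H|, i.e., (k−1)·|σ(H)| ≥ k·α·|H|. -/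
/-- If `k ≥ 2`, `H` is a nonempty `k`-uniform hypergraph and `α` is a real number such that
for every vertex `v` contained in some hyperedge, the link `H_{−v}` satisfies
`|σ(H_{−v})| ≥ α·|H_{−v}|`, then `(k−1)·|σ(H)| ≥ k·α·|H|`. -/
theorem stmt_12 {V : Type*} [DecidableEq V] (k : ℕ) (hk : 2 ≤ k)
    (H : Finset (Finset V)) (huniform : ∀ E ∈ H, E.card = k)
    (hne : H.Nonempty) (α : ℝ)
    (hlink : ∀ v : V, (∃ E ∈ H, v ∈ E) →
      ((Finset.shadow ((H.filter (fun E => v ∈ E)).image (fun E => E.erase v))).card : ℝ) ≥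
        α * (((H.filter (fun E => v ∈ E)).image (fun E => E.erase v)).card : ℝ)) :
    ((k : ℝ) - 1) * ((Finset.shadow H).card : ℝ) ≥ (k : ℝ) * α * (H.card : ℝ) := by
  classical
  set V₀ := H.biUnion id with hV₀
  have hsub : ∀ E ∈ H, E ⊆ V₀ := fun E hE v hv => Finset.mem_biUnion.2 ⟨E, hE, hv⟩
  have hssub : ∀ S ∈ Finset.shadow H, S ⊆ V₀ := by
    intro S hS
    rw [Finset.mem_shadow_iff] at hS
    obtain ⟨E, hE, a, _, rfl⟩ := hS
    exact (Finset.erase_subset _ _).trans (hsub E hE)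
  -- cardinality of link equals degree
  have hdeg : ∀ v : V, ((H.filter (fun E => v ∈ E)).image (fun E => E.erase v)).card
      = (H.filter (fun E => v ∈ E)).card := by
    intro v
    apply Finset.card_image_of_injOn
    intro E hE E' hE' h
    simp only [Finset.mem_coe, Finset.mem_filter] at hE hE'
    have := congrArg (insert v) h
    rwa [Finset.insert_erase hE.2, Finset.insert_erase hE'.2] at this
  -- shadow of link injects into shadow of H restricted to sets containing v
  have hshle : ∀ v : V, (Finset.shadow ((H.filter (fun E => v ∈ E)).image (fun E => E.erase v))).card
      ≤ ((Finset.shadow H).filter (fun S => v ∈ S)).card := by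
    intro v
    apply Finset.card_le_card_of_injOn (fun F => insert v F)
    · intro F hF
      rw [Finset.mem_coe, Finset.mem_shadow_iff] at hF
      obtain ⟨G, hG, a, haG, rfl⟩ := hF
      rw [Finset.mem_image] at hG
      obtain ⟨E, hE, rfl⟩ := hG
      rw [Finset.mem_filter] at hE
      have hav : a ≠ v := fun h => (Finset.notMem_erase v E) (h ▸ haG)
      have hvG : v ∉ (E.erase v).erase a := fun h =>
        Finset.notMem_erase v E (Finset.mem_of_mem_erase h)
      rw [Finset.mem_coe, Finset.mem_filter]
      constructor
      · rw [Finset.mem_shadow_iff]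
        refine ⟨E, hE.1, a, Finset.mem_of_mem_erase haG, ?_⟩
        rw [Finset.erase_right_comm]
        exact (Finset.insert_erase (Finset.mem_erase.2 ⟨hav.symm, hE.2⟩)).symm
      · exact Finset.mem_insert_self v _
    · intro F hF F' hF' h
      have hv : ∀ G, G ∈ Finset.shadow ((H.filter (fun E => v ∈ E)).image (fun E => E.erase v)) → v ∉ G := by
        intro G hG hvG
        rw [Finset.mem_shadow_iff] at hG
        obtain ⟨G', hG', a, haG', rfl⟩ := hG
        rw [Finset.mem_image] at hG'
        obtain ⟨E, hE, rfl⟩ := hG'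
        exact Finset.notMem_erase v E (Finset.mem_of_mem_erase hvG)
      have := congrArg (Finset.erase · v) h
      simpa [Finset.erase_insert (hv F hF), Finset.erase_insert (hv F' hF')] using this
  -- double counting: sum of degrees
  have h1 : ∑ v ∈ V₀, (H.filter (fun E => v ∈ E)).card = k * H.card := by
    calc ∑ v ∈ V₀, (H.filter (fun E => v ∈ E)).card
        = ∑ v ∈ V₀, ∑ E ∈ H, if v ∈ E then 1 else 0 :=
          Finset.sum_congr rfl fun v _ => Finset.card_filter _ _
      _ = ∑ E ∈ H, ∑ v ∈ V₀, if v ∈ E then 1 else 0 := Finset.sum_comm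
      _ = ∑ E ∈ H, (V₀.filter (fun v => v ∈ E)).card :=
          Finset.sum_congr rfl fun E _ => (Finset.card_filter _ _).symm
      _ = ∑ E ∈ H, E.card := by
          refine Finset.sum_congr rfl fun E hE => ?_
          rw [Finset.filter_mem_eq_inter, Finset.inter_eq_right.2 (hsub E hE)]
      _ = k * H.card := by
          rw [Finset.sum_congr rfl huniform, Finset.sum_const, smul_eq_mul, mul_comm]
  -- double counting: sum over shadow
  have h2 : ∑ v ∈ V₀, ((Finset.shadow H).filter (fun S => v ∈ S)).card
      = (k - 1) * (Finset.shadow H).card := by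
    calc ∑ v ∈ V₀, ((Finset.shadow H).filter (fun S => v ∈ S)).card
        = ∑ v ∈ V₀, ∑ S ∈ Finset.shadow H, if v ∈ S then 1 else 0 :=
          Finset.sum_congr rfl fun v _ => Finset.card_filter _ _
      _ = ∑ S ∈ Finset.shadow H, ∑ v ∈ V₀, if v ∈ S then 1 else 0 := Finset.sum_comm
      _ = ∑ S ∈ Finset.shadow H, (V₀.filter (fun v => v ∈ S)).card :=
          Finset.sum_congr rfl fun S _ => (Finset.card_filter _ _).symm
      _ = ∑ S ∈ Finset.shadow H, S.card := by
          refine Finset.sum_congr rfl fun S hS => ?_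
          rw [Finset.filter_mem_eq_inter, Finset.inter_eq_right.2 (hssub S hS)]
      _ = (k - 1) * (Finset.shadow H).card := by
          have hcard : ∀ S ∈ Finset.shadow H, S.card = k - 1 := by
            intro S hS
            rw [Finset.mem_shadow_iff] at hS
            obtain ⟨E, hE, a, haE, rfl⟩ := hS
            rw [Finset.card_erase_of_mem haE, huniform E hE]
          rw [Finset.sum_congr rfl hcard, Finset.sum_const, smul_eq_mul, mul_comm]
  -- per-vertex inequality in ℝ
  have key : ∀ v ∈ V₀, α * ((H.filter (fun E => v ∈ E)).card : ℝ)
      ≤ (((Finset.shadow H).filter (fun S => v ∈ S)).card : ℝ) := by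
    intro v hv
    obtain ⟨E, hE, hvE⟩ := Finset.mem_biUnion.1 hv
    have h := hlink v ⟨E, hE, hvE⟩
    rw [hdeg v] at h
    calc α * ((H.filter (fun E => v ∈ E)).card : ℝ)
        ≤ ((Finset.shadow ((H.filter (fun E => v ∈ E)).image (fun E => E.erase v))).card : ℝ) := h
      _ ≤ (((Finset.shadow H).filter (fun S => v ∈ S)).card : ℝ) := Nat.cast_le.2 (hshle v)
  have hfinal : α * ((k * H.card : ℕ) : ℝ) ≤ (((k - 1) * (Finset.shadow H).card : ℕ) : ℝ) := by
    rw [← h1, ← h2]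
    push_cast
    rw [Finset.mul_sum]
    exact Finset.sum_le_sum key
  have hk1 : (1 : ℕ) ≤ k := le_trans (by norm_num) hk
  rw [Nat.cast_mul, Nat.cast_mul, Nat.cast_sub hk1, Nat.cast_one] at hfinal
  linarith
end

section
/- Let d and k be integers with 1 ≤ d < k and let H be a connected k-uniform hypergraph with maximum degree at most d. Then |H| ≤ d. -/
/-- First-exit lemma: a walk starting in `S` and ending outside `S` has a step
crossing the boundary of `S`. -/
lemma stmt_15_exit {α : Type*} [DecidableEq α] (S : Finset (Finset α)) (c : ℕ → Finset α) :
    ∀ t, c 0 ∈ S → c t ∉ S → ∃ i < t, c i ∈ S ∧ c (i + 1) ∉ S := by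
  intro t
  induction t with
  | zero => intro h0 ht; exact absurd h0 ht
  | succ t ih =>
    intro h0 ht
    by_cases hct : c t ∈ S
    · exact ⟨t, Nat.lt_succ_self t, hct, ht⟩
    · obtain ⟨i, hi, h1, h2⟩ := ih h0 hct
      exact ⟨i, hi.trans (Nat.lt_succ_self t), h1, h2⟩

/-- If `1 ≤ d < k` and `H` is a connected `k`-uniform hypergraph with maximum degree at
most `d`, then `|H| ≤ d`. Connectivity: any two hyperedges are joined by a walk of
hyperedges in which consecutive ones intersect in `k − 1` elements. -/
theorem stmt_15 {α : Type*} [DecidableEq α] (d k : ℕ) (hd : 1 ≤ d) (hdk : d < k)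
    (H : Finset (Finset α)) (huniform : ∀ E ∈ H, E.card = k)
    (hdeg : ∀ v : α, (H.filter (fun E => v ∈ E)).card ≤ d)
    (hconn : ∀ E ∈ H, ∀ F ∈ H, ∃ (t : ℕ) (c : ℕ → Finset α),
      c 0 = E ∧ c t = F ∧ (∀ i ≤ t, c i ∈ H) ∧
      ∀ i < t, (c i ∩ c (i + 1)).card = k - 1) :
    H.card ≤ d := by
  by_contra hcon
  push_neg at hcon
  have hHne : ∃ E, E ∈ H := by
    have : 0 < H.card := by omega
    exact Finset.card_pos.mp this
  obtain ⟨E, hEH⟩ := hHne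
  have key : ∀ n, n + 1 ≤ H.card →
      ∃ (S : Finset (Finset α)) (J : Finset α),
        S ⊆ H ∧ S.card = n + 1 ∧ (∀ F ∈ S, J ⊆ F) ∧ k ≤ n + J.card := by
    intro n
    induction n with
    | zero =>
      intro _
      refine ⟨{E}, E, by simpa using hEH, by simp, ?_, ?_⟩
      · intro F hF
        simp only [Finset.mem_singleton] at hF
        simp [hF]
      · simp [huniform E hEH]
    | succ n ih =>
      intro hn
      obtain ⟨S, J, hSH, hScard, hJS, hJcard⟩ := ih (by omega)
      have hlt : S.card < H.card := by omega
      have hne : S ≠ H := fun h => by rw [h] at hlt; exact lt_irrefl _ hlt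
      obtain ⟨F', hF'H, hF'S⟩ := Finset.exists_of_ssubset (ssubset_of_subset_of_ne hSH hne)
      have hSne : S.Nonempty := Finset.card_pos.mp (by omega)
      obtain ⟨G, hGS⟩ := hSne
      obtain ⟨t, c, hc0, hct, hcH, hcint⟩ := hconn G (hSH hGS) F' hF'H
      have h0S : c 0 ∈ S := by rw [hc0]; exact hGS
      have htS : c t ∉ S := by rw [hct]; exact hF'S
      obtain ⟨i, hit, hiS, hiS'⟩ := stmt_15_exit S c t h0S htS
      set A := c i with hA
      set B := c (i + 1) with hB
      have hAH : A ∈ H := hSH hiS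
      have hBH : B ∈ H := hcH (i + 1) (by omega)
      have hABcard : (A ∩ B).card = k - 1 := hcint i hit
      have hJA : J ⊆ A := hJS A hiS
      refine ⟨insert B S, J ∩ B, ?_, ?_, ?_, ?_⟩
      · exact Finset.insert_subset hBH hSH
      · rw [Finset.card_insert_of_notMem hiS', hScard]
      · intro F hF
        rcases Finset.mem_insert.mp hF with h | h
        · rw [h]; exact Finset.inter_subset_right
        · exact Finset.inter_subset_left.trans (hJS F h)
      · have hsdiff : (A \ B).card = 1 := by
          have h1 : (A \ B).card + (A ∩ B).card = A.card :=
            Finset.card_sdiff_add_card_inter A B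
          rw [hABcard, huniform A hAH] at h1
          omega
        have hsub : J ⊆ (J ∩ B) ∪ (A \ B) := by
          intro x hx
          by_cases hxB : x ∈ B
          · exact Finset.mem_union_left _ (Finset.mem_inter.mpr ⟨hx, hxB⟩)
          · exact Finset.mem_union_right _ (Finset.mem_sdiff.mpr ⟨hJA hx, hxB⟩)
        have hle : J.card ≤ (J ∩ B).card + 1 := by
          calc J.card ≤ ((J ∩ B) ∪ (A \ B)).card := Finset.card_le_card hsub
            _ ≤ (J ∩ B).card + (A \ B).card := Finset.card_union_le _ _
            _ = (J ∩ B).card + 1 := by rw [hsdiff]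
        omega
  obtain ⟨S, J, hSH, hScard, hJS, hJcard⟩ := key d (by omega)
  have hJne : J.Nonempty := Finset.card_pos.mp (by omega)
  obtain ⟨v, hv⟩ := hJne
  have hsub : S ⊆ H.filter (fun E => v ∈ E) := by
    intro F hF
    exact Finset.mem_filter.mpr ⟨hSH hF, hJS F hF hv⟩
  have := Finset.card_le_card hsub
  have := hdeg v
  omega
end

section
/- Let d and k be integers with 1 ≤ d < k, and let q ≥ 0 and 0 ≤ r < d be integers. Then there exists a k-uniform hypergraph H with maximum degree at most d, |H| = q·d + r, and |σ(H)| = (q·d + r)·k − q·C(d, 2) − C(r, 2). (Such an H is the disjoint union of q hypergraphs of size d, each on k+1 vertices, and one hypergraph of size r on k+1 vertices.) -/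
open Finset

namespace Stmt18

/-- Block `i`: the interval of `k+1` vertices starting at `i*(k+1)`. -/
def S (k i : ℕ) : Finset ℕ := Finset.Ico (i * (k+1)) (i * (k+1) + (k+1))

lemma card_S (k i : ℕ) : (S k i).card = k + 1 := by simp [S]

lemma mem_S_iff {k i v : ℕ} : v ∈ S k i ↔ i * (k+1) ≤ v ∧ v < i * (k+1) + (k+1) := by
  simp [S]

lemma S_block_eq {k i j v : ℕ} (hi : v ∈ S k i) (hj : v ∈ S k j) : i = j := by
  rw [mem_S_iff] at hi hj
  rcases Nat.lt_trichotomy i j with h | h | h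
  · exfalso
    have h2 : i * (k+1) + (k+1) ≤ j * (k+1) := by
      calc i*(k+1)+(k+1) = (i+1)*(k+1) := by ring
        _ ≤ j*(k+1) := Nat.mul_le_mul_right _ (Nat.succ_le_of_lt h)
    omega
  · exact h
  · exfalso
    have h2 : j * (k+1) + (k+1) ≤ i * (k+1) := by
      calc j*(k+1)+(k+1) = (j+1)*(k+1) := by ring
        _ ≤ i*(k+1) := Nat.mul_le_mul_right _ (Nat.succ_le_of_lt h)
    omega

lemma base_mem_S {k i a : ℕ} (h : a < k+1) : i*(k+1) + a ∈ S k i := by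
  rw [mem_S_iff]; omega

/-- The edge of block `i` missing the `a`-th vertex. -/
def e (k i a : ℕ) : Finset ℕ := (S k i).erase (i * (k+1) + a)

lemma mem_e {k i a v : ℕ} : v ∈ e k i a ↔ v ∈ S k i ∧ v ≠ i*(k+1)+a := by
  simp [e, Finset.mem_erase]; tauto

lemma card_e {k i a : ℕ} (h : a < k+1) : (e k i a).card = k := by
  rw [e, Finset.card_erase_of_mem (base_mem_S h), card_S]
  omega

/-- Number of edges in block `i`. -/
def mm (d q r i : ℕ) : ℕ := if i < q then d else r

lemma gauss (m : ℕ) : ∑ a ∈ Finset.range m, (a : ℤ) = (m.choose 2 : ℤ) := by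
  induction m with
  | zero => simp
  | succ n ih =>
    rw [Finset.sum_range_succ, ih]
    have : (n+1).choose 2 = n.choose 1 + n.choose 2 := Nat.choose_succ_succ n 1
    rw [this]
    push_cast [Nat.choose_one_right]
    ring

lemma inner_sum {k m : ℕ} (hm : m ≤ k) :
    ((∑ a ∈ Finset.range m, (k - a) : ℕ) : ℤ) = m * k - (m.choose 2 : ℤ) := by
  rw [Nat.cast_sum]
  have h1 : ∀ a ∈ Finset.range m, ((k - a : ℕ) : ℤ) = (k : ℤ) - a := by
    intro a ha
    rw [Finset.mem_range] at ha
    have : a ≤ k := by omega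
    exact Nat.cast_sub this
  rw [Finset.sum_congr rfl h1, Finset.sum_sub_distrib, Finset.sum_const, gauss]
  simp [mul_comm]

end Stmt18

open Stmt18 in
/-- If `1 ≤ d < k`, `q ≥ 0` and `0 ≤ r < d`, then there exists a `k`-uniform hypergraph
`H` with maximum degree at most `d`, `|H| = q·d + r` and
`|σ(H)| = (q·d + r)·k − q·C(d,2) − C(r,2)`. -/
theorem stmt_18 (d k q r : ℕ) (hd : 1 ≤ d) (hdk : d < k) (hr : r < d) :
    ∃ H : Finset (Finset ℕ),
      (∀ E ∈ H, E.card = k) ∧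
      (∀ v : ℕ, (H.filter (fun E => v ∈ E)).card ≤ d) ∧
      H.card = q * d + r ∧
      ((Finset.shadow H).card : ℤ) =
        ((q * d + r : ℕ) : ℤ) * k - q * (Nat.choose d 2 : ℤ) - (Nat.choose r 2 : ℤ) := by
  classical
  set m := mm d q r with hm_def
  have hm_le : ∀ i, m i ≤ d := by
    intro i
    by_cases h : i < q <;> simp [hm_def, mm, h] <;> omega
  -- index set for the edges
  set Hidx : Finset ((_ : ℕ) × ℕ) :=
    (Finset.range (q+1)).sigma (fun i => Finset.range (m i)) with hHidx
  set H : Finset (Finset ℕ) := Hidx.image (fun p => e k p.1 p.2) with hH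
  -- membership in Hidx
  have hmemHidx : ∀ p : (_ : ℕ) × ℕ, p ∈ Hidx ↔ p.1 < q + 1 ∧ p.2 < m p.1 := by
    intro p; simp [hHidx, Finset.mem_sigma]
  -- every edge coming from Hidx has offset < k+1
  have hoff : ∀ p : (_ : ℕ) × ℕ, p ∈ Hidx → p.2 < k + 1 := by
    intro p hp
    rw [hmemHidx] at hp
    have := hm_le p.1
    omega
  -- edges are nonempty
  have hk1 : 1 ≤ k := by omega
  have he_ne : ∀ i a, a < k + 1 → (e k i a).Nonempty := by
    intro i a ha
    rw [← Finset.card_pos, card_e ha]; omega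
  -- injectivity of the edge map on Hidx
  have he_inj : ∀ p ∈ Hidx, ∀ p' ∈ Hidx,
      e k p.1 p.2 = e k p'.1 p'.2 → p = p' := by
    intro p hp p' hp' heq
    obtain ⟨v, hv⟩ := he_ne p.1 p.2 (hoff p hp)
    have hv' : v ∈ e k p'.1 p'.2 := heq ▸ hv
    rw [mem_e] at hv hv'
    have hblock : p.1 = p'.1 := S_block_eq hv.1 hv'.1
    -- now compare erased elements
    have hx : p.1*(k+1) + p.2 ∉ e k p.1 p.2 := by
      rw [mem_e]; tauto
    have hx' : p.1*(k+1) + p.2 ∉ e k p'.1 p'.2 := heq ▸ hx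
    rw [mem_e] at hx'
    push_neg at hx'
    have hxS : p.1*(k+1) + p.2 ∈ S k p'.1 := by
      rw [← hblock]; exact base_mem_S (hoff p hp)
    have heq2 : p.1*(k+1) + p.2 = p'.1*(k+1) + p'.2 := hx' hxS
    rw [hblock] at heq2
    have h2 : p.2 = p'.2 := by omega
    exact Sigma.ext hblock (by rw [h2])
  have hcardH : H.card = q * d + r := by
    rw [hH, Finset.card_image_of_injOn he_inj, hHidx, Finset.card_sigma]
    rw [Finset.sum_range_succ]
    have h1 : ∀ i ∈ Finset.range q, (Finset.range (m i)).card = d := by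
      intro i hi
      rw [Finset.mem_range] at hi
      simp [hm_def, mm, hi]
    rw [Finset.sum_congr rfl h1, Finset.sum_const, Finset.card_range]
    simp [hm_def, mm]
  -- uniformity
  have huniform : ∀ E ∈ H, E.card = k := by
    intro E hE
    rw [hH, Finset.mem_image] at hE
    obtain ⟨p, hp, rfl⟩ := hE
    exact card_e (hoff p hp)
  -- degree bound
  have hdeg : ∀ v : ℕ, (H.filter (fun E => v ∈ E)).card ≤ d := by
    intro v
    rcases (H.filter (fun E => v ∈ E)).eq_empty_or_nonempty with h | ⟨E0, hE0⟩
    · rw [h]; simp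
    · rw [Finset.mem_filter] at hE0
      obtain ⟨hE0H, hvE0⟩ := hE0
      rw [hH, Finset.mem_image] at hE0H
      obtain ⟨p0, hp0, rfl⟩ := hE0H
      have hvS0 : v ∈ S k p0.1 := (mem_e.mp hvE0).1
      have hsub : (H.filter (fun E => v ∈ E)) ⊆ (Finset.range d).image (e k p0.1) := by
        intro E hE
        rw [Finset.mem_filter] at hE
        obtain ⟨hEH, hvE⟩ := hE
        rw [hH, Finset.mem_image] at hEH
        obtain ⟨p, hp, rfl⟩ := hEH
        have hvS : v ∈ S k p.1 := (mem_e.mp hvE).1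
        have hblock : p.1 = p0.1 := S_block_eq hvS hvS0
        rw [Finset.mem_image]
        refine ⟨p.2, ?_, by rw [← hblock]⟩
        rw [Finset.mem_range]
        have := (hmemHidx p).mp hp
        have := hm_le p.1
        omega
      calc (H.filter (fun E => v ∈ E)).card ≤ _ := Finset.card_le_card hsub
        _ ≤ (Finset.range d).card := Finset.card_image_le
        _ = d := Finset.card_range d
  -- the shadow
  set T : Finset ((_ : ℕ) × (_ : ℕ) × ℕ) :=
    (Finset.range (q+1)).sigma (fun i => (Finset.range (m i)).sigma
      (fun a => Finset.Ico (a+1) (k+1))) with hT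
  set g : ((_ : ℕ) × (_ : ℕ) × ℕ) → Finset ℕ :=
    (fun p => ((S k p.1).erase (p.1*(k+1) + p.2.1)).erase (p.1*(k+1) + p.2.2)) with hg
  have hmemT : ∀ p : (_ : ℕ) × (_ : ℕ) × ℕ,
      p ∈ T ↔ p.1 < q + 1 ∧ p.2.1 < m p.1 ∧ p.2.1 < p.2.2 ∧ p.2.2 < k + 1 := by
    intro p
    simp [hT, Finset.mem_sigma, Finset.mem_Ico]
  have hmem_g : ∀ (p : (_ : ℕ) × (_ : ℕ) × ℕ) (v : ℕ),
      v ∈ g p ↔ v ∈ S k p.1 ∧ v ≠ p.1*(k+1) + p.2.1 ∧ v ≠ p.1*(k+1) + p.2.2 := by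
    intro p v
    simp [hg, Finset.mem_erase]; tauto
  have hshadow : Finset.shadow H = T.image g := by
    ext s
    rw [Finset.mem_shadow_iff, Finset.mem_image]
    constructor
    · rintro ⟨E, hEH, y, hyE, rfl⟩
      rw [hH, Finset.mem_image] at hEH
      obtain ⟨p, hp, rfl⟩ := hEH
      obtain ⟨hiq, ham⟩ := (hmemHidx p).mp hp
      have hak : p.2 < k + 1 := hoff p hp
      rw [mem_e] at hyE
      obtain ⟨hyS, hyne⟩ := hyE
      rw [mem_S_iff] at hyS
      set c := y - p.1*(k+1) with hc
      have hy_eq : y = p.1*(k+1) + c := by omega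
      have hck : c < k + 1 := by omega
      have hcna : c ≠ p.2 := by
        intro hcon; apply hyne; omega
      rcases Nat.lt_or_ge p.2 c with hlt | hge
      · refine ⟨⟨p.1, p.2, c⟩, ?_, ?_⟩
        · rw [hmemT]; exact ⟨hiq, ham, hlt, hck⟩
        · rw [hg]; simp only [e]
          rw [hy_eq]
      · have hclt : c < p.2 := by omega
        refine ⟨⟨p.1, c, p.2⟩, ?_, ?_⟩
        · have hmd := hm_le p.1
          have ham2 : c < m p.1 := lt_trans hclt ham
          rw [hmemT]
          refine ⟨hiq, ham2, hclt, ?_⟩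
          show p.2 < k + 1
          have := hoff p hp
          omega
        · rw [hg]; simp only [e]
          rw [hy_eq]
          ext z
          simp [Finset.mem_erase]
          tauto
    · rintro ⟨p, hpT, rfl⟩
      obtain ⟨hiq, ham, hab, hbk⟩ := (hmemT p).mp hpT
      refine ⟨e k p.1 p.2.1, ?_, p.1*(k+1) + p.2.2, ?_, ?_⟩
      · rw [hH, Finset.mem_image]
        exact ⟨⟨p.1, p.2.1⟩, (hmemHidx ⟨p.1, p.2.1⟩).mpr ⟨hiq, ham⟩, rfl⟩
      · rw [mem_e]
        exact ⟨base_mem_S hbk, by omega⟩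
      · rw [hg]; simp only [e]
  -- injectivity of g on T
  have hg_inj : ∀ p ∈ T, ∀ p' ∈ T, g p = g p' → p = p' := by
    intro p hp p' hp' heq
    obtain ⟨hiq, ham, hab, hbk⟩ := (hmemT p).mp hp
    obtain ⟨hiq', ham', hab', hbk'⟩ := (hmemT p').mp hp'
    have hak : p.2.1 < k + 1 := by have := hm_le p.1; omega
    have hak' : p'.2.1 < k + 1 := by have := hm_le p'.1; omega
    -- g p is nonempty
    have hmemy : p.1*(k+1) + p.2.2 ∈ (S k p.1).erase (p.1*(k+1) + p.2.1) := by
      rw [Finset.mem_erase]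
      exact ⟨by omega, base_mem_S hbk⟩
    have hcard : (g p).card = k - 1 := by
      rw [hg]; simp only
      rw [Finset.card_erase_of_mem hmemy, Finset.card_erase_of_mem (base_mem_S hak), card_S]
      omega
    have hne : (g p).Nonempty := by
      rw [← Finset.card_pos, hcard]; omega
    obtain ⟨v, hv⟩ := hne
    have hv' : v ∈ g p' := heq ▸ hv
    rw [hmem_g] at hv hv'
    have hblock : p.1 = p'.1 := S_block_eq hv.1 hv'.1
    -- the two removed elements coincide as a pair
    have key : ∀ z, z ∈ S k p.1 → (z ∉ g p ↔ z = p.1*(k+1)+p.2.1 ∨ z = p.1*(k+1)+p.2.2) := by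
      intro z hz
      rw [hmem_g]; tauto
    have key' : ∀ z, z ∈ S k p.1 → (z ∉ g p' ↔ z = p.1*(k+1)+p'.2.1 ∨ z = p.1*(k+1)+p'.2.2) := by
      intro z hz
      rw [hmem_g, ← hblock]
      tauto
    have h1 : p.2.1 = p'.2.1 ∨ p.2.1 = p'.2.2 := by
      have hz : p.1*(k+1)+p.2.1 ∈ S k p.1 := base_mem_S hak
      have : p.1*(k+1)+p.2.1 ∉ g p := by rw [key _ hz]; left; rfl
      have := (key' _ hz).mp (heq ▸ this)
      omega
    have h2 : p.2.2 = p'.2.1 ∨ p.2.2 = p'.2.2 := by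
      have hz : p.1*(k+1)+p.2.2 ∈ S k p.1 := base_mem_S hbk
      have : p.1*(k+1)+p.2.2 ∉ g p := by rw [key _ hz]; right; rfl
      have := (key' _ hz).mp (heq ▸ this)
      omega
    have h3 : p'.2.1 = p.2.1 ∨ p'.2.1 = p.2.2 := by
      have hz : p.1*(k+1)+p'.2.1 ∈ S k p.1 := base_mem_S hak'
      have : p.1*(k+1)+p'.2.1 ∉ g p' := by rw [key' _ hz]; left; rfl
      have := (key _ hz).mp (heq ▸ this)
      omega
    have ha : p.2.1 = p'.2.1 := by omega
    have hb : p.2.2 = p'.2.2 := by omega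
    obtain ⟨i, a, b⟩ := p
    obtain ⟨i', a', b'⟩ := p'
    simp only at hblock ha hb
    subst hblock; subst ha; subst hb
    rfl
  -- counting
  have hcardT : ((Finset.shadow H).card : ℤ)
      = ∑ i ∈ Finset.range (q+1), ((∑ a ∈ Finset.range (m i), (k - a) : ℕ) : ℤ) := by
    rw [hshadow, Finset.card_image_of_injOn hg_inj, hT, Finset.card_sigma]
    push_cast
    refine Finset.sum_congr rfl ?_
    intro i hi
    rw [Finset.card_sigma]
    push_cast
    refine Finset.sum_congr rfl ?_
    intro a ha
    rw [Nat.card_Ico]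
    have : a < m i := Finset.mem_range.mp ha
    have := hm_le i
    push_cast
    omega
  have hfinal : ((Finset.shadow H).card : ℤ)
      = ((q * d + r : ℕ) : ℤ) * k - q * (Nat.choose d 2 : ℤ) - (Nat.choose r 2 : ℤ) := by
    rw [hcardT, Finset.sum_range_succ]
    have h1 : ∀ i ∈ Finset.range q,
        ((∑ a ∈ Finset.range (m i), (k - a) : ℕ) : ℤ) = d * k - (d.choose 2 : ℤ) := by
      intro i hi
      rw [Finset.mem_range] at hi
      have : m i = d := by simp [hm_def, mm, hi]
      rw [this, Stmt18.inner_sum (by omega)]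
    rw [Finset.sum_congr rfl h1, Finset.sum_const, Finset.card_range]
    have h2 : m q = r := by simp [hm_def, mm]
    rw [h2, Stmt18.inner_sum (by omega)]
    push_cast
    ring
  exact ⟨H, huniform, hdeg, hcardH, hfinal⟩
end

section
/- Let t ≥ k ≥ 3 be integers and let H be the k-uniform hypergraph on the vertex set {1, …, t+2} given by H = {A ⊆ {1,…,t+1} : |A| = k} ∪ { E ∪ {t+2} : E ⊆ {1, …, t + 2 − ⌈(t+2)/k⌉}, |E| = k−1 }. Then: (i) the maximum degree of H equals C(t, k−1) + C(t + 1 − ⌈(t+2)/k⌉, k−2); (ii) |H| = C(t+1, k) + C(t + 2 − ⌈(t+2)/k⌉, k−1); (iii) |σ(H)| = C(t+1, k−1) + C(t + 2 − ⌈(t+2)/k⌉, k−2); and (iv) (t − k + 2)·|σ(H)| < k·|H|, i.e., |σ(H)|/|H| < k/(t − k + 2). -/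
lemma aux_filter_powersetCard_card (S : Finset ℕ) (v r : ℕ) (hr : 1 ≤ r) (hv : v ∈ S) :
    ((S.powersetCard r).filter (fun s => v ∈ s)).card = (S.card - 1).choose (r - 1) := by
  have key : ((S.powersetCard r).filter (fun s => v ∈ s)).card
      = ((S.erase v).powersetCard (r - 1)).card := by
    apply Finset.card_bij (fun s _ => s.erase v)
    · intro s hs
      simp only [Finset.mem_filter, Finset.mem_powersetCard] at hs
      rw [Finset.mem_powersetCard]
      exact ⟨Finset.erase_subset_erase _ hs.1.1,
        by rw [Finset.card_erase_of_mem hs.2, hs.1.2]⟩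
    · intro s hs s' hs' h
      simp only [Finset.mem_filter] at hs hs'
      rw [← Finset.insert_erase hs.2, ← Finset.insert_erase hs'.2, h]
    · intro u hu
      rw [Finset.mem_powersetCard] at hu
      have hvu : v ∉ u := fun h => (Finset.mem_erase.mp (hu.1 h)).1 rfl
      refine ⟨insert v u, ?_, ?_⟩
      · simp only [Finset.mem_filter, Finset.mem_powersetCard]
        refine ⟨⟨?_, ?_⟩, Finset.mem_insert_self _ _⟩
        · exact Finset.insert_subset hv (hu.1.trans (Finset.erase_subset _ _))
        · rw [Finset.card_insert_of_notMem hvu, hu.2]; omega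
      · rw [Finset.erase_insert hvu]
  rw [key, Finset.card_powersetCard, Finset.card_erase_of_mem hv]

lemma aux_card_image_insert (a : ℕ) (F : Finset (Finset ℕ)) (hF : ∀ s ∈ F, a ∉ s) :
    (F.image (fun s => insert a s)).card = F.card := by
  apply Finset.card_image_of_injOn
  intro s hs s' hs' h
  rw [← Finset.erase_insert (hF s hs), ← Finset.erase_insert (hF s' hs')]
  simp only at h
  rw [h]

lemma aux_exists_notMem (S s : Finset ℕ) (hsub : s ⊆ S) (h : s.card < S.card) :
    ∃ a ∈ S, a ∉ s := by
  have : (S \ s).Nonempty := by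
    rw [← Finset.card_pos, Finset.card_sdiff_of_subset hsub]; omega
  obtain ⟨a, ha⟩ := this
  rw [Finset.mem_sdiff] at ha
  exact ⟨a, ha.1, ha.2⟩

lemma aux_step (t k c : ℕ) (hk : 3 ≤ k) (htk : k ≤ t) (hc2 : 2 ≤ c)
    (hck : c + k ≤ t + 3) (hkc2 : k * c ≤ t + k + 1) :
    (t - k + 2) * (k - 1) < k * (t + 4 - c - k) := by
  zify [show k ≤ t from htk, show 1 ≤ k by omega, show c ≤ t + 4 by omega,
    show k ≤ t + 4 - c by omega]
  zify at hkc2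
  nlinarith [hkc2]

/-- For `t ≥ k ≥ 3`, let `H` be the `k`-uniform hypergraph on `{1, …, t+2}` consisting of
all `k`-subsets of `{1, …, t+1}` together with all sets `E ∪ {t+2}` where `E` is a
`(k−1)`-subset of `{1, …, t+2−⌈(t+2)/k⌉}`. Then (i) the maximum degree of `H` equals
`C(t,k−1) + C(t+1−⌈(t+2)/k⌉, k−2)`; (ii) `|H| = C(t+1,k) + C(t+2−⌈(t+2)/k⌉, k−1)`;
(iii) `|σ(H)| = C(t+1,k−1) + C(t+2−⌈(t+2)/k⌉, k−2)`; and
(iv) `(t−k+2)·|σ(H)| < k·|H|`. -/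
theorem stmt_19 (t k : ℕ) (hk : 3 ≤ k) (htk : k ≤ t)
    (c : ℕ) (hc : c = ⌈((t : ℚ) + 2) / (k : ℚ)⌉₊)
    (H : Finset (Finset ℕ))
    (hH : H = (Finset.Icc 1 (t + 1)).powersetCard k ∪
      ((Finset.Icc 1 (t + 2 - c)).powersetCard (k - 1)).image
        (fun E => insert (t + 2) E)) :
    ((∀ v : ℕ, (H.filter (fun E => v ∈ E)).card ≤
        Nat.choose t (k - 1) + Nat.choose (t + 1 - c) (k - 2)) ∧
      (∃ v : ℕ, (H.filter (fun E => v ∈ E)).card =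
        Nat.choose t (k - 1) + Nat.choose (t + 1 - c) (k - 2))) ∧
    H.card = Nat.choose (t + 1) k + Nat.choose (t + 2 - c) (k - 1) ∧
    (Finset.shadow H).card =
      Nat.choose (t + 1) (k - 1) + Nat.choose (t + 2 - c) (k - 2) ∧
    (t - k + 2) * (Finset.shadow H).card < k * H.card := by
  have hk0 : 0 < k := by omega
  have hkq : (0:ℚ) < (k:ℚ) := by exact_mod_cast hk0
  -- bounds on c
  have hkc1 : t + 2 ≤ k * c := by
    have h1 : ((t:ℚ)+2)/(k:ℚ) ≤ (c:ℚ) := by rw [hc]; exact_mod_cast Nat.le_ceil _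
    rw [div_le_iff₀ hkq] at h1
    have h2 : ((t:ℚ)+2) ≤ (k:ℚ)*(c:ℚ) := by linarith [h1]
    exact_mod_cast h2
  have hkc2 : k * c ≤ t + k + 1 := by
    have h1 : (c:ℚ) < ((t:ℚ)+2)/(k:ℚ) + 1 := by
      rw [hc]; exact Nat.ceil_lt_add_one (by positivity)
    have h2 : (k:ℚ)*(c:ℚ) < ((t:ℚ)+2) + (k:ℚ) := by
      have h3 : (k:ℚ) * (((t:ℚ)+2)/(k:ℚ) + 1) = ((t:ℚ)+2) + (k:ℚ) := by field_simp
      nlinarith [h1, hkq]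
    have h4 : k * c < t + 2 + k := by exact_mod_cast h2
    omega
  have hc2 : 2 ≤ c := by nlinarith [hkc1, htk, hk]
  have hck : c + k ≤ t + 3 := by
    rcases le_or_gt (c + k) (t + 3) with h | h
    · exact h
    · exfalso
      have h5 : k * (t + 4) ≤ k * (c + k) := Nat.mul_le_mul_left k (by omega)
      nlinarith [hkc2, htk, hk, h5]
  have hct : c ≤ t := by omega
  -- abbreviations
  set A := (Finset.Icc 1 (t+1)).powersetCard k with hAdef
  set B := ((Finset.Icc 1 (t + 2 - c)).powersetCard (k-1)).image
    (fun E => insert (t + 2) E) with hBdef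
  have hIccCard1 : (Finset.Icc 1 (t+1)).card = t + 1 := by rw [Nat.card_Icc]; omega
  have hIccCard2 : (Finset.Icc 1 (t + 2 - c)).card = t + 2 - c := by
    rw [Nat.card_Icc]; omega
  have hnotmem2 : ∀ x ∈ Finset.Icc 1 (t + 2 - c), x ≠ t + 2 := by
    intro x hx
    rw [Finset.mem_Icc] at hx; omega
  have hEnot : ∀ E ∈ (Finset.Icc 1 (t + 2 - c)).powersetCard (k-1), t + 2 ∉ E := by
    intro E hE h
    rw [Finset.mem_powersetCard] at hE
    exact hnotmem2 _ (hE.1 h) rfl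
  have hEnot' : ∀ E ∈ (Finset.Icc 1 (t + 2 - c)).powersetCard (k-2), t + 2 ∉ E := by
    intro E hE h
    rw [Finset.mem_powersetCard] at hE
    exact hnotmem2 _ (hE.1 h) rfl
  have hAn : ∀ s ∈ A, t + 2 ∉ s := by
    intro s hs h
    rw [hAdef, Finset.mem_powersetCard] at hs
    have := hs.1 h
    rw [Finset.mem_Icc] at this; omega
  have hBn : ∀ s ∈ B, t + 2 ∈ s := by
    intro s hs
    rw [hBdef, Finset.mem_image] at hs
    obtain ⟨E, _, rfl⟩ := hs
    exact Finset.mem_insert_self _ _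
  have hdisj : Disjoint A B := by
    rw [Finset.disjoint_left]
    intro s hsA hsB
    exact hAn s hsA (hBn s hsB)
  have hcardA : A.card = (t+1).choose k := by
    rw [hAdef, Finset.card_powersetCard, hIccCard1]
  have hcardB : B.card = (t + 2 - c).choose (k-1) := by
    rw [hBdef, aux_card_image_insert _ _ hEnot, Finset.card_powersetCard, hIccCard2]
  have hcardH : H.card = (t+1).choose k + (t + 2 - c).choose (k-1) := by
    rw [hH, Finset.card_union_of_disjoint hdisj, hcardA, hcardB]
  -- degrees
  have hdeg : ∀ v : ℕ, (H.filter (fun E => v ∈ E)).card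
      = (A.filter (fun E => v ∈ E)).card + (B.filter (fun E => v ∈ E)).card := by
    intro v
    rw [hH, Finset.filter_union, Finset.card_union_of_disjoint
      (Finset.disjoint_filter_filter hdisj)]
  have hdegA : ∀ v ∈ Finset.Icc 1 (t+1),
      (A.filter (fun E => v ∈ E)).card = t.choose (k-1) := by
    intro v hv
    rw [hAdef, aux_filter_powersetCard_card _ _ _ (by omega) hv, hIccCard1,
      Nat.add_sub_cancel]
  have hdegA' : ∀ v, v ∉ Finset.Icc 1 (t+1) → A.filter (fun E => v ∈ E) = ∅ := by
    intro v hv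
    rw [Finset.filter_eq_empty_iff]
    intro s hs hvs
    rw [hAdef, Finset.mem_powersetCard] at hs
    exact hv (hs.1 hvs)
  have hBfilter : ∀ v, v ≠ t + 2 → (B.filter (fun E => v ∈ E)).card
      = (((Finset.Icc 1 (t + 2 - c)).powersetCard (k-1)).filter
          (fun E => v ∈ E)).card := by
    intro v hv
    rw [hBdef, Finset.filter_image,
      aux_card_image_insert _ _ (fun s hs => hEnot s (Finset.mem_of_mem_filter s hs))]
    congr 1
    apply Finset.filter_congr
    intro E _
    simp [Finset.mem_insert, hv]
  have hdegB : ∀ v ∈ Finset.Icc 1 (t + 2 - c), v ≠ t + 2 →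
      (B.filter (fun E => v ∈ E)).card = (t + 1 - c).choose (k-2) := by
    intro v hv hv2
    rw [hBfilter v hv2, aux_filter_powersetCard_card _ _ _ (by omega) hv, hIccCard2]
    have : t + 2 - c - 1 = t + 1 - c := by omega
    rw [this]
    congr 1
  have hdegB' : ∀ v, v ≠ t + 2 → v ∉ Finset.Icc 1 (t + 2 - c) →
      (B.filter (fun E => v ∈ E)).card = 0 := by
    intro v hv2 hv
    rw [hBfilter v hv2, Finset.card_eq_zero, Finset.filter_eq_empty_iff]
    intro E hE hvE
    rw [Finset.mem_powersetCard] at hE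
    exact hv (hE.1 hvE)
  -- Pascal for (t+2-c).choose (k-1)
  have hPascal : (t + 2 - c).choose (k-1)
      = (t + 1 - c).choose (k-2) + (t + 1 - c).choose (k-1) := by
    have h1 : t + 2 - c = (t + 1 - c) + 1 := by omega
    have h2 : k - 1 = (k - 2) + 1 := by omega
    rw [h1, h2, Nat.choose_succ_succ]
  have hmono : (t + 1 - c).choose (k-1) ≤ t.choose (k-1) :=
    Nat.choose_le_choose _ (by omega)
  have hcardS : (Finset.shadow H).card =
      (t+1).choose (k-1) + (t + 2 - c).choose (k-2) := by
    have hshadow : Finset.shadow H = (Finset.Icc 1 (t+1)).powersetCard (k-1) ∪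
        ((Finset.Icc 1 (t + 2 - c)).powersetCard (k-2)).image
          (fun E => insert (t + 2) E) := by
      ext s
      rw [Finset.mem_union]
      constructor
      · rw [Finset.mem_shadow_iff]
        rintro ⟨e, he, a, ha, rfl⟩
        rw [hH, Finset.mem_union] at he
        rcases he with he | he
        · left
          rw [Finset.mem_powersetCard] at he ⊢
          exact ⟨(Finset.erase_subset _ _).trans he.1,
            by rw [Finset.card_erase_of_mem ha, he.2]⟩
        · rw [Finset.mem_image] at he
          obtain ⟨E, hE, rfl⟩ := he
          have hEt : t + 2 ∉ E := hEnot E hE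
          rw [Finset.mem_powersetCard] at hE
          by_cases hat : a = t + 2
          · subst hat
            left
            rw [Finset.erase_insert hEt, Finset.mem_powersetCard]
            refine ⟨hE.1.trans ?_, hE.2⟩
            apply Finset.Icc_subset_Icc le_rfl
            omega
          · right
            rw [Finset.mem_image]
            have haE : a ∈ E := by
              rcases Finset.mem_insert.mp ha with h | h
              · exact absurd h hat
              · exact h
            refine ⟨E.erase a, ?_, ?_⟩
            · rw [Finset.mem_powersetCard]
              exact ⟨(Finset.erase_subset _ _).trans hE.1,
                by rw [Finset.card_erase_of_mem haE, hE.2]; omega⟩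
            · rw [Finset.erase_insert_of_ne (Ne.symm hat)]
      · intro hs
        rw [Finset.mem_shadow_iff_insert_mem]
        rcases hs with hs | hs
        · rw [Finset.mem_powersetCard] at hs
          obtain ⟨a, haI, has⟩ := aux_exists_notMem _ _ hs.1 (by
            rw [hIccCard1, hs.2]; omega)
          refine ⟨a, has, ?_⟩
          rw [hH, Finset.mem_union]
          left
          rw [Finset.mem_powersetCard]
          refine ⟨Finset.insert_subset haI hs.1, ?_⟩
          rw [Finset.card_insert_of_notMem has, hs.2]
          omega
        · rw [Finset.mem_image] at hs
          obtain ⟨E, hE, rfl⟩ := hs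
          have hEt : t + 2 ∉ E := hEnot' E hE
          rw [Finset.mem_powersetCard] at hE
          obtain ⟨a, haI, haE⟩ := aux_exists_notMem _ _ hE.1 (by
            rw [hIccCard2, hE.2]; omega)
          have hat : a ≠ t + 2 := hnotmem2 a haI
          refine ⟨a, ?_, ?_⟩
          · rw [Finset.mem_insert]
            push_neg
            exact ⟨hat, haE⟩
          · rw [hH, Finset.mem_union]
            right
            rw [Finset.mem_image]
            refine ⟨insert a E, ?_, ?_⟩
            · rw [Finset.mem_powersetCard]
              refine ⟨Finset.insert_subset haI hE.1, ?_⟩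
              rw [Finset.card_insert_of_notMem haE, hE.2]
              omega
            · rw [Finset.insert_comm]
    have hdisj2 : Disjoint ((Finset.Icc 1 (t+1)).powersetCard (k-1))
        (((Finset.Icc 1 (t + 2 - c)).powersetCard (k-2)).image
          (fun E => insert (t + 2) E)) := by
      rw [Finset.disjoint_left]
      intro s hs1 hs2
      rw [Finset.mem_powersetCard] at hs1
      rw [Finset.mem_image] at hs2
      obtain ⟨E, _, rfl⟩ := hs2
      have := hs1.1 (Finset.mem_insert_self (t+2) E)
      rw [Finset.mem_Icc] at this
      omega
    rw [hshadow, Finset.card_union_of_disjoint hdisj2, Finset.card_powersetCard,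
      aux_card_image_insert _ _ hEnot', Finset.card_powersetCard, hIccCard1, hIccCard2]
  refine ⟨⟨?_, ?_⟩, hcardH, hcardS, ?_⟩
  · -- (i) upper bound
    intro v
    rw [hdeg v]
    by_cases hv : v = t + 2
    · subst hv
      have hAempty : A.filter (fun E => t + 2 ∈ E) = ∅ := by
        rw [Finset.filter_eq_empty_iff]; exact hAn
      have hBfull : B.filter (fun E => t + 2 ∈ E) = B := by
        rw [Finset.filter_eq_self]; exact hBn
      rw [hAempty, hBfull, hcardB]
      simp only [Finset.card_empty, zero_add]
      omega
    · have hBb : (B.filter (fun E => v ∈ E)).card ≤ (t + 1 - c).choose (k-2) := by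
        by_cases hv2 : v ∈ Finset.Icc 1 (t + 2 - c)
        · rw [hdegB v hv2 hv]
        · rw [hdegB' v hv hv2]; omega
      have hAb : (A.filter (fun E => v ∈ E)).card ≤ t.choose (k-1) := by
        by_cases hv1 : v ∈ Finset.Icc 1 (t+1)
        · rw [hdegA v hv1]
        · rw [hdegA' v hv1]; simp
      omega
  · -- (i) existence: v = 1
    refine ⟨1, ?_⟩
    rw [hdeg 1, hdegA 1 (by rw [Finset.mem_Icc]; omega),
      hdegB 1 (by rw [Finset.mem_Icc]; omega) (by omega)]
  · -- (iv)
    have hkey1 : k * ((t+1).choose k) = (t - k + 2) * ((t+1).choose (k-1)) := by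
      have h := Nat.choose_succ_right_eq (t+1) (k-1)
      have hk1 : k - 1 + 1 = k := by omega
      have h2 : t + 1 - (k - 1) = t - k + 2 := by omega
      rw [hk1, h2] at h
      linarith [h]
    have hkey2 : ((t + 2 - c).choose (k-1)) * (k-1)
        = ((t + 2 - c).choose (k-2)) * (t + 4 - c - k) := by
      have h := Nat.choose_succ_right_eq (t + 2 - c) (k-2)
      have hk1 : k - 2 + 1 = k - 1 := by omega
      have h2 : t + 2 - c - (k - 2) = t + 4 - c - k := by omega
      rw [hk1, h2] at h
      exact h
    have hY : 0 < (t + 2 - c).choose (k-2) := Nat.choose_pos (by omega)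
    have hstep : (t - k + 2) * (k - 1) < k * (t + 4 - c - k) :=
      aux_step t k c hk htk hc2 hck hkc2
    have h3 : (t - k + 2) * ((t + 2 - c).choose (k-2)) * (k-1)
        < k * ((t + 2 - c).choose (k-1)) * (k-1) := by
      calc (t - k + 2) * ((t + 2 - c).choose (k-2)) * (k-1)
          = ((t - k + 2) * (k-1)) * ((t + 2 - c).choose (k-2)) := by ring
        _ < (k * (t + 4 - c - k)) * ((t + 2 - c).choose (k-2)) :=
            (Nat.mul_lt_mul_right hY).mpr hstep
        _ = k * (((t + 2 - c).choose (k-2)) * (t + 4 - c - k)) := by ring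
        _ = k * (((t + 2 - c).choose (k-1)) * (k-1)) := by rw [hkey2]
        _ = k * ((t + 2 - c).choose (k-1)) * (k-1) := by ring
    have hred : (t - k + 2) * ((t + 2 - c).choose (k-2))
        < k * ((t + 2 - c).choose (k-1)) :=
      lt_of_mul_lt_mul_right h3 (Nat.zero_le _)
    rw [hcardS, hcardH, mul_add, mul_add, hkey1]
    exact Nat.add_lt_add_left hred _
end
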